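/- arXiv:math/0003050 — 7 statements merged into one kernel-verified Lean document; each statement's English description precedes it below -/
import Mathlib

section
/- Let M be a finite-dimensional associative unital algebra over ℂ with a nondegenerate symmetric cyclic bilinear form B, let (α_i) be a basis of M and (α^i) the dual basis with B(α_i, α^k) = δ_i^k, and let σ_M = Σ_i α_i ⊗ α^i be the permutation element. Then σ_M satisfies the Yang–Baxter equation: (σ_M)₁₂ * (σ_M)₁₃ * (σ_M)₂₃ = (σ_M)₂₃ * (σ_M)₁₃ * (σ_M)₁₂ in M ⊗ M ⊗ M. -/
/-!
With respect to `B`, left multiplication by `a` is adjoint to right multiplication by `a`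
(cyclicity), and right to left (cyclicity and symmetry). Since `(αⁱ)` is dual to `(αᵢ)`, this lets
`a` move across `σ = ∑ αᵢ ⊗ αⁱ` from one tensor factor to the other, so `σ (x ⊗ y) = (y ⊗ x) σ`.
Hence `σ₁₂ X = P₁₂(X) σ₁₂` for every `X ∈ M ⊗ M ⊗ M`, where `P₁₂` swaps the first two factors,
and as `P₁₂` exchanges `σ₁₃` and `σ₂₃`, `σ₁₂ σ₁₃ σ₂₃ = P₁₂(σ₁₃ σ₂₃) σ₁₂ = σ₂₃ σ₁₃ σ₁₂`.
-/

open scoped TensorProduct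

noncomputable section

variable (M : Type) [Ring M] [Algebra ℂ M]

/-- Embedding of `M ⊗ M` into the first two factors of `M ⊗ M ⊗ M`. -/
noncomputable def emb12 : (M ⊗[ℂ] M) →ₐ[ℂ] (M ⊗[ℂ] M) ⊗[ℂ] M :=
  Algebra.TensorProduct.includeLeft

/-- Embedding of `M ⊗ M` into the first and third factors of `M ⊗ M ⊗ M`. -/
noncomputable def emb13 : (M ⊗[ℂ] M) →ₐ[ℂ] (M ⊗[ℂ] M) ⊗[ℂ] M :=
  Algebra.TensorProduct.map Algebra.TensorProduct.includeLeft (AlgHom.id ℂ M)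

/-- Embedding of `M ⊗ M` into the last two factors of `M ⊗ M ⊗ M`. -/
noncomputable def emb23 : (M ⊗[ℂ] M) →ₐ[ℂ] (M ⊗[ℂ] M) ⊗[ℂ] M :=
  Algebra.TensorProduct.map Algebra.TensorProduct.includeRight (AlgHom.id ℂ M)

/-- The Yang–Baxter equation for `R ∈ M ⊗ M`. -/
def YBE (R : M ⊗[ℂ] M) : Prop :=
  emb12 M R * emb13 M R * emb23 M R = emb23 M R * emb13 M R * emb12 M R

section DualPair

variable {R V ι : Type*} [Fintype ι] [DecidableEq ι]

theorem sum_apply_dual_smul_eq [CommSemiring R] [AddCommMonoid V] [Module R V]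
    (B : V →ₗ[R] V →ₗ[R] R) (b : Module.Basis ι R V) {d : ι → V}
    (hbd : ∀ i k, B (b i) (d k) = if i = k then 1 else 0) (x : V) :
    ∑ k, B x (d k) • b k = x := by
  have hcoord (k : ι) : B x (d k) = b.coord k x :=
    LinearMap.congr_fun (b.ext (f₁ := B.flip (d k)) fun i => by simp [hbd, Finsupp.single_apply]) x
  simp_rw [hcoord, b.coord_apply, b.sum_repr]

theorem linearIndependent_of_dual [CommRing R] [AddCommGroup V] [Module R V]
    (B : V →ₗ[R] V →ₗ[R] R) {b d : ι → V}
    (hbd : ∀ i k, B (b i) (d k) = if i = k then 1 else 0) :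
    LinearIndependent R d := by
  refine Fintype.linearIndependent_iff.mpr fun c hc i => ?_
  simpa [hbd] using congr_arg (B (b i)) hc

theorem sum_apply_smul_dual_eq [Field R] [AddCommGroup V] [Module R V]
    (B : V →ₗ[R] V →ₗ[R] R) (b : Module.Basis ι R V) {d : ι → V}
    (hbd : ∀ i k, B (b i) (d k) = if i = k then 1 else 0) (x : V) :
    ∑ i, B (b i) x • d i = x := by
  have : FiniteDimensional R V := .of_basis b
  have hspan := (linearIndependent_of_dual B hbd).span_eq_top_of_card_eq_finrank'
    (Module.finrank_eq_card_basis b).symm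
  have hx : x ∈ Submodule.span R (Set.range d) := hspan ▸ Submodule.mem_top
  obtain ⟨c, rfl⟩ := (Submodule.mem_span_range_iff_exists_fun R).mp hx
  congr! with i
  simp [hbd]

theorem sum_tmul_eq_sum_tmul_of_adjoint [Field R] [AddCommGroup V] [Module R V]
    (B : V →ₗ[R] V →ₗ[R] R) (b : Module.Basis ι R V) {d : ι → V}
    (hbd : ∀ i k, B (b i) (d k) = if i = k then 1 else 0) {f g : V →ₗ[R] V}
    (hfg : ∀ x y, B (f x) y = B x (g y)) :
    ∑ i, f (b i) ⊗ₜ[R] d i = ∑ i, b i ⊗ₜ[R] g (d i) := by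
  calc ∑ i, f (b i) ⊗ₜ[R] d i
      = ∑ i, (∑ k, B (f (b i)) (d k) • b k) ⊗ₜ[R] d i := by
        simp_rw [sum_apply_dual_smul_eq B b hbd]
    _ = ∑ k, b k ⊗ₜ[R] ∑ i, B (b i) (g (d k)) • d i := by
        simp_rw [hfg, TensorProduct.sum_tmul, TensorProduct.tmul_sum, ← TensorProduct.smul_tmul',
          TensorProduct.tmul_smul]
        exact Finset.sum_comm
    _ = ∑ k, b k ⊗ₜ[R] g (d k) := by
        simp_rw [sum_apply_smul_dual_eq B b hbd]

end DualPair

section DualBasisTensor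

variable {K A ι : Type*} [Field K] [Ring A] [Algebra K A] [Fintype ι] [DecidableEq ι]
  (B : A →ₗ[K] A →ₗ[K] K) (b : Module.Basis ι K A) {d : ι → A}

theorem sum_mul_tmul_dual_eq (hcyc : ∀ x y z : A, B (x * y) z = B y (z * x))
    (hbd : ∀ i k, B (b i) (d k) = if i = k then 1 else 0) (a : A) :
    ∑ i, (a * b i) ⊗ₜ[K] d i = ∑ i, b i ⊗ₜ[K] (d i * a) :=
  sum_tmul_eq_sum_tmul_of_adjoint B b hbd (f := LinearMap.mulLeft K a)
    (g := LinearMap.mulRight K a) (hcyc a)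

theorem sum_tmul_mul_dual_eq (hsymm : ∀ x y : A, B x y = B y x)
    (hcyc : ∀ x y z : A, B (x * y) z = B y (z * x))
    (hbd : ∀ i k, B (b i) (d k) = if i = k then 1 else 0) (a : A) :
    ∑ i, (b i * a) ⊗ₜ[K] d i = ∑ i, b i ⊗ₜ[K] (a * d i) :=
  sum_tmul_eq_sum_tmul_of_adjoint B b hbd (f := LinearMap.mulRight K a)
    (g := LinearMap.mulLeft K a) fun x y => by
      simp only [LinearMap.mulRight_apply, LinearMap.mulLeft_apply]
      rw [hsymm, ← hcyc, hsymm]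

theorem sum_tmul_dual_mul_tmul (hsymm : ∀ x y : A, B x y = B y x)
    (hcyc : ∀ x y z : A, B (x * y) z = B y (z * x))
    (hbd : ∀ i k, B (b i) (d k) = if i = k then 1 else 0) (x y : A) :
    (∑ i, b i ⊗ₜ[K] d i) * (x ⊗ₜ y) = (y ⊗ₜ x) * ∑ i, b i ⊗ₜ[K] d i := by
  set σ := ∑ i, b i ⊗ₜ[K] d i
  have hx : σ * (x ⊗ₜ 1) = (1 ⊗ₜ x) * σ := by
    simpa only [σ, Finset.sum_mul, Finset.mul_sum, Algebra.TensorProduct.tmul_mul_tmul, mul_one,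
      one_mul] using sum_tmul_mul_dual_eq B b hsymm hcyc hbd x
  have hy : σ * (1 ⊗ₜ y) = (y ⊗ₜ 1) * σ := by
    simpa only [σ, Finset.sum_mul, Finset.mul_sum, Algebra.TensorProduct.tmul_mul_tmul, mul_one,
      one_mul] using (sum_mul_tmul_dual_eq B b hcyc hbd y).symm
  calc σ * (x ⊗ₜ y) = σ * (x ⊗ₜ 1) * (1 ⊗ₜ y) := by
        rw [mul_assoc, Algebra.TensorProduct.tmul_mul_tmul, mul_one, one_mul]
    _ = (1 ⊗ₜ x) * (σ * (1 ⊗ₜ y)) := by rw [hx, mul_assoc]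
    _ = (y ⊗ₜ x) * σ := by
        rw [hy, ← mul_assoc, Algebra.TensorProduct.tmul_mul_tmul, mul_one, one_mul]

theorem sum_tmul_dual_mul (hsymm : ∀ x y : A, B x y = B y x)
    (hcyc : ∀ x y z : A, B (x * y) z = B y (z * x))
    (hbd : ∀ i k, B (b i) (d k) = if i = k then 1 else 0) (u : A ⊗[K] A) :
    (∑ i, b i ⊗ₜ[K] d i) * u = Algebra.TensorProduct.comm K A A u * ∑ i, b i ⊗ₜ[K] d i := by
  induction u using TensorProduct.induction_on with
  | zero => simp
  | tmul x y => exact sum_tmul_dual_mul_tmul B b hsymm hcyc hbd x y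
  | add u v hu hv => rw [mul_add, map_add, add_mul, hu, hv]

end DualBasisTensor

theorem Algebra.TensorProduct.tmul_one_mul_eq_map_mul {R A C : Type*} [CommSemiring R]
    [Semiring A] [Algebra R A] [Semiring C] [Algebra R C] {s : A} {φ : A →ₐ[R] A}
    (h : ∀ u, s * u = φ u * s) (x : A ⊗[R] C) :
    (s ⊗ₜ[R] (1 : C)) * x = map φ (AlgHom.id R C) x * (s ⊗ₜ 1) := by
  induction x using TensorProduct.induction_on with
  | zero => simp
  | tmul u c => simp [h u]
  | add x y hx hy => rw [mul_add, map_add, add_mul, hx, hy]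

def swap12 : (M ⊗[ℂ] M) ⊗[ℂ] M →ₐ[ℂ] (M ⊗[ℂ] M) ⊗[ℂ] M :=
  Algebra.TensorProduct.map (Algebra.TensorProduct.comm ℂ M M).toAlgHom (AlgHom.id ℂ M)

theorem swap12_emb13 (u : M ⊗[ℂ] M) : swap12 M (emb13 M u) = emb23 M u := by
  change ((swap12 M).comp (emb13 M)) u = _
  congr 1
  ext <;> simp [swap12, emb13, emb23, Algebra.TensorProduct.one_def]

theorem swap12_emb23 (u : M ⊗[ℂ] M) : swap12 M (emb23 M u) = emb13 M u := by
  change ((swap12 M).comp (emb23 M)) u = _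
  congr 1
  ext <;> simp [swap12, emb13, emb23, Algebra.TensorProduct.one_def]

theorem ybe_of_mul_eq_comm_mul {R : M ⊗[ℂ] M}
    (h : ∀ u, R * u = Algebra.TensorProduct.comm ℂ M M u * R) : YBE M R := by
  have h12 (x) : emb12 M R * x = swap12 M x * emb12 M R :=
    Algebra.TensorProduct.tmul_one_mul_eq_map_mul h x
  rw [YBE, mul_assoc, h12, map_mul, swap12_emb13, swap12_emb23, mul_assoc]

theorem stmt0
    (B : M →ₗ[ℂ] M →ₗ[ℂ] ℂ)
    (hsymm : ∀ a b : M, B a b = B b a)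
    (hcyc : ∀ a b c : M, B (a * b) c = B b (c * a))
    (ι : Type) [Fintype ι] [DecidableEq ι] (bas : Module.Basis ι ℂ M) (dbas : ι → M)
    (hdual : ∀ i k : ι, B (bas i) (dbas k) = if i = k then 1 else 0) :
    YBE M (∑ i, bas i ⊗ₜ[ℂ] dbas i) :=
  ybe_of_mul_eq_comm_mul M (sum_tmul_dual_mul B bas hsymm hcyc hdual)
end
end

section
/- Let M be a finite-dimensional associative unital algebra over ℂ with a nondegenerate symmetric cyclic bilinear form B. Let N₊ and N₋ be linear subspaces of M such that B restricts to a nondegenerate pairing between N₊ and N₋; choose a basis (α_i) of N₊ and the basis (β^i) of N₋ dual to it (B(α_i, β^k) = δ_i^k), and define the projectors π₊(μ) = Σ_i α_i B(μ, β^i) and π₋(μ) = Σ_i B(α_i, μ) β^i. Set M₊ = {μ ∈ M : π₊(a*μ)*b = a*π₊(μ*b) for all a, b ∈ N₊} and M₋ = {μ ∈ M : π₋(a*μ)*b = a*π₋(μ*b) for all a, b ∈ N₋}. If M = M₊ + M₋ as a linear space, then the canonical element Q = Σ_i α_i ⊗ β^i satisfies the Yang–Baxter equation Q₁₂ * Q₁₃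 * Q₂₃ = Q₂₃ * Q₁₃ * Q₁₂ in M ⊗ M ⊗ M. -/
/-!
By nondegeneracy of `B`, an element of `M ⊗ M ⊗ M` is determined by its contractions with
`B(μ, ·)` in the middle factor, and these are additive in `μ`; so for `Q = ∑ αᵢ ⊗ βⁱ` it suffices
to compare the contractions of `Q₁₂Q₁₃Q₂₃` and `Q₂₃Q₁₃Q₁₂` for `μ ∈ M₊` and for `μ ∈ M₋`.
Each contraction is a triple sum with coefficients `B(μ, ·)`; by symmetry and cyclicity of `B`,
summing out one index produces `π₊`, summing out another produces `π₋`. For `μ ∈ M₊` the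
defining relation of `M₊` turns the `π₊` form of one side into that of the other up to swapping
the two remaining indices, and likewise for `μ ∈ M₋` with the `π₋` forms.
-/

open scoped TensorProduct

noncomputable section

variable (M : Type) [Ring M] [Algebra ℂ M]

section Contraction

variable {R U W V : Type*} [CommRing R] [AddCommGroup U] [Module R U] [AddCommGroup W]
  [Module R W] [AddCommGroup V] [Module R V]

def contractMiddle (f : Module.Dual R W) : (U ⊗[R] W) ⊗[R] V →ₗ[R] U ⊗[R] V :=
  (TensorProduct.lid R (U ⊗[R] V)).toLinearMap ∘ₗ f.rTensor _ ∘ₗ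
    ((TensorProduct.assoc R U W V).trans (TensorProduct.leftComm R U W V)).toLinearMap

@[simp]
theorem contractMiddle_tmul (f : Module.Dual R W) (u : U) (w : W) (v : V) :
    contractMiddle f ((u ⊗ₜ w) ⊗ₜ v) = f w • (u ⊗ₜ v) := by
  simp [contractMiddle]

theorem contractMiddle_add (f g : Module.Dual R W) (x : (U ⊗[R] W) ⊗[R] V) :
    contractMiddle (f + g) x = contractMiddle f x + contractMiddle g x := by
  simp [contractMiddle, LinearMap.rTensor_add]

theorem eq_of_forall_contractMiddle_eq [Module.Free R W] {x y : (U ⊗[R] W) ⊗[R] V}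
    (h : ∀ f : Module.Dual R W, contractMiddle f x = contractMiddle f y) : x = y := by
  let b := Module.Free.chooseBasis R W
  apply ((TensorProduct.assoc R U W V).trans (TensorProduct.leftComm R U W V)).injective
  apply (TensorProduct.equivFinsuppOfBasisLeft b).injective
  ext i
  simpa [TensorProduct.equivFinsuppOfBasisLeft_apply, contractMiddle] using h (b.coord i)

end Contraction

theorem LinearMap.SeparatingLeft.surjective {K W : Type*} [Field K] [AddCommGroup W]
    [Module K W] [FiniteDimensional K W] {B : W →ₗ[K] W →ₗ[K] K} (hB : B.SeparatingLeft) :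
    Function.Surjective B :=
  (LinearMap.injective_iff_surjective_of_finrank_eq_finrank Subspace.dual_finrank_eq.symm).mp
    (LinearMap.ker_eq_bot.mp (LinearMap.separatingLeft_iff_ker_eq_bot.mp hB))

theorem eq_of_forall_contractMiddle_form_eq {K U W V : Type*} [Field K] [AddCommGroup U]
    [Module K U] [AddCommGroup W] [Module K W] [FiniteDimensional K W] [AddCommGroup V]
    [Module K V] {B : W →ₗ[K] W →ₗ[K] K} (hB : B.SeparatingLeft)
    {x y : (U ⊗[K] W) ⊗[K] V} (h : ∀ μ, contractMiddle (B μ) x = contractMiddle (B μ) y) :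
    x = y :=
  eq_of_forall_contractMiddle_eq fun f => by
    obtain ⟨μ, rfl⟩ := hB.surjective f
    exact h μ

section Projectors

variable {R A ι : Type*} [CommRing R] [Ring A] [Algebra R A] (B : A →ₗ[R] A →ₗ[R] R)
  [Fintype ι] (α β : ι → A)

def projPlus : A →ₗ[R] A :=
  ∑ i, (B.flip (β i)).smulRight (α i)

def projMinus : A →ₗ[R] A :=
  ∑ i, (B (α i)).smulRight (β i)

theorem projPlus_apply (μ : A) : projPlus B α β μ = ∑ i, B μ (β i) • α i := by
  simp [projPlus]

theorem projMinus_apply (μ : A) : projMinus B α β μ = ∑ i, B (α i) μ • β i := by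
  simp [projMinus]

end Projectors

theorem form_mul_assoc_of_symm_of_cyclic {R A : Type*} [CommRing R] [Ring A] [Algebra R A]
    {B : A →ₗ[R] A →ₗ[R] R} (hsymm : ∀ a b, B a b = B b a)
    (hcyc : ∀ a b c, B (a * b) c = B b (c * a)) (a b c : A) :
    B (a * b) c = B a (b * c) := by
  rw [hcyc, hsymm, hcyc]

section YangBaxter

variable {M} {ι : Type*} [Fintype ι] (B : M →ₗ[ℂ] M →ₗ[ℂ] ℂ) (α β : ι → M)

def ybeLHS (Q : M ⊗[ℂ] M) : (M ⊗[ℂ] M) ⊗[ℂ] M := emb12 M Q * emb13 M Q * emb23 M Q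

def ybeRHS (Q : M ⊗[ℂ] M) : (M ⊗[ℂ] M) ⊗[ℂ] M := emb23 M Q * emb13 M Q * emb12 M Q

theorem ybeLHS_sum_tmul : ybeLHS (∑ i, α i ⊗ₜ[ℂ] β i) =
    ∑ k, ∑ j, ∑ i, ((α i * α j) ⊗ₜ[ℂ] (β i * α k)) ⊗ₜ[ℂ] (β j * β k) := by
  simp only [ybeLHS, emb12, emb13, emb23, map_sum, Algebra.TensorProduct.map_tmul,
    Algebra.TensorProduct.includeLeft_apply, Algebra.TensorProduct.includeRight_apply,
    AlgHom.coe_id, id_eq, Finset.sum_mul, Finset.mul_sum,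
    Algebra.TensorProduct.tmul_mul_tmul, one_mul, mul_one]

theorem ybeRHS_sum_tmul : ybeRHS (∑ i, α i ⊗ₜ[ℂ] β i) =
    ∑ k, ∑ j, ∑ i, ((α j * α k) ⊗ₜ[ℂ] (α i * β k)) ⊗ₜ[ℂ] (β i * β j) := by
  simp only [ybeRHS, emb12, emb13, emb23, map_sum, Algebra.TensorProduct.map_tmul,
    Algebra.TensorProduct.includeLeft_apply, Algebra.TensorProduct.includeRight_apply,
    AlgHom.coe_id, id_eq, Finset.sum_mul, Finset.mul_sum,
    Algebra.TensorProduct.tmul_mul_tmul, one_mul, mul_one]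

theorem contractMiddle_ybeLHS_eq_sum_projPlus (hcyc : ∀ a b c, B (a * b) c = B b (c * a))
    (μ : M) : contractMiddle (B μ) (ybeLHS (∑ i, α i ⊗ₜ[ℂ] β i)) =
      ∑ k, ∑ j, (projPlus B α β (α k * μ) * α j) ⊗ₜ[ℂ] (β j * β k) := by
  simp only [ybeLHS_sum_tmul, map_sum, contractMiddle_tmul, projPlus_apply, hcyc,
    Finset.sum_mul, smul_mul_assoc, TensorProduct.sum_tmul, TensorProduct.smul_tmul']

theorem contractMiddle_ybeLHS_eq_sum_projMinus (hsymm : ∀ a b, B a b = B b a)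
    (hcyc : ∀ a b c, B (a * b) c = B b (c * a)) (μ : M) :
    contractMiddle (B μ) (ybeLHS (∑ i, α i ⊗ₜ[ℂ] β i)) =
      ∑ i, ∑ j, (α i * α j) ⊗ₜ[ℂ] (β j * projMinus B α β (μ * β i)) := by
  simp only [ybeLHS_sum_tmul, map_sum, contractMiddle_tmul, hsymm μ, hcyc, projMinus_apply,
    Finset.mul_sum, mul_smul_comm, TensorProduct.tmul_sum, TensorProduct.tmul_smul]
  rw [Finset.sum_comm_cycle]
  exact Finset.sum_congr rfl fun i _ => Finset.sum_comm

theorem contractMiddle_ybeRHS_eq_sum_projPlus (hsymm : ∀ a b, B a b = B b a)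
    (hcyc : ∀ a b c, B (a * b) c = B b (c * a)) (μ : M) :
    contractMiddle (B μ) (ybeRHS (∑ i, α i ⊗ₜ[ℂ] β i)) =
      ∑ i, ∑ j, (α j * projPlus B α β (μ * α i)) ⊗ₜ[ℂ] (β i * β j) := by
  simp only [ybeRHS_sum_tmul, map_sum, contractMiddle_tmul, projPlus_apply,
    form_mul_assoc_of_symm_of_cyclic hsymm hcyc,
    Finset.mul_sum, mul_smul_comm, TensorProduct.sum_tmul, TensorProduct.smul_tmul']
  rw [Finset.sum_comm_cycle]
  exact Finset.sum_congr rfl fun i _ => Finset.sum_comm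

theorem contractMiddle_ybeRHS_eq_sum_projMinus (hsymm : ∀ a b, B a b = B b a)
    (hcyc : ∀ a b c, B (a * b) c = B b (c * a)) (μ : M) :
    contractMiddle (B μ) (ybeRHS (∑ i, α i ⊗ₜ[ℂ] β i)) =
      ∑ k, ∑ j, (α j * α k) ⊗ₜ[ℂ] (projMinus B α β (β k * μ) * β j) := by
  simp only [ybeRHS_sum_tmul, map_sum, contractMiddle_tmul, projMinus_apply, hsymm μ,
    form_mul_assoc_of_symm_of_cyclic hsymm hcyc,
    Finset.sum_mul, smul_mul_assoc, TensorProduct.tmul_sum, TensorProduct.tmul_smul]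

theorem contractMiddle_ybeLHS_eq_ybeRHS_of_projPlus (hsymm : ∀ a b, B a b = B b a)
    (hcyc : ∀ a b c, B (a * b) c = B b (c * a)) (μ : M)
    (hμ : ∀ k j, projPlus B α β (α k * μ) * α j = α k * projPlus B α β (μ * α j)) :
    contractMiddle (B μ) (ybeLHS (∑ i, α i ⊗ₜ[ℂ] β i)) =
      contractMiddle (B μ) (ybeRHS (∑ i, α i ⊗ₜ[ℂ] β i)) := by
  rw [contractMiddle_ybeLHS_eq_sum_projPlus B α β hcyc,
    contractMiddle_ybeRHS_eq_sum_projPlus B α β hsymm hcyc]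
  simp only [hμ]
  exact Finset.sum_comm

theorem contractMiddle_ybeLHS_eq_ybeRHS_of_projMinus (hsymm : ∀ a b, B a b = B b a)
    (hcyc : ∀ a b c, B (a * b) c = B b (c * a)) (μ : M)
    (hμ : ∀ j i, projMinus B α β (β j * μ) * β i = β j * projMinus B α β (μ * β i)) :
    contractMiddle (B μ) (ybeLHS (∑ i, α i ⊗ₜ[ℂ] β i)) =
      contractMiddle (B μ) (ybeRHS (∑ i, α i ⊗ₜ[ℂ] β i)) := by
  rw [contractMiddle_ybeLHS_eq_sum_projMinus B α β hsymm hcyc,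
    contractMiddle_ybeRHS_eq_sum_projMinus B α β hsymm hcyc]
  simp only [← hμ]
  exact Finset.sum_comm

end YangBaxter

theorem stmt3
    [FiniteDimensional ℂ M]
    (B : M →ₗ[ℂ] M →ₗ[ℂ] ℂ)
    (hnd : ∀ a : M, (∀ b : M, B a b = 0) → a = 0)
    (hsymm : ∀ a b : M, B a b = B b a)
    (hcyc : ∀ a b c : M, B (a * b) c = B b (c * a))
    (Np Nm : Submodule ℂ M)
    -- a basis (α i) of N₊ and the dual basis (β i) of N₋
    (ι : Type) [Fintype ι] (α β : ι → M)
    (hmemP : ∀ i, α i ∈ Np) (hmemM : ∀ i, β i ∈ Nm)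
    -- the projectors π₊ and π₋
    (πp πm : M → M)
    (hπp : ∀ μ : M, πp μ = ∑ i, B μ (β i) • α i)
    (hπm : ∀ μ : M, πm μ = ∑ i, B (α i) μ • β i)
    -- M = M₊ + M₋ as a linear space
    (hMsum : ∀ μ : M, ∃ μp μm : M,
      (∀ a b : M, a ∈ Np → b ∈ Np → πp (a * μp) * b = a * πp (μp * b)) ∧
      (∀ a b : M, a ∈ Nm → b ∈ Nm → πm (a * μm) * b = a * πm (μm * b)) ∧
      μ = μp + μm) :
    YBE M (∑ i, α i ⊗ₜ[ℂ] β i) := by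
  obtain rfl : πp = projPlus B α β := funext fun μ => by rw [hπp, projPlus_apply]
  obtain rfl : πm = projMinus B α β := funext fun μ => by rw [hπm, projMinus_apply]
  show ybeLHS _ = ybeRHS _
  refine eq_of_forall_contractMiddle_form_eq hnd fun μ => ?_
  obtain ⟨μp, μm, hp, hm, rfl⟩ := hMsum μ
  rw [map_add, contractMiddle_add, contractMiddle_add,
    contractMiddle_ybeLHS_eq_ybeRHS_of_projPlus B α β hsymm hcyc μp
      fun k j => hp _ _ (hmemP k) (hmemP j),
    contractMiddle_ybeLHS_eq_ybeRHS_of_projMinus B α β hsymm hcyc μm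
      fun j i => hm _ _ (hmemM j) (hmemM i)]
end
end

section
/- Let M be a finite-dimensional associative unital algebra over ℂ with a nondegenerate symmetric cyclic bilinear form B, and let A and A' be subalgebras of M such that M = A ⊕ A' as a linear space, A and A' are isotropic for B (B vanishes on A × A and on A' × A'), and B restricts to a nondegenerate pairing between A and A'. Then the canonical element Q = Σ_i α_i ⊗ β^i ∈ A ⊗ A' ⊆ M ⊗ M, where (α_i) is a basis of A and (β^i) is the basis of A' dual to it (B(α_i, β^k) = δ_i^k), satisfies the Yang–Baxter equation Q₁₂ * Q₁₃ * Q₂₃ = Q₂₃ * Q₁₃ * Q₁₂ in M ⊗ M ⊗ M. -/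
open scoped TensorProduct

noncomputable section

variable (M : Type) [Ring M] [Algebra ℂ M]

/-- Proposition 2: for a decomposition `M = A ⊕ A'` into isotropic, mutually dual
(non-unital) subalgebras, the canonical element of the pairing satisfies YBE. -/
theorem stmt4
    [FiniteDimensional ℂ M]
    (B : M →ₗ[ℂ] M →ₗ[ℂ] ℂ)
    (hnd : ∀ a : M, (∀ b : M, B a b = 0) → a = 0)
    (hsymm : ∀ a b : M, B a b = B b a)
    (hcyc : ∀ a b c : M, B (a * b) c = B b (c * a))
    (A A' : NonUnitalSubalgebra ℂ M)
    -- M = A ⊕ A' as a linear space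
    (hsum : NonUnitalSubalgebra.toSubmodule A ⊔ NonUnitalSubalgebra.toSubmodule A' = ⊤)
    (hdisj : NonUnitalSubalgebra.toSubmodule A ⊓ NonUnitalSubalgebra.toSubmodule A' = ⊥)
    -- A and A' are isotropic
    (hisoA : ∀ x ∈ A, ∀ y ∈ A, B x y = 0)
    (hisoA' : ∀ x ∈ A', ∀ y ∈ A', B x y = 0)
    -- B restricts to a nondegenerate pairing between A and A'
    (hpairA : ∀ x ∈ A, (∀ y ∈ A', B x y = 0) → x = 0)
    (hpairA' : ∀ y ∈ A', (∀ x ∈ A, B x y = 0) → y = 0)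
    -- a basis (α i) of A and the dual basis (β i) of A'
    (ι : Type) [Fintype ι] [DecidableEq ι] (α β : ι → M)
    (hmemP : ∀ i, α i ∈ A) (hmemM : ∀ i, β i ∈ A')
    (hindP : LinearIndependent ℂ α) (hindM : LinearIndependent ℂ β)
    (hspanP : Submodule.span ℂ (Set.range α) = NonUnitalSubalgebra.toSubmodule A)
    (hspanM : Submodule.span ℂ (Set.range β) = NonUnitalSubalgebra.toSubmodule A')
    (hdual : ∀ i k : ι, B (α i) (β k) = if i = k then 1 else 0) :
    YBE M (∑ i, α i ⊗ₜ[ℂ] β i) := by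
  classical
  -- expansion of elements of A in the basis α
  have L1 : ∀ a ∈ A, a = ∑ k, B a (β k) • α k := by
    intro a ha
    have hx : a - ∑ k, B a (β k) • α k ∈ A := by
      have h2 : (∑ k, B a (β k) • α k) ∈ NonUnitalSubalgebra.toSubmodule A :=
        Submodule.sum_mem _ fun k _ => Submodule.smul_mem _ _ (hmemP k)
      exact sub_mem ha h2
    have hz : ∀ y ∈ A', B (a - ∑ k, B a (β k) • α k) y = 0 := by
      intro y hy
      have hy' : y ∈ Submodule.span ℂ (Set.range β) := by
        rw [hspanM]; exact hy
      have hle : Submodule.span ℂ (Set.range β) ≤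
          LinearMap.ker (B (a - ∑ k, B a (β k) • α k)) := by
        rw [Submodule.span_le]
        rintro _ ⟨j, rfl⟩
        simp only [SetLike.mem_coe, LinearMap.mem_ker, map_sub, map_sum, map_smul,
          LinearMap.sub_apply, LinearMap.sum_apply, LinearMap.smul_apply]
        simp [hdual, smul_eq_mul, mul_ite, Finset.sum_ite_eq']
      simpa using hle hy'
    exact sub_eq_zero.mp (hpairA _ hx hz)
  -- expansion of elements of A' in the basis β
  have L2 : ∀ b ∈ A', b = ∑ k, B (α k) b • β k := by
    intro b hb
    have hx : b - ∑ k, B (α k) b • β k ∈ A' := by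
      have h2 : (∑ k, B (α k) b • β k) ∈ NonUnitalSubalgebra.toSubmodule A' :=
        Submodule.sum_mem _ fun k _ => Submodule.smul_mem _ _ (hmemM k)
      exact sub_mem hb h2
    have hz : ∀ x ∈ A, B x (b - ∑ k, B (α k) b • β k) = 0 := by
      intro x hx'
      have hx'' : x ∈ Submodule.span ℂ (Set.range α) := by
        rw [hspanP]; exact hx'
      have hle : Submodule.span ℂ (Set.range α) ≤
          LinearMap.ker (B.flip (b - ∑ k, B (α k) b • β k)) := by
        rw [Submodule.span_le]
        rintro _ ⟨j, rfl⟩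
        simp only [SetLike.mem_coe, LinearMap.mem_ker, LinearMap.flip_apply, map_sub, map_sum,
          map_smul]
        simp [hdual, smul_eq_mul, mul_ite, Finset.sum_ite_eq']
      have := hle hx''
      simpa using this
    exact sub_eq_zero.mp (hpairA' _ hx hz)
  -- decomposition of an arbitrary element of M
  have L3 : ∀ m : M, m = (∑ k, B m (β k) • α k) + ∑ k, B (α k) m • β k := by
    intro m
    have hm : m ∈ NonUnitalSubalgebra.toSubmodule A ⊔ NonUnitalSubalgebra.toSubmodule A' := by
      rw [hsum]; trivial
    obtain ⟨a, ha, b, hb, rfl⟩ := Submodule.mem_sup.mp hm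
    have h1 : ∀ k, B (a + b) (β k) = B a (β k) := by
      intro k
      have : B b (β k) = 0 := hisoA' b hb (β k) (hmemM k)
      simp [this]
    have h2 : ∀ k, B (α k) (a + b) = B (α k) b := by
      intro k
      have : B (α k) a = 0 := hisoA (α k) (hmemP k) a ha
      simp [this]
    calc a + b = (∑ k, B a (β k) • α k) + ∑ k, B (α k) b • β k := by
          rw [← L1 a ha, ← L2 b hb]
      _ = (∑ k, B (a + b) (β k) • α k) + ∑ k, B (α k) (a + b) • β k := by
          simp only [h1, h2]
  -- key expansion of the mixed products
  have K1 : ∀ i k : ι, β i * α k =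
      (∑ l, B (α k) (β l * β i) • α l) + ∑ l, B (α k * α l) (β i) • β l := by
    intro i k
    have e1 : ∀ l, B (β i * α k) (β l) = B (α k) (β l * β i) := fun l => hcyc _ _ _
    have e2 : ∀ l, B (α l) (β i * α k) = B (α k * α l) (β i) := by
      intro l
      rw [hsymm, hcyc, hsymm, hcyc, hsymm]
    calc β i * α k = (∑ l, B (β i * α k) (β l) • α l) + ∑ l, B (α l) (β i * α k) • β l :=
          L3 (β i * α k)
      _ = _ := by simp only [e1, e2]
  have K2 : ∀ i k : ι, α k * β i =
      (∑ l, B (α k) (β i * β l) • α l) + ∑ l, B (α l * α k) (β i) • β l := by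
    intro i k
    have e1 : ∀ l, B (α k * β i) (β l) = B (α k) (β i * β l) := by
      intro l
      rw [hcyc, hsymm, hcyc]
    have e2 : ∀ l, B (α l) (α k * β i) = B (α l * α k) (β i) := by
      intro l
      rw [hsymm, hcyc, hsymm]
    calc α k * β i = (∑ l, B (α k * β i) (β l) • α l) + ∑ l, B (α l) (α k * β i) • β l :=
          L3 (α k * β i)
      _ = _ := by simp only [e1, e2]
  -- collapsing lemmas
  have C1 : ∀ (x : M ⊗[ℂ] M) (j l i : ι),
      (∑ k, B (α k) (β l * β i) • (x ⊗ₜ[ℂ] (β j * β k))) = x ⊗ₜ[ℂ] (β j * (β l * β i)) := by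
    intro x j l i
    have h : ∑ k, B (α k) (β l * β i) • (β j * β k) = β j * (β l * β i) := by
      have := L2 (β l * β i) (mul_mem (hmemM l) (hmemM i))
      calc ∑ k, B (α k) (β l * β i) • (β j * β k)
          = ∑ k, β j * (B (α k) (β l * β i) • β k) := by
            simp [mul_smul_comm]
        _ = β j * ∑ k, B (α k) (β l * β i) • β k := by rw [Finset.mul_sum]
        _ = β j * (β l * β i) := by rw [← this]
    calc (∑ k, B (α k) (β l * β i) • (x ⊗ₜ[ℂ] (β j * β k)))
        = ∑ k, x ⊗ₜ[ℂ] (B (α k) (β l * β i) • (β j * β k)) := by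
          simp [TensorProduct.tmul_smul]
      _ = x ⊗ₜ[ℂ] (∑ k, B (α k) (β l * β i) • (β j * β k)) := by
          rw [TensorProduct.tmul_sum]
      _ = _ := by rw [h]
  have C1' : ∀ (x : M ⊗[ℂ] M) (j l i : ι),
      (∑ k, B (α k) (β i * β l) • (x ⊗ₜ[ℂ] (β k * β j))) = x ⊗ₜ[ℂ] ((β i * β l) * β j) := by
    intro x j l i
    have h : ∑ k, B (α k) (β i * β l) • (β k * β j) = (β i * β l) * β j := by
      have := L2 (β i * β l) (mul_mem (hmemM i) (hmemM l))
      calc ∑ k, B (α k) (β i * β l) • (β k * β j)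
          = ∑ k, (B (α k) (β i * β l) • β k) * β j := by
            simp [smul_mul_assoc]
        _ = (∑ k, B (α k) (β i * β l) • β k) * β j := by rw [Finset.sum_mul]
        _ = (β i * β l) * β j := by rw [← this]
    calc (∑ k, B (α k) (β i * β l) • (x ⊗ₜ[ℂ] (β k * β j)))
        = ∑ k, x ⊗ₜ[ℂ] (B (α k) (β i * β l) • (β k * β j)) := by
          simp [TensorProduct.tmul_smul]
      _ = x ⊗ₜ[ℂ] (∑ k, B (α k) (β i * β l) • (β k * β j)) := by
          rw [TensorProduct.tmul_sum]
      _ = _ := by rw [h]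
  have C2 : ∀ (y z : M) (j k l : ι),
      (∑ i, B (α k * α l) (β i) • (((α i * α j) ⊗ₜ[ℂ] y) ⊗ₜ[ℂ] z))
        = (((α k * α l) * α j) ⊗ₜ[ℂ] y) ⊗ₜ[ℂ] z := by
    intro y z j k l
    have h : ∑ i, B (α k * α l) (β i) • (α i * α j) = (α k * α l) * α j := by
      have := L1 (α k * α l) (mul_mem (hmemP k) (hmemP l))
      calc ∑ i, B (α k * α l) (β i) • (α i * α j)
          = ∑ i, (B (α k * α l) (β i) • α i) * α j := by simp [smul_mul_assoc]
        _ = (∑ i, B (α k * α l) (β i) • α i) * α j := by rw [Finset.sum_mul]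
        _ = _ := by rw [← this]
    calc (∑ i, B (α k * α l) (β i) • (((α i * α j) ⊗ₜ[ℂ] y) ⊗ₜ[ℂ] z))
        = ∑ i, ((B (α k * α l) (β i) • (α i * α j)) ⊗ₜ[ℂ] y) ⊗ₜ[ℂ] z := by
          simp [TensorProduct.smul_tmul']
      _ = ((∑ i, B (α k * α l) (β i) • (α i * α j)) ⊗ₜ[ℂ] y) ⊗ₜ[ℂ] z := by
          rw [← TensorProduct.sum_tmul, ← TensorProduct.sum_tmul]
      _ = _ := by rw [h]
  have C2' : ∀ (y z : M) (j k l : ι),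
      (∑ i, B (α l * α k) (β i) • (((α j * α i) ⊗ₜ[ℂ] y) ⊗ₜ[ℂ] z))
        = ((α j * (α l * α k)) ⊗ₜ[ℂ] y) ⊗ₜ[ℂ] z := by
    intro y z j k l
    have h : ∑ i, B (α l * α k) (β i) • (α j * α i) = α j * (α l * α k) := by
      have := L1 (α l * α k) (mul_mem (hmemP l) (hmemP k))
      calc ∑ i, B (α l * α k) (β i) • (α j * α i)
          = ∑ i, α j * (B (α l * α k) (β i) • α i) := by simp [mul_smul_comm]
        _ = α j * (∑ i, B (α l * α k) (β i) • α i) := by rw [Finset.mul_sum]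
        _ = _ := by rw [← this]
    calc (∑ i, B (α l * α k) (β i) • (((α j * α i) ⊗ₜ[ℂ] y) ⊗ₜ[ℂ] z))
        = ∑ i, ((B (α l * α k) (β i) • (α j * α i)) ⊗ₜ[ℂ] y) ⊗ₜ[ℂ] z := by
          simp [TensorProduct.smul_tmul']
      _ = ((∑ i, B (α l * α k) (β i) • (α j * α i)) ⊗ₜ[ℂ] y) ⊗ₜ[ℂ] z := by
          rw [← TensorProduct.sum_tmul, ← TensorProduct.sum_tmul]
      _ = _ := by rw [h]
  -- the two sides as explicit triple sums
  have hL : emb12 M (∑ i, α i ⊗ₜ[ℂ] β i) * emb13 M (∑ i, α i ⊗ₜ[ℂ] β i)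
        * emb23 M (∑ i, α i ⊗ₜ[ℂ] β i)
      = ∑ i, ∑ j, ∑ k, ((α i * α j) ⊗ₜ[ℂ] (β i * α k)) ⊗ₜ[ℂ] (β j * β k) := by
    have e12 : emb12 M (∑ i, α i ⊗ₜ[ℂ] β i) = ∑ i, (α i ⊗ₜ[ℂ] β i) ⊗ₜ[ℂ] (1 : M) := by
      simp [emb12]
    have e13 : emb13 M (∑ i, α i ⊗ₜ[ℂ] β i) = ∑ i, (α i ⊗ₜ[ℂ] (1 : M)) ⊗ₜ[ℂ] β i := by
      simp [emb13]
    have e23 : emb23 M (∑ i, α i ⊗ₜ[ℂ] β i) = ∑ i, ((1 : M) ⊗ₜ[ℂ] α i) ⊗ₜ[ℂ] β i := by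
      simp [emb23]
    rw [e12, e13, e23, Finset.sum_mul_sum, Finset.sum_mul_sum]
    simp only [Finset.sum_mul, Algebra.TensorProduct.tmul_mul_tmul, one_mul, mul_one]
    exact Finset.sum_congr rfl fun i _ => Finset.sum_comm ..
  have hR : emb23 M (∑ i, α i ⊗ₜ[ℂ] β i) * emb13 M (∑ i, α i ⊗ₜ[ℂ] β i)
        * emb12 M (∑ i, α i ⊗ₜ[ℂ] β i)
      = ∑ k, ∑ i, ∑ j, ((α j * α i) ⊗ₜ[ℂ] (α k * β i)) ⊗ₜ[ℂ] (β k * β j) := by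
    have e12 : emb12 M (∑ i, α i ⊗ₜ[ℂ] β i) = ∑ i, (α i ⊗ₜ[ℂ] β i) ⊗ₜ[ℂ] (1 : M) := by
      simp [emb12]
    have e13 : emb13 M (∑ i, α i ⊗ₜ[ℂ] β i) = ∑ i, (α i ⊗ₜ[ℂ] (1 : M)) ⊗ₜ[ℂ] β i := by
      simp [emb13]
    have e23 : emb23 M (∑ i, α i ⊗ₜ[ℂ] β i) = ∑ i, ((1 : M) ⊗ₜ[ℂ] α i) ⊗ₜ[ℂ] β i := by
      simp [emb23]
    rw [e12, e13, e23, Finset.sum_mul_sum, Finset.sum_mul_sum]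
    simp only [Finset.sum_mul, Algebra.TensorProduct.tmul_mul_tmul, one_mul, mul_one]
  -- expand the left-hand side
  have expandL :
      (∑ i, ∑ j, ∑ k, ((α i * α j) ⊗ₜ[ℂ] (β i * α k)) ⊗ₜ[ℂ] (β j * β k))
      = (∑ i, ∑ j, ∑ l, ((α i * α j) ⊗ₜ[ℂ] α l) ⊗ₜ[ℂ] (β j * (β l * β i)))
        + ∑ j, ∑ k, ∑ l, (((α k * α l) * α j) ⊗ₜ[ℂ] β l) ⊗ₜ[ℂ] (β j * β k) := by
    have step1 : (∑ i, ∑ j, ∑ k, ((α i * α j) ⊗ₜ[ℂ] (β i * α k)) ⊗ₜ[ℂ] (β j * β k))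
        = ∑ i, ∑ j, ∑ k,
            ((∑ l, B (α k) (β l * β i) • (((α i * α j) ⊗ₜ[ℂ] α l) ⊗ₜ[ℂ] (β j * β k)))
            + ∑ l, B (α k * α l) (β i) • (((α i * α j) ⊗ₜ[ℂ] β l) ⊗ₜ[ℂ] (β j * β k))) := by
      refine Finset.sum_congr rfl fun i _ => Finset.sum_congr rfl fun j _ =>
        Finset.sum_congr rfl fun k _ => ?_
      rw [K1 i k]
      simp only [TensorProduct.tmul_add, TensorProduct.add_tmul, TensorProduct.tmul_sum,
        TensorProduct.sum_tmul, TensorProduct.tmul_smul, ← TensorProduct.smul_tmul']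
    rw [step1]
    simp only [Finset.sum_add_distrib]
    congr 1
    · -- first part: collapse the k-sum
      refine Finset.sum_congr rfl fun i _ => Finset.sum_congr rfl fun j _ => ?_
      rw [Finset.sum_comm]
      exact Finset.sum_congr rfl fun l _ => C1 ((α i * α j) ⊗ₜ[ℂ] α l) j l i
    · -- second part: collapse the i-sum
      rw [Finset.sum_comm]
      refine Finset.sum_congr rfl fun j _ => ?_
      rw [Finset.sum_comm]
      refine Finset.sum_congr rfl fun k _ => ?_
      rw [Finset.sum_comm]
      exact Finset.sum_congr rfl fun l _ => C2 (β l) (β j * β k) j k l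
  -- expand the right-hand side
  have expandR :
      (∑ k, ∑ i, ∑ j, ((α j * α i) ⊗ₜ[ℂ] (α k * β i)) ⊗ₜ[ℂ] (β k * β j))
      = (∑ i, ∑ j, ∑ l, ((α j * α i) ⊗ₜ[ℂ] α l) ⊗ₜ[ℂ] ((β i * β l) * β j))
        + ∑ j, ∑ k, ∑ l, ((α j * (α l * α k)) ⊗ₜ[ℂ] β l) ⊗ₜ[ℂ] (β k * β j) := by
    have step1 : (∑ k, ∑ i, ∑ j, ((α j * α i) ⊗ₜ[ℂ] (α k * β i)) ⊗ₜ[ℂ] (β k * β j))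
        = ∑ k, ∑ i, ∑ j,
            ((∑ l, B (α k) (β i * β l) • (((α j * α i) ⊗ₜ[ℂ] α l) ⊗ₜ[ℂ] (β k * β j)))
            + ∑ l, B (α l * α k) (β i) • (((α j * α i) ⊗ₜ[ℂ] β l) ⊗ₜ[ℂ] (β k * β j))) := by
      refine Finset.sum_congr rfl fun k _ => Finset.sum_congr rfl fun i _ =>
        Finset.sum_congr rfl fun j _ => ?_
      rw [K2 i k]
      simp only [TensorProduct.tmul_add, TensorProduct.add_tmul, TensorProduct.tmul_sum,
        TensorProduct.sum_tmul, TensorProduct.tmul_smul, ← TensorProduct.smul_tmul']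
    rw [step1]
    simp only [Finset.sum_add_distrib]
    congr 1
    · -- first part: collapse the k-sum (it is the outermost sum here)
      rw [Finset.sum_comm]
      refine Finset.sum_congr rfl fun i _ => ?_
      rw [Finset.sum_comm]
      refine Finset.sum_congr rfl fun j _ => ?_
      rw [Finset.sum_comm]
      exact Finset.sum_congr rfl fun l _ => C1' ((α j * α i) ⊗ₜ[ℂ] α l) j l i
    · -- second part: collapse the i-sum (middle sum): reorder to k, j, l, i
      refine Eq.trans ?_ (Finset.sum_comm ..)
      refine Finset.sum_congr rfl fun k _ => ?_
      rw [Finset.sum_comm]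
      refine Finset.sum_congr rfl fun j _ => ?_
      rw [Finset.sum_comm]
      exact Finset.sum_congr rfl fun l _ => C2' (β l) (β k * β j) j k l
  -- match up the two expansions
  unfold YBE
  rw [hL, hR, expandL, expandR]
  congr 1
  · -- first terms agree after swapping i and j and using associativity
    rw [Finset.sum_comm]
    refine Finset.sum_congr rfl fun j _ => Finset.sum_congr rfl fun i _ =>
      Finset.sum_congr rfl fun l _ => ?_
    rw [mul_assoc]
  · -- second terms agree after swapping j and k and using associativity
    rw [Finset.sum_comm]
    refine Finset.sum_congr rfl fun k _ => Finset.sum_congr rfl fun j _ =>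
      Finset.sum_congr rfl fun l _ => ?_
    rw [mul_assoc]
end
end

section
/- Let M be a finite-dimensional associative unital algebra over ℂ with a nondegenerate symmetric cyclic bilinear form B, and let A and A' be subalgebras of M such that M = A ⊕ A' as a linear space, A and A' are isotropic for B, and B restricts to a nondegenerate pairing between A and A'. Let Q = Σ_i α_i ⊗ β^i ∈ A ⊗ A' be the canonical element of the pairing ((α_i) a basis of A, (β^i) the dual basis of A' with B(α_i, β^k) = δ_i^k). Then for every λ ∈ ℂ the element 1 ⊗ 1 + λ·Q satisfies the Yang–Baxter equation in M ⊗ M ⊗ M. -/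
open scoped TensorProduct

noncomputable section

variable (M : Type) [Ring M] [Algebra ℂ M]

/-- Expansion of a product of three binomials `1 + λ•X`. -/
private lemma cube_expand {R : Type} [Ring R] [Algebra ℂ R] (lam : ℂ) (X Y Z : R) :
    (1 + lam • X) * (1 + lam • Y) * (1 + lam • Z)
      = 1 + (lam • X + lam • Y + lam • Z)
        + ((lam * lam) • (X * Y) + (lam * lam) • (X * Z) + (lam * lam) • (Y * Z))
        + (lam * lam * lam) • (X * Y * Z) := by
  simp only [add_mul, mul_add, one_mul, mul_one, smul_mul_assoc, mul_smul_comm, smul_smul,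
    mul_assoc]
  module

set_option maxHeartbeats 2000000 in
/-- For a decomposition `M = A ⊕ A'` into isotropic, mutually dual
(non-unital) subalgebras, the element `1 ⊗ 1 + λ Q` satisfies YBE for every scalar `λ`. -/
theorem stmt5
    [FiniteDimensional ℂ M]
    (B : M →ₗ[ℂ] M →ₗ[ℂ] ℂ)
    (hnd : ∀ a : M, (∀ b : M, B a b = 0) → a = 0)
    (hsymm : ∀ a b : M, B a b = B b a)
    (hcyc : ∀ a b c : M, B (a * b) c = B b (c * a))
    (A A' : NonUnitalSubalgebra ℂ M)
    -- M = A ⊕ A' as a linear space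
    (hsum : NonUnitalSubalgebra.toSubmodule A ⊔ NonUnitalSubalgebra.toSubmodule A' = ⊤)
    (hdisj : NonUnitalSubalgebra.toSubmodule A ⊓ NonUnitalSubalgebra.toSubmodule A' = ⊥)
    -- A and A' are isotropic
    (hisoA : ∀ x ∈ A, ∀ y ∈ A, B x y = 0)
    (hisoA' : ∀ x ∈ A', ∀ y ∈ A', B x y = 0)
    -- B restricts to a nondegenerate pairing between A and A'
    (hpairA : ∀ x ∈ A, (∀ y ∈ A', B x y = 0) → x = 0)
    (hpairA' : ∀ y ∈ A', (∀ x ∈ A, B x y = 0) → y = 0)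
    -- a basis (α i) of A and the dual basis (β i) of A'
    (ι : Type) [Fintype ι] [DecidableEq ι] (α β : ι → M)
    (hmemP : ∀ i, α i ∈ A) (hmemM : ∀ i, β i ∈ A')
    (hindP : LinearIndependent ℂ α) (hindM : LinearIndependent ℂ β)
    (hspanP : Submodule.span ℂ (Set.range α) = NonUnitalSubalgebra.toSubmodule A)
    (hspanM : Submodule.span ℂ (Set.range β) = NonUnitalSubalgebra.toSubmodule A')
    (hdual : ∀ i k : ι, B (α i) (β k) = if i = k then 1 else 0)
    (lam : ℂ) :
    YBE M ((1 : M ⊗[ℂ] M) + lam • ∑ i, α i ⊗ₜ[ℂ] β i) := by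
  classical
  have memA_mul : ∀ i j, α i * α j ∈ A := fun i j => mul_mem (hmemP i) (hmemP j)
  have memA'_mul : ∀ i j, β i * β j ∈ A' := fun i j => mul_mem (hmemM i) (hmemM j)
  -- reproducing property for A
  have repA : ∀ x ∈ A, (∑ k, B x (β k) • α k) = x := by
    intro x hx
    have hz : x - ∑ k, B x (β k) • α k ∈ A :=
      sub_mem hx (sum_mem fun k _ => SMulMemClass.smul_mem _ (hmemP k))
    have h0 : ∀ y ∈ A', B (x - ∑ k, B x (β k) • α k) y = 0 := by
      intro y hy
      have hy' : y ∈ Submodule.span ℂ (Set.range β) := by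
        rw [hspanM]; exact hy
      have hker : Submodule.span ℂ (Set.range β)
          ≤ LinearMap.ker (B (x - ∑ k, B x (β k) • α k)) := by
        rw [Submodule.span_le]
        rintro _ ⟨k, rfl⟩
        simp only [SetLike.mem_coe, LinearMap.mem_ker, map_sub, map_sum, map_smul,
          LinearMap.sub_apply, LinearMap.sum_apply, LinearMap.smul_apply, smul_eq_mul, hdual,
          mul_ite, mul_one, mul_zero, Finset.sum_ite_eq', Finset.mem_univ, if_true, sub_self]
      exact hker hy'
    exact (sub_eq_zero.mp (hpairA _ hz h0)).symm
  -- reproducing property for A'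
  have repA' : ∀ y ∈ A', (∑ k, B y (α k) • β k) = y := by
    intro y hy
    have hz : y - ∑ k, B y (α k) • β k ∈ A' :=
      sub_mem hy (sum_mem fun k _ => SMulMemClass.smul_mem _ (hmemM k))
    have h0 : ∀ x ∈ A, B x (y - ∑ k, B y (α k) • β k) = 0 := by
      intro x hx
      have hx' : x ∈ Submodule.span ℂ (Set.range α) := by
        rw [hspanP]; exact hx
      have hker : Submodule.span ℂ (Set.range α)
          ≤ LinearMap.ker (B.flip (y - ∑ k, B y (α k) • β k)) := by
        rw [Submodule.span_le]
        rintro _ ⟨k, rfl⟩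
        simp only [SetLike.mem_coe, LinearMap.mem_ker, LinearMap.flip_apply]
        simp only [map_sub, map_sum, map_smul, smul_eq_mul, hdual, mul_ite, mul_one, mul_zero,
          Finset.sum_ite_eq, Finset.mem_univ, if_true]
        rw [hsymm, sub_self]
      exact hker hx'
    exact (sub_eq_zero.mp (hpairA' _ hz h0)).symm
  -- decomposition of M
  have decomp : ∀ m : M, ∃ p ∈ A, ∃ q ∈ A', p + q = m := by
    intro m
    have hm : m ∈ NonUnitalSubalgebra.toSubmodule A ⊔ NonUnitalSubalgebra.toSubmodule A' := by
      rw [hsum]; trivial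
    obtain ⟨p, hp, q, hq, h⟩ := Submodule.mem_sup.mp hm
    exact ⟨p, hp, q, hq, h⟩
  -- mixed products
  have lemI : ∀ k i, β k * α i
      = (∑ j, B (β j * β k) (α i) • α j) + ∑ j, B (α i * α j) (β k) • β j := by
    intro k i
    obtain ⟨p, hp, q, hq, hpq⟩ := decomp (β k * α i)
    have h1 : ∀ j, B p (β j) = B (β j * β k) (α i) := by
      intro j
      have e1 : B (β k * α i) (β j) = B p (β j) + B q (β j) := by
        rw [← hpq]; simp
      have e2 : B q (β j) = 0 := hisoA' q hq (β j) (hmemM j)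
      have e3 : B (β k * α i) (β j) = B (β j * β k) (α i) := by
        rw [hcyc, hsymm]
      rw [e2, add_zero] at e1
      rw [← e1, e3]
    have h2 : ∀ j, B q (α j) = B (α i * α j) (β k) := by
      intro j
      have e1 : B (β k * α i) (α j) = B p (α j) + B q (α j) := by
        rw [← hpq]; simp
      have e2 : B p (α j) = 0 := hisoA p hp (α j) (hmemP j)
      have e3 : B (β k * α i) (α j) = B (α i * α j) (β k) := by
        rw [hcyc, hsymm, hcyc, hsymm]
      rw [e2, zero_add] at e1
      rw [← e1, e3]
    rw [← hpq]
    congr 1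
    · rw [← repA p hp]
      exact Finset.sum_congr rfl fun j _ => by rw [h1]
    · rw [← repA' q hq]
      exact Finset.sum_congr rfl fun j _ => by rw [h2]
  have lemII : ∀ j i, α j * β i
      = (∑ k, B (β i * β k) (α j) • α k) + ∑ k, B (α k * α j) (β i) • β k := by
    intro j i
    obtain ⟨p, hp, q, hq, hpq⟩ := decomp (α j * β i)
    have h1 : ∀ k, B p (β k) = B (β i * β k) (α j) := by
      intro k
      have e1 : B (α j * β i) (β k) = B p (β k) + B q (β k) := by
        rw [← hpq]; simp
      have e2 : B q (β k) = 0 := hisoA' q hq (β k) (hmemM k)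
      have e3 : B (α j * β i) (β k) = B (β i * β k) (α j) := by
        rw [hcyc, hsymm, hcyc, hsymm]
      rw [e2, add_zero] at e1
      rw [← e1, e3]
    have h2 : ∀ k, B q (α k) = B (α k * α j) (β i) := by
      intro k
      have e1 : B (α j * β i) (α k) = B p (α k) + B q (α k) := by
        rw [← hpq]; simp
      have e2 : B p (α k) = 0 := hisoA p hp (α k) (hmemP k)
      have e3 : B (α j * β i) (α k) = B (α k * α j) (β i) := by
        rw [hcyc, hsymm]
      rw [e2, zero_add] at e1
      rw [← e1, e3]
    rw [← hpq]
    congr 1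
    · rw [← repA p hp]
      exact Finset.sum_congr rfl fun k _ => by rw [h1]
    · rw [← repA' q hq]
      exact Finset.sum_congr rfl fun k _ => by rw [h2]
  -- tensor computations
  set Q : M ⊗[ℂ] M := ∑ i, α i ⊗ₜ[ℂ] β i with hQ
  set X : (M ⊗[ℂ] M) ⊗[ℂ] M := ∑ i, (α i ⊗ₜ[ℂ] β i) ⊗ₜ[ℂ] (1 : M) with hX
  set Y : (M ⊗[ℂ] M) ⊗[ℂ] M := ∑ i, (α i ⊗ₜ[ℂ] (1 : M)) ⊗ₜ[ℂ] β i with hY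
  set Z : (M ⊗[ℂ] M) ⊗[ℂ] M := ∑ i, ((1 : M) ⊗ₜ[ℂ] α i) ⊗ₜ[ℂ] β i with hZ
  have cyc3 : ∀ F : ι → ι → ι → (M ⊗[ℂ] M) ⊗[ℂ] M,
      (∑ i, ∑ j, ∑ l, F i j l) = ∑ i, ∑ j, ∑ l, F l i j := by
    intro F
    calc (∑ i, ∑ j, ∑ l, F i j l) = ∑ j, ∑ i, ∑ l, F i j l := Finset.sum_comm
      _ = ∑ j, ∑ l, ∑ i, F i j l := Finset.sum_congr rfl fun _ _ => Finset.sum_comm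
      _ = ∑ i, ∑ j, ∑ l, F l i j := rfl
  have e12 : emb12 M (1 + lam • Q) = 1 + lam • X := by
    rw [map_add, map_one, map_smul, hQ, map_sum]
    simp [emb12, hX]
  have e13 : emb13 M (1 + lam • Q) = 1 + lam • Y := by
    rw [map_add, map_one, map_smul, hQ, map_sum]
    simp [emb13, hY]
  have e23 : emb23 M (1 + lam • Q) = 1 + lam • Z := by
    rw [map_add, map_one, map_smul, hQ, map_sum]
    simp [emb23, hZ]
  have pXY : X * Y = ∑ i, ∑ j, ((α i * α j) ⊗ₜ[ℂ] β i) ⊗ₜ[ℂ] β j := by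
    rw [hX, hY, Finset.sum_mul_sum]
    simp [Algebra.TensorProduct.tmul_mul_tmul]
  have pYX : Y * X = ∑ i, ∑ j, ((α i * α j) ⊗ₜ[ℂ] β j) ⊗ₜ[ℂ] β i := by
    rw [hX, hY, Finset.sum_mul_sum]
    simp [Algebra.TensorProduct.tmul_mul_tmul]
  have pXZ : X * Z = ∑ i, ∑ j, (α i ⊗ₜ[ℂ] (β i * α j)) ⊗ₜ[ℂ] β j := by
    rw [hX, hZ, Finset.sum_mul_sum]
    simp [Algebra.TensorProduct.tmul_mul_tmul]
  have pZX : Z * X = ∑ i, ∑ j, (α j ⊗ₜ[ℂ] (α i * β j)) ⊗ₜ[ℂ] β i := by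
    rw [hX, hZ, Finset.sum_mul_sum]
    simp [Algebra.TensorProduct.tmul_mul_tmul]
  have pYZ : Y * Z = ∑ i, ∑ j, (α i ⊗ₜ[ℂ] α j) ⊗ₜ[ℂ] (β i * β j) := by
    rw [hY, hZ, Finset.sum_mul_sum]
    simp [Algebra.TensorProduct.tmul_mul_tmul]
  have pZY : Z * Y = ∑ i, ∑ j, (α j ⊗ₜ[ℂ] α i) ⊗ₜ[ℂ] (β i * β j) := by
    rw [hY, hZ, Finset.sum_mul_sum]
    simp [Algebra.TensorProduct.tmul_mul_tmul]
  have pXYZ : X * Y * Z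
      = ∑ i, ∑ j, ∑ k, ((α i * α j) ⊗ₜ[ℂ] (β i * α k)) ⊗ₜ[ℂ] (β j * β k) := by
    rw [pXY, hZ]
    simp only [Finset.sum_mul, Finset.mul_sum, Algebra.TensorProduct.tmul_mul_tmul, mul_one,
      one_mul]
    exact cyc3 fun a b c => ((α b * α c) ⊗ₜ[ℂ] (β b * α a)) ⊗ₜ[ℂ] (β c * β a)
  have pZYX : Z * Y * X
      = ∑ i, ∑ j, ∑ k, ((α j * α k) ⊗ₜ[ℂ] (α i * β k)) ⊗ₜ[ℂ] (β i * β j) := by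
    rw [pZY, hX]
    simp only [Finset.sum_mul, Finset.mul_sum, Algebra.TensorProduct.tmul_mul_tmul, mul_one,
      one_mul]
    exact cyc3 fun a b c => ((α c * α a) ⊗ₜ[ℂ] (α b * β a)) ⊗ₜ[ℂ] (β b * β c)
  -- expanded forms of the six pairwise products
  have zy : Z * Y = ∑ i, ∑ j, ∑ l, B (β i * β j) (α l) • ((α j ⊗ₜ[ℂ] α i) ⊗ₜ[ℂ] β l) := by
    rw [pZY]
    refine Finset.sum_congr rfl fun i _ => Finset.sum_congr rfl fun j _ => ?_
    conv_lhs => rw [← repA' (β i * β j) (memA'_mul i j)]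
    simp only [TensorProduct.tmul_sum, TensorProduct.tmul_smul]
  have yz : Y * Z = ∑ i, ∑ j, ∑ l, B (β i * β j) (α l) • ((α i ⊗ₜ[ℂ] α j) ⊗ₜ[ℂ] β l) := by
    rw [pYZ]
    refine Finset.sum_congr rfl fun i _ => Finset.sum_congr rfl fun j _ => ?_
    conv_lhs => rw [← repA' (β i * β j) (memA'_mul i j)]
    simp only [TensorProduct.tmul_sum, TensorProduct.tmul_smul]
  have yx : Y * X = ∑ i, ∑ j, ∑ l, B (α i * α j) (β l) • ((α l ⊗ₜ[ℂ] β j) ⊗ₜ[ℂ] β i) := by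
    rw [pYX]
    refine Finset.sum_congr rfl fun i _ => Finset.sum_congr rfl fun j _ => ?_
    conv_lhs => rw [← repA (α i * α j) (memA_mul i j)]
    simp only [TensorProduct.sum_tmul, TensorProduct.smul_tmul']
  have xy : X * Y = ∑ i, ∑ j, ∑ l, B (α i * α j) (β l) • ((α l ⊗ₜ[ℂ] β i) ⊗ₜ[ℂ] β j) := by
    rw [pXY]
    refine Finset.sum_congr rfl fun i _ => Finset.sum_congr rfl fun j _ => ?_
    conv_lhs => rw [← repA (α i * α j) (memA_mul i j)]
    simp only [TensorProduct.sum_tmul, TensorProduct.smul_tmul']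
  -- quadratic relations
  have rel1 : X * Z = Z * Y + Y * X := by
    calc X * Z
        = ∑ i, ∑ j, ((∑ l, B (β l * β i) (α j) • ((α i ⊗ₜ[ℂ] α l) ⊗ₜ[ℂ] β j))
            + ∑ l, B (α j * α l) (β i) • ((α i ⊗ₜ[ℂ] β l) ⊗ₜ[ℂ] β j)) := by
          rw [pXZ]
          refine Finset.sum_congr rfl fun i _ => Finset.sum_congr rfl fun j _ => ?_
          rw [lemI i j]
          simp only [TensorProduct.tmul_add, TensorProduct.add_tmul, TensorProduct.tmul_sum,
            TensorProduct.sum_tmul, TensorProduct.tmul_smul, TensorProduct.smul_tmul']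
      _ = (∑ i, ∑ j, ∑ l, B (β l * β i) (α j) • ((α i ⊗ₜ[ℂ] α l) ⊗ₜ[ℂ] β j))
            + ∑ i, ∑ j, ∑ l, B (α j * α l) (β i) • ((α i ⊗ₜ[ℂ] β l) ⊗ₜ[ℂ] β j) := by
          simp only [Finset.sum_add_distrib]
      _ = Z * Y + Y * X := by
          congr 1
          · rw [zy]
            exact (cyc3 fun a b c => B (β a * β b) (α c) • ((α b ⊗ₜ[ℂ] α a) ⊗ₜ[ℂ] β c)).symm
          · rw [yx]
            exact cyc3 fun a b c => B (α b * α c) (β a) • ((α a ⊗ₜ[ℂ] β c) ⊗ₜ[ℂ] β b)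
  have rel2 : Z * X = Y * Z + X * Y := by
    calc Z * X
        = ∑ i, ∑ j, ((∑ l, B (β j * β l) (α i) • ((α j ⊗ₜ[ℂ] α l) ⊗ₜ[ℂ] β i))
            + ∑ l, B (α l * α i) (β j) • ((α j ⊗ₜ[ℂ] β l) ⊗ₜ[ℂ] β i)) := by
          rw [pZX]
          refine Finset.sum_congr rfl fun i _ => Finset.sum_congr rfl fun j _ => ?_
          rw [lemII i j]
          simp only [TensorProduct.tmul_add, TensorProduct.add_tmul, TensorProduct.tmul_sum,
            TensorProduct.sum_tmul, TensorProduct.tmul_smul, TensorProduct.smul_tmul']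
      _ = (∑ i, ∑ j, ∑ l, B (β j * β l) (α i) • ((α j ⊗ₜ[ℂ] α l) ⊗ₜ[ℂ] β i))
            + ∑ i, ∑ j, ∑ l, B (α l * α i) (β j) • ((α j ⊗ₜ[ℂ] β l) ⊗ₜ[ℂ] β i) := by
          simp only [Finset.sum_add_distrib]
      _ = Y * Z + X * Y := by
          congr 1
          · rw [yz]
            exact cyc3 fun a b c => B (β b * β c) (α a) • ((α b ⊗ₜ[ℂ] α c) ⊗ₜ[ℂ] β a)
          · rw [xy]
            exact (cyc3 fun a b c => B (α a * α b) (β c) • ((α c ⊗ₜ[ℂ] β a) ⊗ₜ[ℂ] β b)).symm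
  -- cubic relation
  have hS : X * Y * Z
      = (∑ a, ∑ b, ∑ c, ((α a * α b) ⊗ₜ[ℂ] α c) ⊗ₜ[ℂ] (β b * (β c * β a)))
        + ∑ a, ∑ b, ∑ c, (((α b * α c) * α a) ⊗ₜ[ℂ] β c) ⊗ₜ[ℂ] (β a * β b) := by
    calc X * Y * Z
        = ∑ i, ∑ j, ∑ k, ((α i * α j) ⊗ₜ[ℂ] (β i * α k)) ⊗ₜ[ℂ] (β j * β k) := pXYZ
      _ = ∑ i, ∑ j, ∑ k,
            ((∑ l, B (β l * β i) (α k) • (((α i * α j) ⊗ₜ[ℂ] α l) ⊗ₜ[ℂ] (β j * β k)))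
              + ∑ l, B (α k * α l) (β i) • (((α i * α j) ⊗ₜ[ℂ] β l) ⊗ₜ[ℂ] (β j * β k))) := by
          refine Finset.sum_congr rfl fun i _ => Finset.sum_congr rfl fun j _ =>
            Finset.sum_congr rfl fun k _ => ?_
          rw [lemI i k]
          simp only [TensorProduct.tmul_add, TensorProduct.add_tmul, TensorProduct.tmul_sum,
            TensorProduct.sum_tmul, TensorProduct.tmul_smul, TensorProduct.smul_tmul']
      _ = (∑ i, ∑ j, ∑ k, ∑ l, B (β l * β i) (α k) • (((α i * α j) ⊗ₜ[ℂ] α l) ⊗ₜ[ℂ] (β j * β k)))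
            + ∑ i, ∑ j, ∑ k, ∑ l,
                B (α k * α l) (β i) • (((α i * α j) ⊗ₜ[ℂ] β l) ⊗ₜ[ℂ] (β j * β k)) := by
          simp only [Finset.sum_add_distrib]
      _ = (∑ a, ∑ b, ∑ c, ((α a * α b) ⊗ₜ[ℂ] α c) ⊗ₜ[ℂ] (β b * (β c * β a)))
            + ∑ a, ∑ b, ∑ c, (((α b * α c) * α a) ⊗ₜ[ℂ] β c) ⊗ₜ[ℂ] (β a * β b) := by
          congr 1
          · -- contract over k (swap the two innermost sums first)
            calc (∑ i, ∑ j, ∑ k, ∑ l,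
                    B (β l * β i) (α k) • (((α i * α j) ⊗ₜ[ℂ] α l) ⊗ₜ[ℂ] (β j * β k)))
                = ∑ i, ∑ j, ∑ l, ∑ k,
                    B (β l * β i) (α k) • (((α i * α j) ⊗ₜ[ℂ] α l) ⊗ₜ[ℂ] (β j * β k)) :=
                  Finset.sum_congr rfl fun i _ => Finset.sum_congr rfl fun j _ =>
                    Finset.sum_comm
              _ = ∑ a, ∑ b, ∑ c, ((α a * α b) ⊗ₜ[ℂ] α c) ⊗ₜ[ℂ] (β b * (β c * β a)) := by
                  refine Finset.sum_congr rfl fun i _ => Finset.sum_congr rfl fun j _ =>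
                    Finset.sum_congr rfl fun l _ => ?_
                  conv_rhs => rw [← repA' (β l * β i) (memA'_mul l i)]
                  simp only [Finset.mul_sum, mul_smul_comm, TensorProduct.tmul_sum,
                    TensorProduct.tmul_smul]
          · -- contract over i (move the outermost sum innermost first)
            calc (∑ i, ∑ j, ∑ k, ∑ l,
                    B (α k * α l) (β i) • (((α i * α j) ⊗ₜ[ℂ] β l) ⊗ₜ[ℂ] (β j * β k)))
                = ∑ j, ∑ i, ∑ k, ∑ l,
                    B (α k * α l) (β i) • (((α i * α j) ⊗ₜ[ℂ] β l) ⊗ₜ[ℂ] (β j * β k)) :=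
                  Finset.sum_comm
              _ = ∑ j, ∑ k, ∑ i, ∑ l,
                    B (α k * α l) (β i) • (((α i * α j) ⊗ₜ[ℂ] β l) ⊗ₜ[ℂ] (β j * β k)) :=
                  Finset.sum_congr rfl fun j _ => Finset.sum_comm
              _ = ∑ j, ∑ k, ∑ l, ∑ i,
                    B (α k * α l) (β i) • (((α i * α j) ⊗ₜ[ℂ] β l) ⊗ₜ[ℂ] (β j * β k)) :=
                  Finset.sum_congr rfl fun j _ => Finset.sum_congr rfl fun k _ =>
                    Finset.sum_comm
              _ = ∑ a, ∑ b, ∑ c, (((α b * α c) * α a) ⊗ₜ[ℂ] β c) ⊗ₜ[ℂ] (β a * β b) := by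
                  refine Finset.sum_congr rfl fun j _ => Finset.sum_congr rfl fun k _ =>
                    Finset.sum_congr rfl fun l _ => ?_
                  conv_rhs => rw [← repA (α k * α l) (memA_mul k l)]
                  simp only [Finset.sum_mul, smul_mul_assoc, TensorProduct.sum_tmul,
                    TensorProduct.smul_tmul']
  have hT : Z * Y * X
      = (∑ a, ∑ b, ∑ c, ((α a * α b) ⊗ₜ[ℂ] α c) ⊗ₜ[ℂ] ((β b * β c) * β a))
        + ∑ a, ∑ b, ∑ c, ((α b * (α c * α a)) ⊗ₜ[ℂ] β c) ⊗ₜ[ℂ] (β a * β b) := by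
    calc Z * Y * X
        = ∑ i, ∑ j, ∑ k, ((α j * α k) ⊗ₜ[ℂ] (α i * β k)) ⊗ₜ[ℂ] (β i * β j) := pZYX
      _ = ∑ i, ∑ j, ∑ k,
            ((∑ l, B (β k * β l) (α i) • (((α j * α k) ⊗ₜ[ℂ] α l) ⊗ₜ[ℂ] (β i * β j)))
              + ∑ l, B (α l * α i) (β k) • (((α j * α k) ⊗ₜ[ℂ] β l) ⊗ₜ[ℂ] (β i * β j))) := by
          refine Finset.sum_congr rfl fun i _ => Finset.sum_congr rfl fun j _ =>
            Finset.sum_congr rfl fun k _ => ?_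
          rw [lemII i k]
          simp only [TensorProduct.tmul_add, TensorProduct.add_tmul, TensorProduct.tmul_sum,
            TensorProduct.sum_tmul, TensorProduct.tmul_smul, TensorProduct.smul_tmul']
      _ = (∑ i, ∑ j, ∑ k, ∑ l, B (β k * β l) (α i) • (((α j * α k) ⊗ₜ[ℂ] α l) ⊗ₜ[ℂ] (β i * β j)))
            + ∑ i, ∑ j, ∑ k, ∑ l,
                B (α l * α i) (β k) • (((α j * α k) ⊗ₜ[ℂ] β l) ⊗ₜ[ℂ] (β i * β j)) := by
          simp only [Finset.sum_add_distrib]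
      _ = (∑ a, ∑ b, ∑ c, ((α a * α b) ⊗ₜ[ℂ] α c) ⊗ₜ[ℂ] ((β b * β c) * β a))
            + ∑ a, ∑ b, ∑ c, ((α b * (α c * α a)) ⊗ₜ[ℂ] β c) ⊗ₜ[ℂ] (β a * β b) := by
          congr 1
          · -- contract over i (move the outermost sum innermost first)
            calc (∑ i, ∑ j, ∑ k, ∑ l,
                    B (β k * β l) (α i) • (((α j * α k) ⊗ₜ[ℂ] α l) ⊗ₜ[ℂ] (β i * β j)))
                = ∑ j, ∑ i, ∑ k, ∑ l,
                    B (β k * β l) (α i) • (((α j * α k) ⊗ₜ[ℂ] α l) ⊗ₜ[ℂ] (β i * β j)) :=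
                  Finset.sum_comm
              _ = ∑ j, ∑ k, ∑ i, ∑ l,
                    B (β k * β l) (α i) • (((α j * α k) ⊗ₜ[ℂ] α l) ⊗ₜ[ℂ] (β i * β j)) :=
                  Finset.sum_congr rfl fun j _ => Finset.sum_comm
              _ = ∑ j, ∑ k, ∑ l, ∑ i,
                    B (β k * β l) (α i) • (((α j * α k) ⊗ₜ[ℂ] α l) ⊗ₜ[ℂ] (β i * β j)) :=
                  Finset.sum_congr rfl fun j _ => Finset.sum_congr rfl fun k _ =>
                    Finset.sum_comm
              _ = ∑ a, ∑ b, ∑ c, ((α a * α b) ⊗ₜ[ℂ] α c) ⊗ₜ[ℂ] ((β b * β c) * β a) := by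
                  refine Finset.sum_congr rfl fun j _ => Finset.sum_congr rfl fun k _ =>
                    Finset.sum_congr rfl fun l _ => ?_
                  conv_rhs => rw [← repA' (β k * β l) (memA'_mul k l)]
                  simp only [Finset.sum_mul, smul_mul_assoc, TensorProduct.tmul_sum,
                    TensorProduct.tmul_smul]
          · -- contract over k (swap the two innermost sums first)
            calc (∑ i, ∑ j, ∑ k, ∑ l,
                    B (α l * α i) (β k) • (((α j * α k) ⊗ₜ[ℂ] β l) ⊗ₜ[ℂ] (β i * β j)))
                = ∑ i, ∑ j, ∑ l, ∑ k,
                    B (α l * α i) (β k) • (((α j * α k) ⊗ₜ[ℂ] β l) ⊗ₜ[ℂ] (β i * β j)) :=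
                  Finset.sum_congr rfl fun i _ => Finset.sum_congr rfl fun j _ =>
                    Finset.sum_comm
              _ = ∑ a, ∑ b, ∑ c, ((α b * (α c * α a)) ⊗ₜ[ℂ] β c) ⊗ₜ[ℂ] (β a * β b) := by
                  refine Finset.sum_congr rfl fun i _ => Finset.sum_congr rfl fun j _ =>
                    Finset.sum_congr rfl fun l _ => ?_
                  conv_rhs => rw [← repA (α l * α i) (memA_mul l i)]
                  simp only [Finset.mul_sum, mul_smul_comm, TensorProduct.sum_tmul,
                    TensorProduct.smul_tmul']
  have rel3 : X * Y * Z = Z * Y * X := by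
    rw [hS, hT]
    simp only [mul_assoc]
  -- assemble
  show emb12 M (1 + lam • Q) * emb13 M (1 + lam • Q) * emb23 M (1 + lam • Q)
      = emb23 M (1 + lam • Q) * emb13 M (1 + lam • Q) * emb12 M (1 + lam • Q)
  rw [e12, e13, e23, cube_expand, cube_expand, rel1, rel2, rel3]
  simp only [smul_add]
  abel
end
end

section
/- Let (M, N₊, N₋, D) be an associative triple over ℂ. Then the canonical element Q = Σ_i α_i ⊗ β^i ∈ N₊ ⊗ N₋ satisfies the Yang–Baxter equation Q₁₂ * Q₁₃ * Q₂₃ = Q₂₃ * Q₁₃ * Q₁₂ in M ⊗ M ⊗ M. -/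
open scoped TensorProduct

noncomputable section

variable (M : Type) [Ring M] [Algebra ℂ M]

/-- `T₂₁`: the element of `M ⊗ M` with the two tensor factors swapped. -/
noncomputable def swapT (T : M ⊗[ℂ] M) : M ⊗[ℂ] M :=
  Algebra.TensorProduct.comm ℂ M M T

/-- `S` belongs to `D ⊗ D ⊆ M ⊗ M` for a subspace `D` of `M`. -/
def inTensor (D : Submodule ℂ M) (S : M ⊗[ℂ] M) : Prop :=
  S ∈ LinearMap.range (TensorProduct.map D.subtype D.subtype)

/-- An associative triple `(M, N₊, N₋, D)` on an algebra `M` with a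
nondegenerate symmetric cyclic bilinear form `B`:  `M = N₋ + D + N₊` as a linear
space, `N₊`, `N₋` are isotropic and mutually dual, they are `D`-sub-bimodules,
`1 ∈ D`, and `D` is orthogonal to `N₊ + N₋`. -/
structure AssocTriple (B : M →ₗ[ℂ] M →ₗ[ℂ] ℂ)
    (Np Nm D : NonUnitalSubalgebra ℂ M) : Prop where
  one_mem : (1 : M) ∈ D
  sum_top : NonUnitalSubalgebra.toSubmodule Nm ⊔ NonUnitalSubalgebra.toSubmodule D ⊔
      NonUnitalSubalgebra.toSubmodule Np = ⊤
  isoP : ∀ x ∈ Np, ∀ y ∈ Np, B x y = 0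
  isoM : ∀ x ∈ Nm, ∀ y ∈ Nm, B x y = 0
  pairP : ∀ x ∈ Np, (∀ y ∈ Nm, B x y = 0) → x = 0
  pairM : ∀ y ∈ Nm, (∀ x ∈ Np, B x y = 0) → y = 0
  bimodPl : ∀ d ∈ D, ∀ x ∈ Np, d * x ∈ Np
  bimodPr : ∀ d ∈ D, ∀ x ∈ Np, x * d ∈ Np
  bimodMl : ∀ d ∈ D, ∀ x ∈ Nm, d * x ∈ Nm
  bimodMr : ∀ d ∈ D, ∀ x ∈ Nm, x * d ∈ Nm
  orthoPl : ∀ d ∈ D, ∀ x ∈ Np, B d x = 0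
  orthoPr : ∀ d ∈ D, ∀ x ∈ Np, B x d = 0
  orthoMl : ∀ d ∈ D, ∀ x ∈ Nm, B d x = 0
  orthoMr : ∀ d ∈ D, ∀ x ∈ Nm, B x d = 0

/-- A pair of `B`-dual bases `(α i)` of `N₊` and `(β i)` of `N₋`. -/
structure DualPair (B : M →ₗ[ℂ] M →ₗ[ℂ] ℂ) (Np Nm : Submodule ℂ M)
    {ι : Type} [Fintype ι] [DecidableEq ι] (α β : ι → M) : Prop where
  memP : ∀ i, α i ∈ Np
  memM : ∀ i, β i ∈ Nm
  indepP : LinearIndependent ℂ α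
  indepM : LinearIndependent ℂ β
  spanP : Submodule.span ℂ (Set.range α) = Np
  spanM : Submodule.span ℂ (Set.range β) = Nm
  dual : ∀ i k, B (α i) (β k) = if i = k then 1 else 0

namespace YB6

lemma sum_rot3 {γ : Type} [Fintype γ] {X : Type} [AddCommMonoid X] (F : γ → γ → γ → X) :
    (∑ i, ∑ j, ∑ k, F i j k) = ∑ j, ∑ k, ∑ i, F i j k := by
  rw [Finset.sum_comm]
  exact Finset.sum_congr rfl fun j _ => Finset.sum_comm

lemma sum_rev3 {γ : Type} [Fintype γ] {X : Type} [AddCommMonoid X] (F : γ → γ → γ → X) :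
    (∑ i, ∑ j, ∑ k, F i j k) = ∑ k, ∑ j, ∑ i, F i j k := by
  rw [Finset.sum_comm]
  rw [show (∑ j, ∑ i, ∑ k : γ, F i j k) = ∑ j, ∑ k, ∑ i, F i j k from
    Finset.sum_congr rfl fun j _ => Finset.sum_comm]
  exact Finset.sum_comm

lemma sum_pull4 {γ : Type} [Fintype γ] {X : Type} [AddCommMonoid X] (F : γ → γ → γ → γ → X) :
    (∑ i, ∑ j, ∑ k, ∑ a, F i j k a) = ∑ a, ∑ i, ∑ j, ∑ k, F i j k a := by
  calc (∑ i, ∑ j, ∑ k, ∑ a, F i j k a)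
      = ∑ i, ∑ j, ∑ a, ∑ k, F i j k a :=
        Finset.sum_congr rfl fun i _ => Finset.sum_congr rfl fun j _ => Finset.sum_comm
    _ = ∑ i, ∑ a, ∑ j, ∑ k, F i j k a :=
        Finset.sum_congr rfl fun i _ => Finset.sum_comm
    _ = ∑ a, ∑ i, ∑ j, ∑ k, F i j k a := Finset.sum_comm

lemma sum_pull5 {γ : Type} [Fintype γ] {X : Type} [AddCommMonoid X]
    (F : γ → γ → γ → γ → γ → X) :
    (∑ i, ∑ j, ∑ k, ∑ a, ∑ c, F i j k a c) = ∑ a, ∑ c, ∑ i, ∑ j, ∑ k, F i j k a c := by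
  rw [sum_pull4 (fun i j k a => ∑ c, F i j k a c)]
  exact Finset.sum_congr rfl fun a _ => sum_pull4 (fun i j k c => F i j k a c)

section
variable {A : Type} [Ring A] [Algebra ℂ A]
variable (B : A →ₗ[ℂ] A →ₗ[ℂ] ℂ)
variable {ι : Type} [Fintype ι] [DecidableEq ι] (α β : ι → A)

/-- projection-like operator onto the span of `α`. -/
noncomputable def pP (m : A) : A := ∑ i, B m (β i) • α i
/-- projection-like operator onto the span of `β`. -/
noncomputable def pM (m : A) : A := ∑ i, B (α i) m • β i

lemma pP_def (m : A) : pP B α β m = ∑ i, B m (β i) • α i := rfl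
lemma pM_def (m : A) : pM B α β m = ∑ i, B (α i) m • β i := rfl

lemma pP_add (m n : A) : pP B α β (m + n) = pP B α β m + pP B α β n := by
  simp [pP, add_smul, Finset.sum_add_distrib]

lemma pM_add (m n : A) : pM B α β (m + n) = pM B α β m + pM B α β n := by
  simp [pM, add_smul, Finset.sum_add_distrib]

lemma B_add_left (x y z : A) : B (x + y) z = B x z + B y z := by simp
lemma B_sub_left (x y z : A) : B (x - y) z = B x z - B y z := by simp

lemma contr (hsymm : ∀ a b : A, B a b = B b a) (u w : A) :
    (∑ i, B (α i) u * B (β i) w) = B u (pP B α β w) := by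
  rw [pP_def, map_sum]
  refine Finset.sum_congr rfl fun i _ => ?_
  rw [map_smul, smul_eq_mul, hsymm (α i) u, hsymm (β i) w, mul_comm]

lemma expandP (hdual : ∀ i k, B (α i) (β k) = if i = k then 1 else 0)
    {x : A} (hx : x ∈ Submodule.span ℂ (Set.range α)) :
    pP B α β x = x := by
  rw [Submodule.mem_span_range_iff_exists_fun] at hx
  obtain ⟨c, rfl⟩ := hx
  have hco : ∀ k, B (∑ i, c i • α i) (β k) = c k := by
    intro k
    rw [map_sum, LinearMap.sum_apply]
    simp [hdual, mul_ite]
  rw [pP_def]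
  simp only [hco]

lemma expandM (hdual : ∀ i k, B (α i) (β k) = if i = k then 1 else 0)
    {x : A} (hx : x ∈ Submodule.span ℂ (Set.range β)) :
    pM B α β x = x := by
  rw [Submodule.mem_span_range_iff_exists_fun] at hx
  obtain ⟨c, rfl⟩ := hx
  have hco : ∀ k, B (α k) (∑ i, c i • β i) = c k := by
    intro k
    rw [map_sum]
    simp [hdual, mul_ite]
  rw [pM_def]
  simp only [hco]

lemma B_mul_pP (u x W : A) :
    B (x * pP B α β u) W = ∑ s, B u (β s) * B (x * α s) W := by
  rw [pP_def, Finset.mul_sum, map_sum, LinearMap.sum_apply]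
  refine Finset.sum_congr rfl fun s _ => ?_
  rw [mul_smul_comm, map_smul, LinearMap.smul_apply, smul_eq_mul]

lemma B_pP_mul (u x W : A) :
    B (pP B α β u * x) W = ∑ s, B u (β s) * B (α s * x) W := by
  rw [pP_def, Finset.sum_mul, map_sum, LinearMap.sum_apply]
  refine Finset.sum_congr rfl fun s _ => ?_
  rw [smul_mul_assoc, map_smul, LinearMap.smul_apply, smul_eq_mul]

end
end YB6
/-- Theorem 1 (first part): the canonical element `Q ∈ N₊ ⊗ N₋` of an
associative triple satisfies the Yang–Baxter equation. -/
theorem stmt6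
    [FiniteDimensional ℂ M]
    (B : M →ₗ[ℂ] M →ₗ[ℂ] ℂ)
    (hnd : ∀ a : M, (∀ b : M, B a b = 0) → a = 0)
    (hsymm : ∀ a b : M, B a b = B b a)
    (hcyc : ∀ a b c : M, B (a * b) c = B b (c * a))
    (Np Nm D : NonUnitalSubalgebra ℂ M)
    (hT : AssocTriple M B Np Nm D)
    (ι : Type) [Fintype ι] [DecidableEq ι] (α β : ι → M)
    (hQ : DualPair M B (NonUnitalSubalgebra.toSubmodule Np)
      (NonUnitalSubalgebra.toSubmodule Nm) α β) :
    YBE M (∑ i, α i ⊗ₜ[ℂ] β i) := by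
  classical
  have memPα : ∀ i, α i ∈ Np := fun i => by
    have := hQ.memP i; rwa [NonUnitalSubalgebra.mem_toSubmodule] at this
  have memMβ : ∀ i, β i ∈ Nm := fun i => by
    have := hQ.memM i; rwa [NonUnitalSubalgebra.mem_toSubmodule] at this
  have hInv : ∀ x y z : M, B (x * y) z = B x (y * z) := by
    intro x y z
    rw [hcyc x y z, hsymm y (z * x), hcyc z x y]
  have hExpP : ∀ x, x ∈ Np → YB6.pP B α β x = x := by
    intro x hx
    refine YB6.expandP B α β hQ.dual ?_
    rw [hQ.spanP, NonUnitalSubalgebra.mem_toSubmodule]; exact hx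
  have hExpM : ∀ y, y ∈ Nm → YB6.pM B α β y = y := by
    intro y hy
    refine YB6.expandM B α β hQ.dual ?_
    rw [hQ.spanM, NonUnitalSubalgebra.mem_toSubmodule]; exact hy
  have hPmem : ∀ m, YB6.pP B α β m ∈ Np := by
    intro m
    rw [YB6.pP_def]
    exact sum_mem fun i _ => SMulMemClass.smul_mem _ (memPα i)
  have hPMmem : ∀ m, YB6.pM B α β m ∈ Nm := by
    intro m
    rw [YB6.pM_def]
    exact sum_mem fun i _ => SMulMemClass.smul_mem _ (memMβ i)
  have hPzM : ∀ y, y ∈ Nm → YB6.pP B α β y = 0 := by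
    intro y hy
    rw [YB6.pP_def]
    refine Finset.sum_eq_zero fun i _ => ?_
    rw [hT.isoM y hy (β i) (memMβ i), zero_smul]
  have hPzD : ∀ d, d ∈ D → YB6.pP B α β d = 0 := by
    intro d hd
    rw [YB6.pP_def]
    refine Finset.sum_eq_zero fun i _ => ?_
    rw [hT.orthoMl d hd (β i) (memMβ i), zero_smul]
  have hPMzP : ∀ x, x ∈ Np → YB6.pM B α β x = 0 := by
    intro x hx
    rw [YB6.pM_def]
    refine Finset.sum_eq_zero fun i _ => ?_
    rw [hT.isoP (α i) (memPα i) x hx, zero_smul]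
  have hPMzD : ∀ d, d ∈ D → YB6.pM B α β d = 0 := by
    intro d hd
    rw [YB6.pM_def]
    refine Finset.sum_eq_zero fun i _ => ?_
    rw [hT.orthoPr d hd (α i) (memPα i), zero_smul]
  have hDec : ∀ m : M, m - YB6.pP B α β m - YB6.pM B α β m ∈ D := by
    intro m
    have hm : m ∈ NonUnitalSubalgebra.toSubmodule Nm ⊔ NonUnitalSubalgebra.toSubmodule D ⊔
        NonUnitalSubalgebra.toSubmodule Np := by
      rw [hT.sum_top]; exact Submodule.mem_top
    obtain ⟨u, hu, x, hx, rfl⟩ := Submodule.mem_sup.mp hm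
    obtain ⟨y, hy, d, hd, rfl⟩ := Submodule.mem_sup.mp hu
    rw [NonUnitalSubalgebra.mem_toSubmodule] at hx hy hd
    have e1 : YB6.pP B α β (y + d + x) = x := by
      rw [YB6.pP_add, YB6.pP_add, hPzM y hy, hPzD d hd, hExpP x hx, zero_add, zero_add]
    have e2 : YB6.pM B α β (y + d + x) = y := by
      rw [YB6.pM_add, YB6.pM_add, hPMzD d hd, hPMzP x hx, hExpM y hy, add_zero, add_zero]
    have e3 : y + d + x - YB6.pP B α β (y + d + x) - YB6.pM B α β (y + d + x) = d := by
      rw [e1, e2]; abel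
    rw [e3]; exact hd
  have hOrthM : ∀ n, n ∈ Nm → ∀ w, B n (YB6.pP B α β w) = B n w := by
    intro n hn w
    have hw : w = YB6.pP B α β w + YB6.pM B α β w + (w - YB6.pP B α β w - YB6.pM B α β w) := by
      abel
    conv_rhs => rw [hw]
    rw [map_add, map_add, hT.isoM n hn _ (hPMmem w), hT.orthoMr _ (hDec w) n hn]
    ring
  have hContr : ∀ u w : M, (∑ i, B (α i) u * B (β i) w) = B u (YB6.pP B α β w) :=
    YB6.contr B α β hsymm
  -- the master contraction identity (G)
  have hG : ∀ (a c : ι) (v : M),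
      (∑ k, B (β a * (α k * v)) (YB6.pP B α β (β k * α c)))
        = ∑ k, B (v * α k * β a) (YB6.pP B α β (α c * β k)) := by
    intro a c v
    have l2 : ∀ i k : ι, B (α i) (β a * (α k * v)) = B (α k) (v * (α i * β a)) := by
      intro i k
      rw [hsymm (α i) (β a * (α k * v)), hInv (β a) (α k * v) (α i),
        hsymm (β a) (α k * v * α i), hInv (α k * v) (α i) (β a), hInv (α k) v (α i * β a)]
    have l3 : ∀ i k : ι, B (β i) (β k * α c) = B (β k) (α c * β i) := by
      intro i k
      rw [hsymm (β i) (β k * α c), hInv (β k) (α c) (β i)]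
    calc (∑ k, B (β a * (α k * v)) (YB6.pP B α β (β k * α c)))
        = ∑ k, ∑ i, B (α i) (β a * (α k * v)) * B (β i) (β k * α c) :=
          Finset.sum_congr rfl fun k _ => (hContr _ _).symm
      _ = ∑ k, ∑ i, B (α k) (v * (α i * β a)) * B (β k) (α c * β i) :=
          Finset.sum_congr rfl fun k _ => Finset.sum_congr rfl fun i _ => by rw [l2, l3]
      _ = ∑ i, ∑ k, B (α k) (v * (α i * β a)) * B (β k) (α c * β i) := Finset.sum_comm
      _ = ∑ i, B (v * (α i * β a)) (YB6.pP B α β (α c * β i)) :=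
          Finset.sum_congr rfl fun i _ => hContr _ _
      _ = ∑ k, B (v * α k * β a) (YB6.pP B α β (α c * β k)) :=
          Finset.sum_congr rfl fun k _ => by rw [mul_assoc]
  -- the key middle-factor identity
  have key : ∀ a c : ι,
      (∑ i, ∑ j, ∑ k, (B (α i * α j) (β a) * B (α c) (β j * β k)) • (β i * α k))
        = ∑ i, ∑ j, ∑ k, (B (α j * α k) (β a) * B (α c) (β i * β j)) • (α i * β k) := by
    intro a c
    have hscalar : ∀ v : M,
        (∑ i, ∑ j, ∑ k, B (α i * α j) (β a) * B (α c) (β j * β k) * B (β i * α k) v)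
          = ∑ i, ∑ j, ∑ k, B (α j * α k) (β a) * B (α c) (β i * β j) * B (α i * β k) v := by
      intro v
      have redL : (∑ i, ∑ j, ∑ k, B (α i * α j) (β a) * B (α c) (β j * β k) * B (β i * α k) v)
          = ∑ k, B (β a * YB6.pP B α β (α k * v)) (YB6.pP B α β (β k * α c)) := by
        have e1 : ∀ i j k : ι, B (α i * α j) (β a) * B (α c) (β j * β k) * B (β i * α k) v
            = B (β j) (β k * α c) * (B (α i) (α j * β a) * B (β i) (α k * v)) := by
          intro i j k
          rw [hInv (α i) (α j) (β a), hInv (β i) (α k) v, hsymm (α c) (β j * β k),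
            hInv (β j) (β k) (α c)]
          ring
        calc (∑ i, ∑ j, ∑ k, B (α i * α j) (β a) * B (α c) (β j * β k) * B (β i * α k) v)
            = ∑ i, ∑ j, ∑ k, B (β j) (β k * α c) * (B (α i) (α j * β a) * B (β i) (α k * v)) :=
              Finset.sum_congr rfl fun i _ => Finset.sum_congr rfl fun j _ =>
                Finset.sum_congr rfl fun k _ => e1 i j k
          _ = ∑ j, ∑ k, ∑ i, B (β j) (β k * α c) * (B (α i) (α j * β a) * B (β i) (α k * v)) :=
              YB6.sum_rot3 _
          _ = ∑ j, ∑ k, B (β j) (β k * α c) * B (α j * β a) (YB6.pP B α β (α k * v)) := by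
              refine Finset.sum_congr rfl fun j _ => Finset.sum_congr rfl fun k _ => ?_
              rw [← Finset.mul_sum, hContr (α j * β a) (α k * v)]
          _ = ∑ k, ∑ j, B (α j) (β a * YB6.pP B α β (α k * v)) * B (β j) (β k * α c) := by
              rw [Finset.sum_comm]
              refine Finset.sum_congr rfl fun k _ => Finset.sum_congr rfl fun j _ => ?_
              rw [hInv (α j) (β a) (YB6.pP B α β (α k * v)), mul_comm]
          _ = ∑ k, B (β a * YB6.pP B α β (α k * v)) (YB6.pP B α β (β k * α c)) :=
              Finset.sum_congr rfl fun k _ => hContr _ _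
      have redR : (∑ i, ∑ j, ∑ k, B (α j * α k) (β a) * B (α c) (β i * β j) * B (α i * β k) v)
          = ∑ k, B (YB6.pP B α β (v * α k) * β a) (YB6.pP B α β (α c * β k)) := by
        have e1 : ∀ i j k : ι, B (α j * α k) (β a) * B (α c) (β i * β j) * B (α i * β k) v
            = B (β j) (α c * β i) * (B (α k) (β a * α j) * B (β k) (v * α i)) := by
          intro i j k
          rw [hcyc (α j) (α k) (β a), hcyc (α i) (β k) v, hsymm (α c) (β i * β j),
            hcyc (β i) (β j) (α c)]
          ring
        calc (∑ i, ∑ j, ∑ k, B (α j * α k) (β a) * B (α c) (β i * β j) * B (α i * β k) v)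
            = ∑ i, ∑ j, ∑ k, B (β j) (α c * β i) * (B (α k) (β a * α j) * B (β k) (v * α i)) :=
              Finset.sum_congr rfl fun i _ => Finset.sum_congr rfl fun j _ =>
                Finset.sum_congr rfl fun k _ => e1 i j k
          _ = ∑ i, ∑ j, B (β j) (α c * β i) * B (β a * α j) (YB6.pP B α β (v * α i)) := by
              refine Finset.sum_congr rfl fun i _ => Finset.sum_congr rfl fun j _ => ?_
              rw [← Finset.mul_sum, hContr (β a * α j) (v * α i)]
          _ = ∑ i, ∑ j, B (α j) (YB6.pP B α β (v * α i) * β a) * B (β j) (α c * β i) := by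
              refine Finset.sum_congr rfl fun i _ => Finset.sum_congr rfl fun j _ => ?_
              rw [hcyc (β a) (α j) (YB6.pP B α β (v * α i)), mul_comm]
          _ = ∑ i, B (YB6.pP B α β (v * α i) * β a) (YB6.pP B α β (α c * β i)) :=
              Finset.sum_congr rfl fun i _ => hContr _ _
      rw [redL, redR]
      -- now the projected identity, by cases on v
      have caseG : ∀ v' : M, (∀ k : ι, YB6.pP B α β (α k * v') = α k * v') →
          (∀ k : ι, YB6.pP B α β (v' * α k) = v' * α k) →
          (∑ k, B (β a * YB6.pP B α β (α k * v')) (YB6.pP B α β (β k * α c)))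
            = ∑ k, B (YB6.pP B α β (v' * α k) * β a) (YB6.pP B α β (α c * β k)) := by
        intro v' h1 h2
        simp only [h1, h2]
        exact hG a c v'
      have caseM : ∀ y, y ∈ Nm →
          (∑ k, B (β a * YB6.pP B α β (α k * y)) (YB6.pP B α β (β k * α c)))
            = ∑ k, B (YB6.pP B α β (y * α k) * β a) (YB6.pP B α β (α c * β k)) := by
        intro y hy
        have hLdec : ∀ k : ι, B (β a * YB6.pP B α β (α k * y)) (YB6.pP B α β (β k * α c))
            = B (β a * (α k * y)) (YB6.pP B α β (β k * α c))
              - B (β a * (α k * y)) (β k * α c)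
              + B (β a * YB6.pP B α β (α k * y)) (β k * α c) := by
          intro k
          set m := α k * y with hm
          set dd := m - YB6.pP B α β m - YB6.pM B α β m with hdd
          have hdD : dd ∈ D := hDec m
          have hnM : YB6.pM B α β m ∈ Nm := hPMmem m
          have e : β a * YB6.pP B α β m = β a * m - β a * YB6.pM B α β m - β a * dd := by
            rw [← mul_sub, ← mul_sub]
            congr 1
            rw [hdd]; abel
          have o1 : B (β a * YB6.pM B α β m) (YB6.pP B α β (β k * α c))
              = B (β a * YB6.pM B α β m) (β k * α c) :=
            hOrthM _ (mul_mem (memMβ a) hnM) _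
          have o2 : B (β a * dd) (YB6.pP B α β (β k * α c)) = B (β a * dd) (β k * α c) :=
            hOrthM _ (hT.bimodMr dd hdD (β a) (memMβ a)) _
          have expand : ∀ W, B (β a * YB6.pP B α β m) W
              = B (β a * m) W - B (β a * YB6.pM B α β m) W - B (β a * dd) W := by
            intro W
            rw [e, YB6.B_sub_left, YB6.B_sub_left]
          rw [expand, o1, o2]
          linear_combination - expand (β k * α c)
        have hRdec : ∀ k : ι, B (YB6.pP B α β (y * α k) * β a) (YB6.pP B α β (α c * β k))
            = B (y * α k * β a) (YB6.pP B α β (α c * β k))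
              - B (y * α k * β a) (α c * β k)
              + B (YB6.pP B α β (y * α k) * β a) (α c * β k) := by
          intro k
          set m := y * α k with hm
          set dd := m - YB6.pP B α β m - YB6.pM B α β m with hdd
          have hdD : dd ∈ D := hDec m
          have hnM : YB6.pM B α β m ∈ Nm := hPMmem m
          have e : YB6.pP B α β m * β a = m * β a - YB6.pM B α β m * β a - dd * β a := by
            rw [← sub_mul, ← sub_mul]
            congr 1
            rw [hdd]; abel
          have o1 : B (YB6.pM B α β m * β a) (YB6.pP B α β (α c * β k))
              = B (YB6.pM B α β m * β a) (α c * β k) :=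
            hOrthM _ (mul_mem hnM (memMβ a)) _
          have o2 : B (dd * β a) (YB6.pP B α β (α c * β k)) = B (dd * β a) (α c * β k) :=
            hOrthM _ (hT.bimodMl dd hdD (β a) (memMβ a)) _
          have expand : ∀ W, B (YB6.pP B α β m * β a) W
              = B (m * β a) W - B (YB6.pM B α β m * β a) W - B (dd * β a) W := by
            intro W
            rw [e, YB6.B_sub_left, YB6.B_sub_left]
          rw [expand, o1, o2]
          linear_combination - expand (α c * β k)
        have eqA23L : (∑ k, B (β a * YB6.pP B α β (α k * y)) (β k * α c))
            = ∑ k, B (β a * (α k * y)) (β k * α c) := by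
          calc (∑ k, B (β a * YB6.pP B α β (α k * y)) (β k * α c))
              = ∑ k, ∑ s, B (α k * y) (β s) * B (β a * α s) (β k * α c) :=
                Finset.sum_congr rfl fun k _ => YB6.B_mul_pP B α β _ _ _
            _ = ∑ k, ∑ s, B (α k) (y * β s) * B (β k) (α c * (β a * α s)) := by
                refine Finset.sum_congr rfl fun k _ => Finset.sum_congr rfl fun s _ => ?_
                rw [hInv (α k) y (β s), hsymm (β a * α s) (β k * α c),
                  hInv (β k) (α c) (β a * α s)]
            _ = ∑ s, ∑ k, B (α k) (y * β s) * B (β k) (α c * (β a * α s)) := Finset.sum_comm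
            _ = ∑ s, B (y * β s) (YB6.pP B α β (α c * (β a * α s))) :=
                Finset.sum_congr rfl fun s _ => hContr _ _
            _ = ∑ s, B (y * β s) (α c * (β a * α s)) :=
                Finset.sum_congr rfl fun s _ => hOrthM _ (mul_mem hy (memMβ s)) _
            _ = ∑ k, B (β a * (α k * y)) (β k * α c) := by
                refine Finset.sum_congr rfl fun k _ => ?_
                rw [hInv y (β k) (α c * (β a * α k)), hcyc (β a) (α k * y) (β k * α c),
                  hcyc (α k) y (β k * α c * β a)]
                congr 1
                simp only [mul_assoc]
        have eqA23R : (∑ k, B (YB6.pP B α β (y * α k) * β a) (α c * β k))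
            = ∑ k, B (y * α k * β a) (α c * β k) := by
          calc (∑ k, B (YB6.pP B α β (y * α k) * β a) (α c * β k))
              = ∑ k, ∑ s, B (y * α k) (β s) * B (α s * β a) (α c * β k) :=
                Finset.sum_congr rfl fun k _ => YB6.B_pP_mul B α β _ _ _
            _ = ∑ k, ∑ s, B (α k) (β s * y) * B (β k) (α s * β a * α c) := by
                refine Finset.sum_congr rfl fun k _ => Finset.sum_congr rfl fun s _ => ?_
                rw [hcyc y (α k) (β s), hsymm (α s * β a) (α c * β k),
                  hcyc (α c) (β k) (α s * β a)]
            _ = ∑ s, ∑ k, B (α k) (β s * y) * B (β k) (α s * β a * α c) := Finset.sum_comm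
            _ = ∑ s, B (β s * y) (YB6.pP B α β (α s * β a * α c)) :=
                Finset.sum_congr rfl fun s _ => hContr _ _
            _ = ∑ s, B (β s * y) (α s * β a * α c) :=
                Finset.sum_congr rfl fun s _ => hOrthM _ (mul_mem (memMβ s) hy) _
            _ = ∑ k, B (y * α k * β a) (α c * β k) := by
                refine Finset.sum_congr rfl fun k _ => ?_
                rw [hcyc (β k) y (α k * β a * α c), hInv (y * α k) (β a) (α c * β k),
                  hInv y (α k) (β a * (α c * β k))]
                congr 1
                simp only [mul_assoc]
        calc (∑ k, B (β a * YB6.pP B α β (α k * y)) (YB6.pP B α β (β k * α c)))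
            = ∑ k, (B (β a * (α k * y)) (YB6.pP B α β (β k * α c))
                - B (β a * (α k * y)) (β k * α c)
                + B (β a * YB6.pP B α β (α k * y)) (β k * α c)) :=
              Finset.sum_congr rfl fun k _ => hLdec k
          _ = (∑ k, B (β a * (α k * y)) (YB6.pP B α β (β k * α c)))
                - (∑ k, B (β a * (α k * y)) (β k * α c))
                + ∑ k, B (β a * YB6.pP B α β (α k * y)) (β k * α c) := by
              rw [Finset.sum_add_distrib, Finset.sum_sub_distrib]
          _ = ∑ k, B (β a * (α k * y)) (YB6.pP B α β (β k * α c)) := by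
              rw [eqA23L]; ring
          _ = ∑ k, B (y * α k * β a) (YB6.pP B α β (α c * β k)) := hG a c y
          _ = (∑ k, B (y * α k * β a) (YB6.pP B α β (α c * β k)))
                - (∑ k, B (y * α k * β a) (α c * β k))
                + ∑ k, B (YB6.pP B α β (y * α k) * β a) (α c * β k) := by
              rw [eqA23R]; ring
          _ = ∑ k, (B (y * α k * β a) (YB6.pP B α β (α c * β k))
                - B (y * α k * β a) (α c * β k)
                + B (YB6.pP B α β (y * α k) * β a) (α c * β k)) := by
              rw [Finset.sum_add_distrib, Finset.sum_sub_distrib]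
          _ = ∑ k, B (YB6.pP B α β (y * α k) * β a) (YB6.pP B α β (α c * β k)) :=
              Finset.sum_congr rfl fun k _ => (hRdec k).symm
      -- decompose v
      have hv : v ∈ NonUnitalSubalgebra.toSubmodule Nm ⊔ NonUnitalSubalgebra.toSubmodule D ⊔
          NonUnitalSubalgebra.toSubmodule Np := by
        rw [hT.sum_top]; exact Submodule.mem_top
      obtain ⟨u, hu, x, hx, rfl⟩ := Submodule.mem_sup.mp hv
      obtain ⟨yy, hyy, dd, hdd, rfl⟩ := Submodule.mem_sup.mp hu
      rw [NonUnitalSubalgebra.mem_toSubmodule] at hx hyy hdd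
      have caseD' := caseG dd (fun k => hExpP _ (hT.bimodPr dd hdd (α k) (memPα k)))
        (fun k => hExpP _ (hT.bimodPl dd hdd (α k) (memPα k)))
      have caseP' := caseG x (fun k => hExpP _ (mul_mem (memPα k) hx))
        (fun k => hExpP _ (mul_mem hx (memPα k)))
      have caseM' := caseM yy hyy
      have distl : ∀ k : ι, B (β a * YB6.pP B α β (α k * (yy + dd + x)))
            (YB6.pP B α β (β k * α c))
          = B (β a * YB6.pP B α β (α k * yy)) (YB6.pP B α β (β k * α c))
            + B (β a * YB6.pP B α β (α k * dd)) (YB6.pP B α β (β k * α c))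
            + B (β a * YB6.pP B α β (α k * x)) (YB6.pP B α β (β k * α c)) := by
        intro k
        rw [mul_add, mul_add, YB6.pP_add, YB6.pP_add, mul_add, mul_add,
          YB6.B_add_left, YB6.B_add_left]
      have distr : ∀ k : ι, B (YB6.pP B α β ((yy + dd + x) * α k) * β a)
            (YB6.pP B α β (α c * β k))
          = B (YB6.pP B α β (yy * α k) * β a) (YB6.pP B α β (α c * β k))
            + B (YB6.pP B α β (dd * α k) * β a) (YB6.pP B α β (α c * β k))
            + B (YB6.pP B α β (x * α k) * β a) (YB6.pP B α β (α c * β k)) := by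
        intro k
        rw [add_mul, add_mul, YB6.pP_add, YB6.pP_add, add_mul, add_mul,
          YB6.B_add_left, YB6.B_add_left]
      calc (∑ k, B (β a * YB6.pP B α β (α k * (yy + dd + x))) (YB6.pP B α β (β k * α c)))
          = (∑ k, B (β a * YB6.pP B α β (α k * yy)) (YB6.pP B α β (β k * α c)))
              + (∑ k, B (β a * YB6.pP B α β (α k * dd)) (YB6.pP B α β (β k * α c)))
              + ∑ k, B (β a * YB6.pP B α β (α k * x)) (YB6.pP B α β (β k * α c)) := by
            simp only [distl, Finset.sum_add_distrib]
        _ = (∑ k, B (YB6.pP B α β (yy * α k) * β a) (YB6.pP B α β (α c * β k)))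
              + (∑ k, B (YB6.pP B α β (dd * α k) * β a) (YB6.pP B α β (α c * β k)))
              + ∑ k, B (YB6.pP B α β (x * α k) * β a) (YB6.pP B α β (α c * β k)) := by
            rw [caseM', caseD', caseP']
        _ = ∑ k, B (YB6.pP B α β ((yy + dd + x) * α k) * β a) (YB6.pP B α β (α c * β k)) := by
            simp only [distr, Finset.sum_add_distrib]
    rw [← sub_eq_zero]
    refine hnd _ fun v => ?_
    rw [map_sub, LinearMap.sub_apply, sub_eq_zero]
    simpa only [map_sum, LinearMap.sum_apply, map_smul, LinearMap.smul_apply, smul_eq_mul]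
      using hscalar v
  -- tensor reshuffling
  have reshuffle : ∀ (X Z mm : ι → ι → ι → M),
      (∀ i j k, X i j k ∈ Np) → (∀ i j k, Z i j k ∈ Nm) →
      (∑ i, ∑ j, ∑ k, (X i j k ⊗ₜ[ℂ] mm i j k) ⊗ₜ[ℂ] Z i j k)
        = ∑ a, ∑ c, (α a ⊗ₜ[ℂ]
            (∑ i, ∑ j, ∑ k, (B (X i j k) (β a) * B (α c) (Z i j k)) • mm i j k)) ⊗ₜ[ℂ] β c := by
    intro X Z mm hX hZ
    have perm : ∀ i j k, (X i j k ⊗ₜ[ℂ] mm i j k) ⊗ₜ[ℂ] Z i j k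
        = ∑ a, ∑ c, (B (X i j k) (β a) * B (α c) (Z i j k)) •
            ((α a ⊗ₜ[ℂ] mm i j k) ⊗ₜ[ℂ] β c) := by
      intro i j k
      conv_lhs => rw [← hExpP _ (hX i j k), ← hExpM _ (hZ i j k), YB6.pP_def, YB6.pM_def]
      rw [TensorProduct.sum_tmul, TensorProduct.sum_tmul]
      refine Finset.sum_congr rfl fun a _ => ?_
      rw [TensorProduct.tmul_sum]
      refine Finset.sum_congr rfl fun c _ => ?_
      rw [TensorProduct.tmul_smul, ← TensorProduct.smul_tmul', ← TensorProduct.smul_tmul',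
        smul_smul, mul_comm]
    have perm2 : ∀ a c, (α a ⊗ₜ[ℂ]
          (∑ i, ∑ j, ∑ k, (B (X i j k) (β a) * B (α c) (Z i j k)) • mm i j k)) ⊗ₜ[ℂ] β c
        = ∑ i, ∑ j, ∑ k, (B (X i j k) (β a) * B (α c) (Z i j k)) •
            ((α a ⊗ₜ[ℂ] mm i j k) ⊗ₜ[ℂ] β c) := by
      intro a c
      simp only [TensorProduct.tmul_sum, TensorProduct.sum_tmul, TensorProduct.tmul_smul,
        TensorProduct.smul_tmul']
    simp only [perm, perm2]
    exact YB6.sum_pull5 _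
  -- final assembly
  unfold YBE
  have e12 : emb12 M (∑ i, α i ⊗ₜ[ℂ] β i) = ∑ i, (α i ⊗ₜ[ℂ] β i) ⊗ₜ[ℂ] (1 : M) := by
    simp only [emb12, map_sum, Algebra.TensorProduct.includeLeft_apply]
  have e13 : emb13 M (∑ i, α i ⊗ₜ[ℂ] β i) = ∑ i, (α i ⊗ₜ[ℂ] (1 : M)) ⊗ₜ[ℂ] β i := by
    simp only [emb13, map_sum, Algebra.TensorProduct.map_tmul,
      Algebra.TensorProduct.includeLeft_apply, AlgHom.coe_id, id_eq]
  have e23 : emb23 M (∑ i, α i ⊗ₜ[ℂ] β i) = ∑ i, ((1 : M) ⊗ₜ[ℂ] α i) ⊗ₜ[ℂ] β i := by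
    simp only [emb23, map_sum, Algebra.TensorProduct.map_tmul,
      Algebra.TensorProduct.includeRight_apply, AlgHom.coe_id, id_eq]
  rw [e12, e13, e23]
  calc (∑ i, (α i ⊗ₜ[ℂ] β i) ⊗ₜ[ℂ] (1 : M)) * (∑ i, (α i ⊗ₜ[ℂ] (1 : M)) ⊗ₜ[ℂ] β i) *
        ∑ i, ((1 : M) ⊗ₜ[ℂ] α i) ⊗ₜ[ℂ] β i
      = ∑ i, ∑ j, ∑ k, ((α i * α j) ⊗ₜ[ℂ] (β i * α k)) ⊗ₜ[ℂ] (β j * β k) := by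
        simp only [Finset.sum_mul, Finset.mul_sum, Algebra.TensorProduct.tmul_mul_tmul,
          mul_one, one_mul]
        exact (YB6.sum_rev3 fun i j k => ((α i * α j) ⊗ₜ[ℂ] (β i * α k)) ⊗ₜ[ℂ] (β j * β k)).symm
    _ = ∑ a, ∑ c, (α a ⊗ₜ[ℂ]
          (∑ i, ∑ j, ∑ k, (B (α i * α j) (β a) * B (α c) (β j * β k)) • (β i * α k))) ⊗ₜ[ℂ] β c :=
        reshuffle (fun i j _ => α i * α j) (fun _ j k => β j * β k) (fun i _ k => β i * α k)
          (fun i j _ => mul_mem (memPα i) (memPα j)) (fun _ j k => mul_mem (memMβ j) (memMβ k))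
    _ = ∑ a, ∑ c, (α a ⊗ₜ[ℂ]
          (∑ i, ∑ j, ∑ k, (B (α j * α k) (β a) * B (α c) (β i * β j)) • (α i * β k))) ⊗ₜ[ℂ] β c := by
        refine Finset.sum_congr rfl fun a _ => Finset.sum_congr rfl fun c _ => ?_
        rw [key a c]
    _ = ∑ i, ∑ j, ∑ k, ((α j * α k) ⊗ₜ[ℂ] (α i * β k)) ⊗ₜ[ℂ] (β i * β j) :=
        (reshuffle (fun _ j k => α j * α k) (fun i j _ => β i * β j) (fun i _ k => α i * β k)
          (fun _ j k => mul_mem (memPα j) (memPα k)) (fun i j _ => mul_mem (memMβ i) (memMβ j))).symm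
    _ = (∑ i, ((1 : M) ⊗ₜ[ℂ] α i) ⊗ₜ[ℂ] β i) * (∑ i, (α i ⊗ₜ[ℂ] (1 : M)) ⊗ₜ[ℂ] β i) *
          ∑ i, (α i ⊗ₜ[ℂ] β i) ⊗ₜ[ℂ] (1 : M) := by
        simp only [Finset.sum_mul, Finset.mul_sum, Algebra.TensorProduct.tmul_mul_tmul,
          mul_one, one_mul]
        exact YB6.sum_rev3 fun i j k => ((α j * α k) ⊗ₜ[ℂ] (α i * β k)) ⊗ₜ[ℂ] (β i * β j)
end
end

section
/- Let (M, N₊, N₋, D) be an associative triple over ℂ with canonical element Q ∈ N₊ ⊗ N₋, and let σ_D ∈ D ⊗ D be the canonical element of the restriction of B to D. Suppose S ∈ D ⊗ D satisfies the Yang–Baxter equation in M ⊗ M ⊗ M and the Hecke condition S₂₁ * S − σ_D * S = λ² (1 ⊗ 1) for some λ ∈ ℂ, λ ≠ 0. Then R = S + Q satisfies the Yang–Baxter equation R₁₂ * R₁₃ * R₂₃ = R₂₃ * R₁₃ * R₁₂ in M ⊗ M ⊗ M. -/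
open scoped TensorProduct

noncomputable section

variable (M : Type) [Ring M] [Algebra ℂ M]

section Helpers

variable {M}

lemma emb12_tmul (x y : M) : emb12 M (x ⊗ₜ[ℂ] y) = (x ⊗ₜ[ℂ] y) ⊗ₜ[ℂ] (1 : M) := rfl

lemma emb12_apply (X : M ⊗[ℂ] M) : emb12 M X = X ⊗ₜ[ℂ] (1 : M) := rfl

lemma emb13_tmul (x y : M) :
    emb13 M (x ⊗ₜ[ℂ] y) = (x ⊗ₜ[ℂ] (1 : M)) ⊗ₜ[ℂ] y := rfl

lemma emb23_tmul (x y : M) :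
    emb23 M (x ⊗ₜ[ℂ] y) = ((1 : M) ⊗ₜ[ℂ] x) ⊗ₜ[ℂ] y := rfl

lemma swapT_tmul (x y : M) : swapT M (x ⊗ₜ[ℂ] y) = y ⊗ₜ[ℂ] x := rfl

lemma swapT_mul (X Y : M ⊗[ℂ] M) : swapT M (X * Y) = swapT M X * swapT M Y :=
  map_mul (Algebra.TensorProduct.comm ℂ M M).toAlgHom X Y

lemma swapT_add (X Y : M ⊗[ℂ] M) : swapT M (X + Y) = swapT M X + swapT M Y :=
  map_add _ X Y

lemma swapT_swapT (X : M ⊗[ℂ] M) : swapT M (swapT M X) = X := by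
  induction X using TensorProduct.induction_on with
  | zero => simp [swapT]
  | tmul x y => rfl
  | add x y hx hy => rw [swapT_add, swapT_add, hx, hy]

lemma comm12 (m : M) (X : M ⊗[ℂ] M) :
    emb12 M X * (((1:M) ⊗ₜ[ℂ] (1:M)) ⊗ₜ[ℂ] m) = (((1:M) ⊗ₜ[ℂ] (1:M)) ⊗ₜ[ℂ] m) * emb12 M X := by
  induction X using TensorProduct.induction_on with
  | zero => simp
  | tmul x y =>
      rw [emb12_tmul, Algebra.TensorProduct.tmul_mul_tmul,
        Algebra.TensorProduct.tmul_mul_tmul, Algebra.TensorProduct.tmul_mul_tmul,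
        Algebra.TensorProduct.tmul_mul_tmul]
      simp
  | add x y hx hy => rw [map_add, add_mul, mul_add, hx, hy]

lemma comm13 (m : M) (X : M ⊗[ℂ] M) :
    emb13 M X * (((1:M) ⊗ₜ[ℂ] m) ⊗ₜ[ℂ] (1:M)) = (((1:M) ⊗ₜ[ℂ] m) ⊗ₜ[ℂ] (1:M)) * emb13 M X := by
  induction X using TensorProduct.induction_on with
  | zero => simp
  | tmul x y =>
      rw [emb13_tmul, Algebra.TensorProduct.tmul_mul_tmul,
        Algebra.TensorProduct.tmul_mul_tmul, Algebra.TensorProduct.tmul_mul_tmul,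
        Algebra.TensorProduct.tmul_mul_tmul]
      simp
  | add x y hx hy => rw [map_add, add_mul, mul_add, hx, hy]

lemma comm23 (m : M) (X : M ⊗[ℂ] M) :
    emb23 M X * ((m ⊗ₜ[ℂ] (1:M)) ⊗ₜ[ℂ] (1:M)) = ((m ⊗ₜ[ℂ] (1:M)) ⊗ₜ[ℂ] (1:M)) * emb23 M X := by
  induction X using TensorProduct.induction_on with
  | zero => simp
  | tmul x y =>
      rw [emb23_tmul, Algebra.TensorProduct.tmul_mul_tmul,
        Algebra.TensorProduct.tmul_mul_tmul, Algebra.TensorProduct.tmul_mul_tmul,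
        Algebra.TensorProduct.tmul_mul_tmul]
      simp
  | add x y hx hy => rw [map_add, add_mul, mul_add, hx, hy]


lemma swapT_sum {γ : Type} (s : Finset γ) (f : γ → M ⊗[ℂ] M) :
    swapT M (∑ i ∈ s, f i) = ∑ i ∈ s, swapT M (f i) :=
  map_sum (Algebra.TensorProduct.comm ℂ M M) f s

lemma swapT_zero : swapT M (0 : M ⊗[ℂ] M) = 0 :=
  map_zero (Algebra.TensorProduct.comm ℂ M M)

lemma swapT_smul (c : ℂ) (X : M ⊗[ℂ] M) : swapT M (c • X) = c • swapT M X :=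
  map_smul (Algebra.TensorProduct.comm ℂ M M).toLinearMap c X

end Helpers

section SumHelpers

variable {A B C X : Type} [Fintype A] [Fintype B] [Fintype C] [AddCommMonoid X]

lemma rot1 (G : A → B → C → X) :
    ∑ a, ∑ b, ∑ c, G a b c = ∑ b, ∑ c, ∑ a, G a b c := by
  rw [Finset.sum_comm]
  exact Finset.sum_congr rfl fun b _ => Finset.sum_comm

lemma rot2 (G : A → B → C → X) :
    ∑ a, ∑ b, ∑ c, G a b c = ∑ c, ∑ a, ∑ b, G a b c := by
  have h1 : ∑ a, ∑ b, ∑ c, G a b c = ∑ a, ∑ c, ∑ b, G a b c :=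
    Finset.sum_congr rfl fun a _ => Finset.sum_comm
  rw [h1]
  exact Finset.sum_comm

end SumHelpers
set_option maxHeartbeats 4000000

/-- Theorem 1 (second part): if `S ∈ D ⊗ D` solves YBE and satisfies the Hecke
condition `S₂₁ S − σ_D S = λ²`, then `R = S + Q` solves YBE. -/
theorem stmt7
    [FiniteDimensional ℂ M]
    (B : M →ₗ[ℂ] M →ₗ[ℂ] ℂ)
    (hnd : ∀ a : M, (∀ b : M, B a b = 0) → a = 0)
    (hsymm : ∀ a b : M, B a b = B b a)
    (hcyc : ∀ a b c : M, B (a * b) c = B b (c * a))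
    (Np Nm D : NonUnitalSubalgebra ℂ M)
    (hT : AssocTriple M B Np Nm D)
    -- the canonical element Q = Σ α i ⊗ β i of the pairing between N₊ and N₋
    (ι : Type) [Fintype ι] [DecidableEq ι] (α β : ι → M)
    (hQ : DualPair M B (NonUnitalSubalgebra.toSubmodule Np)
      (NonUnitalSubalgebra.toSubmodule Nm) α β)
    -- the canonical element σ_D = Σ δ j ⊗ δ' j of the restriction of B to D
    (κ : Type) [Fintype κ] [DecidableEq κ] (δ δ' : κ → M)
    (hD : DualPair M B (NonUnitalSubalgebra.toSubmodule D)
      (NonUnitalSubalgebra.toSubmodule D) δ δ')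
    -- S ∈ D ⊗ D solves YBE and satisfies the Hecke condition
    (S : M ⊗[ℂ] M)
    (hS : inTensor M (NonUnitalSubalgebra.toSubmodule D) S)
    (hSYBE : YBE M S)
    (lam : ℂ) (hlam : lam ≠ 0)
    (hHecke : swapT M S * S - (∑ j, δ j ⊗ₜ[ℂ] δ' j) * S = lam ^ 2 • (1 : M ⊗[ℂ] M)) :
    YBE M (S + ∑ i, α i ⊗ₜ[ℂ] β i) := by  classical
  have hαm : ∀ i, α i ∈ Np := fun i => hQ.memP i
  have hβm : ∀ i, β i ∈ Nm := fun i => hQ.memM i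
  have hδm : ∀ l, δ l ∈ D := fun l => hD.memP l
  have hδ'm : ∀ l, δ' l ∈ D := fun l => hD.memM l
  have hassoc : ∀ a b c : M, B (a * b) c = B a (b * c) := by
    intro a b c
    rw [hcyc a b c, hsymm b (c * a), hcyc c a b]
  -- dual pairings
  have dαβ : ∀ i k, B (α i) (β k) = if i = k then 1 else 0 := hQ.dual
  have dβα : ∀ i k, B (β i) (α k) = if i = k then 1 else 0 := by
    intro i k; rw [hsymm, hQ.dual k i]; simp [eq_comm]
  have dδδ' : ∀ l n, B (δ l) (δ' n) = if l = n then 1 else 0 := hD.dual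
  have dδ'δ : ∀ l n, B (δ' l) (δ n) = if l = n then 1 else 0 := by
    intro l n; rw [hsymm, hD.dual n l]; simp [eq_comm]
  -- vanishing pairings
  have zαα : ∀ i k, B (α i) (α k) = 0 := fun i k => hT.isoP _ (hαm i) _ (hαm k)
  have zββ : ∀ i k, B (β i) (β k) = 0 := fun i k => hT.isoM _ (hβm i) _ (hβm k)
  have zαδ : ∀ i l, B (α i) (δ l) = 0 := fun i l => hT.orthoPr _ (hδm l) _ (hαm i)
  have zαδ' : ∀ i l, B (α i) (δ' l) = 0 := fun i l => hT.orthoPr _ (hδ'm l) _ (hαm i)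
  have zδα : ∀ l i, B (δ l) (α i) = 0 := fun l i => hT.orthoPl _ (hδm l) _ (hαm i)
  have zδ'α : ∀ l i, B (δ' l) (α i) = 0 := fun l i => hT.orthoPl _ (hδ'm l) _ (hαm i)
  have zβδ : ∀ i l, B (β i) (δ l) = 0 := fun i l => hT.orthoMr _ (hδm l) _ (hβm i)
  have zβδ' : ∀ i l, B (β i) (δ' l) = 0 := fun i l => hT.orthoMr _ (hδ'm l) _ (hβm i)
  have zδβ : ∀ l i, B (δ l) (β i) = 0 := fun l i => hT.orthoMl _ (hδm l) _ (hβm i)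
  have zδ'β : ∀ l i, B (δ' l) (β i) = 0 := fun l i => hT.orthoMl _ (hδ'm l) _ (hβm i)
  -- nondegeneracy test
  have testgen : ∀ γ : κ → M, Submodule.span ℂ (Set.range γ) = NonUnitalSubalgebra.toSubmodule D →
      ∀ z : M, (∀ k, B z (α k) = 0) → (∀ l, B z (γ l) = 0) → (∀ k, B z (β k) = 0) → z = 0 := by
    intro γ hγ z hzα hzγ hzβ
    apply hnd z
    have key : ∀ {τ : Type} (f : τ → M), (∀ j, B z (f j) = 0) →
        ∀ w ∈ Submodule.span ℂ (Set.range f), B z w = 0 := by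
      intro τ f hf w hw
      induction hw using Submodule.span_induction with
      | mem w hw => obtain ⟨k, rfl⟩ := hw; exact hf k
      | zero => simp
      | add a b _ _ ha hb => rw [map_add, ha, hb, add_zero]
      | smul c a _ ha => rw [map_smul, ha, smul_zero]
    intro b
    have hb : b ∈ (⊤ : Submodule ℂ M) := Submodule.mem_top
    rw [← hT.sum_top] at hb
    obtain ⟨u, hu, x, hx, rfl⟩ := Submodule.mem_sup.mp hb
    obtain ⟨y, hy, d, hd, rfl⟩ := Submodule.mem_sup.mp hu
    have h1 : B z y = 0 := key β hzβ y (by rw [hQ.spanM]; exact hy)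
    have h2 : B z d = 0 := key γ hzγ d (by rw [hγ]; exact hd)
    have h3 : B z x = 0 := key α hzα x (by rw [hQ.spanP]; exact hx)
    rw [map_add, map_add, h1, h2, h3]; simp
    -- resolution of the identity, first form
  have dag : ∀ m : M,
      m = (∑ i, B (α i) m • β i) + ((∑ l, B (δ l) m • δ' l) + ∑ i, B m (β i) • α i) := by
    intro m
    rw [← sub_eq_zero]
    refine testgen δ hD.spanP _ ?_ ?_ ?_
    · intro k
      simp only [map_sub, map_add, map_sum, map_smul, LinearMap.sub_apply, LinearMap.add_apply,
        LinearMap.sum_apply, LinearMap.smul_apply, smul_eq_mul, dβα, zδ'α, zαα,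
        mul_ite, mul_one, mul_zero, Finset.sum_ite_eq', Finset.mem_univ, if_true,
        Finset.sum_const_zero, add_zero, zero_add]
      rw [hsymm]; ring
    · intro l
      simp only [map_sub, map_add, map_sum, map_smul, LinearMap.sub_apply, LinearMap.add_apply,
        LinearMap.sum_apply, LinearMap.smul_apply, smul_eq_mul, zβδ, dδ'δ, zαδ,
        mul_ite, mul_one, mul_zero, Finset.sum_ite_eq', Finset.mem_univ, if_true,
        Finset.sum_const_zero, add_zero, zero_add]
      rw [hsymm]; ring
    · intro k
      simp only [map_sub, map_add, map_sum, map_smul, LinearMap.sub_apply, LinearMap.add_apply,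
        LinearMap.sum_apply, LinearMap.smul_apply, smul_eq_mul, zββ, zδ'β, dαβ,
        mul_ite, mul_one, mul_zero, Finset.sum_ite_eq', Finset.mem_univ, if_true,
        Finset.sum_const_zero, add_zero, zero_add]
      ring
  -- resolution of the identity, second form
  have dag' : ∀ m : M,
      m = (∑ i, B (α i) m • β i) + ((∑ l, B m (δ' l) • δ l) + ∑ i, B m (β i) • α i) := by
    intro m
    rw [← sub_eq_zero]
    refine testgen δ' hD.spanM _ ?_ ?_ ?_
    · intro k
      simp only [map_sub, map_add, map_sum, map_smul, LinearMap.sub_apply, LinearMap.add_apply,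
        LinearMap.sum_apply, LinearMap.smul_apply, smul_eq_mul, dβα, zδα, zαα,
        mul_ite, mul_one, mul_zero, Finset.sum_ite_eq', Finset.mem_univ, if_true,
        Finset.sum_const_zero, add_zero, zero_add]
      rw [hsymm]; ring
    · intro l
      simp only [map_sub, map_add, map_sum, map_smul, LinearMap.sub_apply, LinearMap.add_apply,
        LinearMap.sum_apply, LinearMap.smul_apply, smul_eq_mul, zβδ', dδδ', zαδ',
        mul_ite, mul_one, mul_zero, Finset.sum_ite_eq', Finset.mem_univ, if_true,
        Finset.sum_const_zero, add_zero, zero_add]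
      ring
    · intro k
      simp only [map_sub, map_add, map_sum, map_smul, LinearMap.sub_apply, LinearMap.add_apply,
        LinearMap.sum_apply, LinearMap.smul_apply, smul_eq_mul, zββ, zδβ, dαβ,
        mul_ite, mul_one, mul_zero, Finset.sum_ite_eq', Finset.mem_univ, if_true,
        Finset.sum_const_zero, add_zero, zero_add]
      ring
    -- expansions on the pieces
  have eNp : ∀ x ∈ Np, x = ∑ i, B x (β i) • α i := by
    intro x hx
    have h := dag x
    have h1 : (∑ i, B (α i) x • β i) = 0 :=
      Finset.sum_eq_zero fun i _ => by rw [hT.isoP _ (hαm i) _ hx, zero_smul]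
    have h2 : (∑ l, B (δ l) x • δ' l) = 0 :=
      Finset.sum_eq_zero fun l _ => by rw [hT.orthoPl _ (hδm l) _ hx, zero_smul]
    rw [h1, h2, zero_add, zero_add] at h
    exact h
  have eNm : ∀ y ∈ Nm, y = ∑ i, B (α i) y • β i := by
    intro y hy
    have h := dag y
    have h2 : (∑ l, B (δ l) y • δ' l) = 0 :=
      Finset.sum_eq_zero fun l _ => by rw [hT.orthoMl _ (hδm l) _ hy, zero_smul]
    have h3 : (∑ i, B y (β i) • α i) = 0 :=
      Finset.sum_eq_zero fun i _ => by rw [hT.isoM _ hy _ (hβm i), zero_smul]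
    rw [h2, h3, zero_add, add_zero] at h
    exact h
  have eD : ∀ d ∈ D, d = ∑ l, B (δ l) d • δ' l := by
    intro d hd
    have h := dag d
    have h1 : (∑ i, B (α i) d • β i) = 0 :=
      Finset.sum_eq_zero fun i _ => by rw [hT.orthoPr _ hd _ (hαm i), zero_smul]
    have h3 : (∑ i, B d (β i) • α i) = 0 :=
      Finset.sum_eq_zero fun i _ => by rw [hT.orthoMl _ hd _ (hβm i), zero_smul]
    rw [h1, h3, zero_add, add_zero] at h
    exact h
  have eD' : ∀ d ∈ D, d = ∑ l, B d (δ' l) • δ l := by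
    intro d hd
    have h := dag' d
    have h1 : (∑ i, B (α i) d • β i) = 0 :=
      Finset.sum_eq_zero fun i _ => by rw [hT.orthoPr _ hd _ (hαm i), zero_smul]
    have h3 : (∑ i, B d (β i) • α i) = 0 :=
      Finset.sum_eq_zero fun i _ => by rw [hT.orthoMl _ hd _ (hβm i), zero_smul]
    rw [h1, h3, zero_add, add_zero] at h
    exact h
    -- the canonical elements
  set Qe : M ⊗[ℂ] M := ∑ i, α i ⊗ₜ[ℂ] β i with hQedef
  set σe : M ⊗[ℂ] M := ∑ l, δ l ⊗ₜ[ℂ] δ' l with hσedef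
  -- moving elements of D across Q
  have E1 : ∀ d ∈ D, (d ⊗ₜ[ℂ] (1:M)) * Qe = Qe * ((1:M) ⊗ₜ[ℂ] d) := by
    intro d hd
    rw [hQedef, Finset.mul_sum, Finset.sum_mul]
    have L : ∀ i, (d ⊗ₜ[ℂ] (1:M)) * (α i ⊗ₜ[ℂ] β i)
        = ∑ k, B (d * α i) (β k) • (α k ⊗ₜ[ℂ] β i) := by
      intro i
      rw [Algebra.TensorProduct.tmul_mul_tmul, one_mul]
      conv_lhs => rw [eNp (d * α i) (hT.bimodPl d hd _ (hαm i))]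
      rw [TensorProduct.sum_tmul]
      exact Finset.sum_congr rfl fun k _ => by rw [TensorProduct.smul_tmul']
    have R : ∀ i, (α i ⊗ₜ[ℂ] β i) * ((1:M) ⊗ₜ[ℂ] d)
        = ∑ k, B (α k) (β i * d) • (α i ⊗ₜ[ℂ] β k) := by
      intro i
      rw [Algebra.TensorProduct.tmul_mul_tmul, mul_one]
      conv_lhs => rw [eNm (β i * d) (hT.bimodMr d hd _ (hβm i))]
      rw [TensorProduct.tmul_sum]
      exact Finset.sum_congr rfl fun k _ => by rw [TensorProduct.tmul_smul]
    rw [Finset.sum_congr rfl fun i _ => L i, Finset.sum_congr rfl fun i _ => R i,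
      Finset.sum_comm]
    exact Finset.sum_congr rfl fun a _ => Finset.sum_congr rfl fun b _ => by rw [hcyc]
  have E2 : ∀ d ∈ D, Qe * (d ⊗ₜ[ℂ] (1:M)) = ((1:M) ⊗ₜ[ℂ] d) * Qe := by
    intro d hd
    rw [hQedef, Finset.mul_sum, Finset.sum_mul]
    have L : ∀ i, (α i ⊗ₜ[ℂ] β i) * (d ⊗ₜ[ℂ] (1:M))
        = ∑ k, B (α i * d) (β k) • (α k ⊗ₜ[ℂ] β i) := by
      intro i
      rw [Algebra.TensorProduct.tmul_mul_tmul, mul_one]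
      conv_lhs => rw [eNp (α i * d) (hT.bimodPr d hd _ (hαm i))]
      rw [TensorProduct.sum_tmul]
      exact Finset.sum_congr rfl fun k _ => by rw [TensorProduct.smul_tmul']
    have R : ∀ i, ((1:M) ⊗ₜ[ℂ] d) * (α i ⊗ₜ[ℂ] β i)
        = ∑ k, B (α k) (d * β i) • (α i ⊗ₜ[ℂ] β k) := by
      intro i
      rw [Algebra.TensorProduct.tmul_mul_tmul, one_mul]
      conv_lhs => rw [eNm (d * β i) (hT.bimodMl d hd _ (hβm i))]
      rw [TensorProduct.tmul_sum]
      exact Finset.sum_congr rfl fun k _ => by rw [TensorProduct.tmul_smul]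
    rw [Finset.sum_congr rfl fun i _ => L i, Finset.sum_congr rfl fun i _ => R i,
      Finset.sum_comm]
    exact Finset.sum_congr rfl fun a _ => Finset.sum_congr rfl fun b _ => by rw [hassoc]
  -- moving elements of D across σ
  have Eσ1 : ∀ d ∈ D, (d ⊗ₜ[ℂ] (1:M)) * σe = σe * ((1:M) ⊗ₜ[ℂ] d) := by
    intro d hd
    rw [hσedef, Finset.mul_sum, Finset.sum_mul]
    have L : ∀ l, (d ⊗ₜ[ℂ] (1:M)) * (δ l ⊗ₜ[ℂ] δ' l)
        = ∑ n, B (d * δ l) (δ' n) • (δ n ⊗ₜ[ℂ] δ' l) := by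
      intro l
      rw [Algebra.TensorProduct.tmul_mul_tmul, one_mul]
      conv_lhs => rw [eD' (d * δ l) (mul_mem hd (hδm l))]
      rw [TensorProduct.sum_tmul]
      exact Finset.sum_congr rfl fun n _ => by rw [TensorProduct.smul_tmul']
    have R : ∀ l, (δ l ⊗ₜ[ℂ] δ' l) * ((1:M) ⊗ₜ[ℂ] d)
        = ∑ n, B (δ n) (δ' l * d) • (δ l ⊗ₜ[ℂ] δ' n) := by
      intro l
      rw [Algebra.TensorProduct.tmul_mul_tmul, mul_one]
      conv_lhs => rw [eD (δ' l * d) (mul_mem (hδ'm l) hd)]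
      rw [TensorProduct.tmul_sum]
      exact Finset.sum_congr rfl fun n _ => by rw [TensorProduct.tmul_smul]
    rw [Finset.sum_congr rfl fun l _ => L l, Finset.sum_congr rfl fun l _ => R l,
      Finset.sum_comm]
    exact Finset.sum_congr rfl fun a _ => Finset.sum_congr rfl fun b _ => by rw [hcyc]
  have Eσ2 : ∀ d ∈ D, σe * (d ⊗ₜ[ℂ] (1:M)) = ((1:M) ⊗ₜ[ℂ] d) * σe := by
    intro d hd
    rw [hσedef, Finset.mul_sum, Finset.sum_mul]
    have L : ∀ l, (δ l ⊗ₜ[ℂ] δ' l) * (d ⊗ₜ[ℂ] (1:M))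
        = ∑ n, B (δ l * d) (δ' n) • (δ n ⊗ₜ[ℂ] δ' l) := by
      intro l
      rw [Algebra.TensorProduct.tmul_mul_tmul, mul_one]
      conv_lhs => rw [eD' (δ l * d) (mul_mem (hδm l) hd)]
      rw [TensorProduct.sum_tmul]
      exact Finset.sum_congr rfl fun n _ => by rw [TensorProduct.smul_tmul']
    have R : ∀ l, ((1:M) ⊗ₜ[ℂ] d) * (δ l ⊗ₜ[ℂ] δ' l)
        = ∑ n, B (δ n) (d * δ' l) • (δ l ⊗ₜ[ℂ] δ' n) := by
      intro l
      rw [Algebra.TensorProduct.tmul_mul_tmul, one_mul]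
      conv_lhs => rw [eD (d * δ' l) (mul_mem hd (hδ'm l))]
      rw [TensorProduct.tmul_sum]
      exact Finset.sum_congr rfl fun n _ => by rw [TensorProduct.tmul_smul]
    rw [Finset.sum_congr rfl fun l _ => L l, Finset.sum_congr rfl fun l _ => R l,
      Finset.sum_comm]
    exact Finset.sum_congr rfl fun a _ => Finset.sum_congr rfl fun b _ => by rw [hassoc]
  -- σ is symmetric
  have σswap : swapT M σe = σe := by
    rw [hσedef, swapT_sum]
    have L : ∀ l, swapT M (δ l ⊗ₜ[ℂ] δ' l)
        = ∑ n, B (δ n) (δ l) • (δ' l ⊗ₜ[ℂ] δ' n) := by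
      intro l
      rw [swapT_tmul]
      conv_lhs => rw [eD (δ l) (hδm l)]
      rw [TensorProduct.tmul_sum]
      exact Finset.sum_congr rfl fun n _ => by rw [TensorProduct.tmul_smul]
    have R : ∀ l, δ l ⊗ₜ[ℂ] δ' l = ∑ n, B (δ n) (δ l) • (δ' n ⊗ₜ[ℂ] δ' l) := by
      intro l
      conv_lhs => rw [eD (δ l) (hδm l)]
      rw [TensorProduct.sum_tmul]
      exact Finset.sum_congr rfl fun n _ => by rw [TensorProduct.smul_tmul']
    rw [Finset.sum_congr rfl fun l _ => L l, Finset.sum_congr rfl fun l _ => R l,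
      Finset.sum_comm]
    exact Finset.sum_congr rfl fun a _ => Finset.sum_congr rfl fun b _ => by rw [hsymm]
    -- membership infrastructure
  have memtmul : ∀ {x y : M}, x ∈ D → y ∈ D →
      inTensor M (NonUnitalSubalgebra.toSubmodule D) (x ⊗ₜ[ℂ] y) := by
    intro x y hx hy
    exact ⟨(⟨x, hx⟩ : NonUnitalSubalgebra.toSubmodule D) ⊗ₜ[ℂ] (⟨y, hy⟩ : _), by
      simp [TensorProduct.map_tmul]⟩
  have memσ : inTensor M (NonUnitalSubalgebra.toSubmodule D) σe := by
    rw [hσedef]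
    exact Submodule.sum_mem _ fun l _ => memtmul (hδm l) (hδ'm l)
  have memswap : ∀ T, inTensor M (NonUnitalSubalgebra.toSubmodule D) T →
      inTensor M (NonUnitalSubalgebra.toSubmodule D) (swapT M T) := by
    rintro T ⟨t, rfl⟩
    induction t using TensorProduct.induction_on with
    | zero => rw [map_zero, swapT_zero]; exact Submodule.zero_mem _
    | tmul x y =>
        rw [TensorProduct.map_tmul, Submodule.subtype_apply, Submodule.subtype_apply,
          swapT_tmul]
        exact memtmul y.2 x.2
    | add u v hu hv =>
        rw [map_add, swapT_add]
        exact Submodule.add_mem _ hu hv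
  have memmul : ∀ T T', inTensor M (NonUnitalSubalgebra.toSubmodule D) T →
      inTensor M (NonUnitalSubalgebra.toSubmodule D) T' →
      inTensor M (NonUnitalSubalgebra.toSubmodule D) (T * T') := by
    rintro T T' ⟨t, rfl⟩ ⟨t', rfl⟩
    induction t using TensorProduct.induction_on with
    | zero => rw [map_zero, zero_mul]; exact Submodule.zero_mem _
    | tmul x y =>
        induction t' using TensorProduct.induction_on with
        | zero => rw [map_zero, mul_zero]; exact Submodule.zero_mem _
        | tmul u v =>
            rw [TensorProduct.map_tmul, TensorProduct.map_tmul]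
            simp only [Submodule.subtype_apply]
            rw [Algebra.TensorProduct.tmul_mul_tmul]
            exact memtmul (mul_mem x.2 u.2) (mul_mem y.2 v.2)
        | add u v hu hv =>
            rw [map_add, mul_add]
            exact Submodule.add_mem _ hu hv
    | add u v hu hv =>
        rw [map_add, add_mul]
        exact Submodule.add_mem _ hu hv
  -- Q T = T₂₁ Q  and  σ T = T₂₁ σ  for T ∈ D ⊗ D
  have QT : ∀ T, inTensor M (NonUnitalSubalgebra.toSubmodule D) T →
      Qe * T = swapT M T * Qe := by
    rintro T ⟨t, rfl⟩
    induction t using TensorProduct.induction_on with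
    | zero => rw [map_zero, swapT_zero, mul_zero, zero_mul]
    | tmul x y =>
        rw [TensorProduct.map_tmul]
        simp only [Submodule.subtype_apply]
        have hsp : ((x : M) ⊗ₜ[ℂ] (y : M)) = ((x : M) ⊗ₜ[ℂ] (1:M)) * ((1:M) ⊗ₜ[ℂ] (y : M)) := by
          rw [Algebra.TensorProduct.tmul_mul_tmul, mul_one, one_mul]
        rw [swapT_tmul, hsp, ← mul_assoc, E2 _ x.2, mul_assoc, ← E1 _ y.2, ← mul_assoc,
          Algebra.TensorProduct.tmul_mul_tmul, mul_one, one_mul]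
    | add u v hu hv =>
        rw [map_add, mul_add, swapT_add, add_mul, hu, hv]
  have σT : ∀ T, inTensor M (NonUnitalSubalgebra.toSubmodule D) T →
      σe * T = swapT M T * σe := by
    rintro T ⟨t, rfl⟩
    induction t using TensorProduct.induction_on with
    | zero => rw [map_zero, swapT_zero, mul_zero, zero_mul]
    | tmul x y =>
        rw [TensorProduct.map_tmul]
        simp only [Submodule.subtype_apply]
        have hsp : ((x : M) ⊗ₜ[ℂ] (y : M)) = ((x : M) ⊗ₜ[ℂ] (1:M)) * ((1:M) ⊗ₜ[ℂ] (y : M)) := by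
          rw [Algebra.TensorProduct.tmul_mul_tmul, mul_one, one_mul]
        rw [swapT_tmul, hsp, ← mul_assoc, Eσ2 _ x.2, mul_assoc, ← Eσ1 _ y.2, ← mul_assoc,
          Algebra.TensorProduct.tmul_mul_tmul, mul_one, one_mul]
    | add u v hu hv =>
        rw [map_add, mul_add, swapT_add, add_mul, hu, hv]
    -- the full Casimir element
  set e : (ι ⊕ κ) ⊕ ι → M := Sum.elim (Sum.elim α δ) β with hedef
  set e' : (ι ⊕ κ) ⊕ ι → M := Sum.elim (Sum.elim β δ') α with he'def
  have cdag1 : ∀ m : M, m = ∑ a, B (e a) m • e' a := by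
    intro m
    rw [Fintype.sum_sum_type, Fintype.sum_sum_type]
    simp only [hedef, he'def, Sum.elim_inl, Sum.elim_inr]
    have h3 : (∑ i, B (β i) m • α i) = ∑ i, B m (β i) • α i :=
      Finset.sum_congr rfl fun i _ => by rw [hsymm]
    rw [h3, add_assoc]
    exact dag m
  have cdag2 : ∀ m : M, m = ∑ a, B m (e' a) • e a := by
    intro m
    rw [Fintype.sum_sum_type, Fintype.sum_sum_type]
    simp only [hedef, he'def, Sum.elim_inl, Sum.elim_inr]
    have h3 : (∑ i, B m (α i) • β i) = ∑ i, B (α i) m • β i :=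
      Finset.sum_congr rfl fun i _ => by rw [hsymm]
    rw [h3]
    conv_lhs => rw [dag' m]
    abel
  set Ce : M ⊗[ℂ] M := ∑ a, e a ⊗ₜ[ℂ] e' a with hCedef
  set Qs : M ⊗[ℂ] M := swapT M Qe with hQsdef
  have hQs : Qs = ∑ i, β i ⊗ₜ[ℂ] α i := by
    rw [hQsdef, hQedef, swapT_sum]
    exact Finset.sum_congr rfl fun i _ => swapT_tmul _ _
  have hCe : Ce = Qe + σe + Qs := by
    rw [hCedef, Fintype.sum_sum_type, Fintype.sum_sum_type]
    simp only [hedef, he'def, Sum.elim_inl, Sum.elim_inr]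
    rw [hQs, hQedef, hσedef]
  have G1 : ∀ x : M, (x ⊗ₜ[ℂ] (1:M)) * Ce = Ce * ((1:M) ⊗ₜ[ℂ] x) := by
    intro x
    rw [hCedef, Finset.mul_sum, Finset.sum_mul]
    have L : ∀ a, (x ⊗ₜ[ℂ] (1:M)) * (e a ⊗ₜ[ℂ] e' a)
        = ∑ b, B (x * e a) (e' b) • (e b ⊗ₜ[ℂ] e' a) := by
      intro a
      rw [Algebra.TensorProduct.tmul_mul_tmul, one_mul]
      conv_lhs => rw [cdag2 (x * e a)]
      rw [TensorProduct.sum_tmul]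
      exact Finset.sum_congr rfl fun b _ => by rw [TensorProduct.smul_tmul']
    have R : ∀ b, (e b ⊗ₜ[ℂ] e' b) * ((1:M) ⊗ₜ[ℂ] x)
        = ∑ a, B (e a) (e' b * x) • (e b ⊗ₜ[ℂ] e' a) := by
      intro b
      rw [Algebra.TensorProduct.tmul_mul_tmul, mul_one]
      conv_lhs => rw [cdag1 (e' b * x)]
      rw [TensorProduct.tmul_sum]
      exact Finset.sum_congr rfl fun a _ => by rw [TensorProduct.tmul_smul]
    rw [Finset.sum_congr rfl fun a _ => L a, Finset.sum_congr rfl fun b _ => R b,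
      Finset.sum_comm]
    exact Finset.sum_congr rfl fun b _ => Finset.sum_congr rfl fun a _ => by rw [hcyc]
  have G2 : ∀ x : M, ((1:M) ⊗ₜ[ℂ] x) * Ce = Ce * (x ⊗ₜ[ℂ] (1:M)) := by
    intro x
    rw [hCedef, Finset.mul_sum, Finset.sum_mul]
    have L : ∀ a, ((1:M) ⊗ₜ[ℂ] x) * (e a ⊗ₜ[ℂ] e' a)
        = ∑ b, B (e b) (x * e' a) • (e a ⊗ₜ[ℂ] e' b) := by
      intro a
      rw [Algebra.TensorProduct.tmul_mul_tmul, one_mul]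
      conv_lhs => rw [cdag1 (x * e' a)]
      rw [TensorProduct.tmul_sum]
      exact Finset.sum_congr rfl fun b _ => by rw [TensorProduct.tmul_smul]
    have R : ∀ b, (e b ⊗ₜ[ℂ] e' b) * (x ⊗ₜ[ℂ] (1:M))
        = ∑ a, B (e b * x) (e' a) • (e a ⊗ₜ[ℂ] e' b) := by
      intro b
      rw [Algebra.TensorProduct.tmul_mul_tmul, mul_one]
      conv_lhs => rw [cdag2 (e b * x)]
      rw [TensorProduct.sum_tmul]
      exact Finset.sum_congr rfl fun a _ => by rw [TensorProduct.smul_tmul']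
    rw [Finset.sum_congr rfl fun a _ => L a, Finset.sum_congr rfl fun b _ => R b,
      Finset.sum_comm]
    refine Finset.sum_congr rfl fun b _ => Finset.sum_congr rfl fun a _ => ?_
    rw [hassoc]
  have QC : Qe * Ce = Ce * Qs := by
    rw [hQedef, hQs, Finset.sum_mul, Finset.mul_sum]
    refine Finset.sum_congr rfl fun i _ => ?_
    have hsp : (α i ⊗ₜ[ℂ] β i) = (α i ⊗ₜ[ℂ] (1:M)) * ((1:M) ⊗ₜ[ℂ] β i) := by
      rw [Algebra.TensorProduct.tmul_mul_tmul, mul_one, one_mul]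
    calc (α i ⊗ₜ[ℂ] β i) * Ce
        = (α i ⊗ₜ[ℂ] (1:M)) * (((1:M) ⊗ₜ[ℂ] β i) * Ce) := by rw [hsp, mul_assoc]
      _ = (α i ⊗ₜ[ℂ] (1:M)) * (Ce * (β i ⊗ₜ[ℂ] (1:M))) := by rw [G2 (β i)]
      _ = ((α i ⊗ₜ[ℂ] (1:M)) * Ce) * (β i ⊗ₜ[ℂ] (1:M)) := by rw [mul_assoc]
      _ = (Ce * ((1:M) ⊗ₜ[ℂ] α i)) * (β i ⊗ₜ[ℂ] (1:M)) := by rw [G1 (α i)]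
      _ = Ce * (((1:M) ⊗ₜ[ℂ] α i) * (β i ⊗ₜ[ℂ] (1:M))) := by rw [mul_assoc]
      _ = Ce * (β i ⊗ₜ[ℂ] α i) := by
          rw [Algebra.TensorProduct.tmul_mul_tmul, mul_one, one_mul]
  have hqσ : Qe * σe = σe * Qe := by rw [QT σe memσ, σswap]
  have Akey : Qe * Qe + σe * Qe = σe * Qs + Qs * Qs := by
    have hexp := QC
    rw [hCe, mul_add, mul_add, add_mul, add_mul, hqσ] at hexp
    have h4 : Qe * Qs + σe * Qs + Qs * Qs = σe * Qs + Qs * Qs + Qe * Qs := by abel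
    rw [h4] at hexp
    exact add_right_cancel hexp
    -- the projection Ψ = f ⊗ g and the key vanishing  Q² + σQ = 0
  set f : M →ₗ[ℂ] M := ∑ k, (B.flip (β k)).smulRight (α k) with hfdef
  set g : M →ₗ[ℂ] M := ∑ k, (B (α k)).smulRight (β k) with hgdef
  have hf : ∀ x, f x = ∑ k, B x (β k) • α k := by
    intro x
    rw [hfdef]
    simp [LinearMap.sum_apply, LinearMap.smulRight_apply, LinearMap.flip_apply]
  have hg : ∀ y, g y = ∑ k, B (α k) y • β k := by
    intro y
    rw [hgdef]
    simp [LinearMap.sum_apply, LinearMap.smulRight_apply]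
  have hfP : ∀ x ∈ Np, f x = x := fun x hx => by rw [hf]; exact (eNp x hx).symm
  have hfM : ∀ y ∈ Nm, f y = 0 := fun y hy => by
    rw [hf]
    exact Finset.sum_eq_zero fun k _ => by rw [hT.isoM _ hy _ (hβm k), zero_smul]
  have hgM : ∀ y ∈ Nm, g y = y := fun y hy => by rw [hg]; exact (eNm y hy).symm
  have hgP : ∀ x ∈ Np, g x = 0 := fun x hx => by
    rw [hg]
    exact Finset.sum_eq_zero fun k _ => by rw [hT.isoP _ (hαm k) _ hx, zero_smul]
  set Ψ : M ⊗[ℂ] M →ₗ[ℂ] M ⊗[ℂ] M := TensorProduct.map f g with hΨdef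
  have hQQ : Qe * Qe = ∑ i, ∑ j, (α i * α j) ⊗ₜ[ℂ] (β i * β j) := by
    rw [hQedef, Finset.sum_mul_sum]
    exact Finset.sum_congr rfl fun i _ => Finset.sum_congr rfl fun j _ =>
      Algebra.TensorProduct.tmul_mul_tmul _ _ _ _
  have hσQ : σe * Qe = ∑ l, ∑ i, (δ l * α i) ⊗ₜ[ℂ] (δ' l * β i) := by
    rw [hσedef, hQedef, Finset.sum_mul_sum]
    exact Finset.sum_congr rfl fun l _ => Finset.sum_congr rfl fun i _ =>
      Algebra.TensorProduct.tmul_mul_tmul _ _ _ _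
  have hσQs : σe * Qs = ∑ l, ∑ i, (δ l * β i) ⊗ₜ[ℂ] (δ' l * α i) := by
    rw [hσedef, hQs, Finset.sum_mul_sum]
    exact Finset.sum_congr rfl fun l _ => Finset.sum_congr rfl fun i _ =>
      Algebra.TensorProduct.tmul_mul_tmul _ _ _ _
  have hQsQs : Qs * Qs = ∑ i, ∑ j, (β i * β j) ⊗ₜ[ℂ] (α i * α j) := by
    rw [hQs, Finset.sum_mul_sum]
    exact Finset.sum_congr rfl fun i _ => Finset.sum_congr rfl fun j _ =>
      Algebra.TensorProduct.tmul_mul_tmul _ _ _ _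
  have Azero : Qe * Qe + σe * Qe = 0 := by
    have e1 : Ψ (Qe * Qe + σe * Qe) = Qe * Qe + σe * Qe := by
      rw [hQQ, hσQ, map_add, map_sum, map_sum]
      congr 1
      · refine Finset.sum_congr rfl fun i _ => ?_
        rw [map_sum]
        refine Finset.sum_congr rfl fun j _ => ?_
        rw [hΨdef, TensorProduct.map_tmul,
          hfP _ (mul_mem (hαm i) (hαm j)), hgM _ (mul_mem (hβm i) (hβm j))]
      · refine Finset.sum_congr rfl fun l _ => ?_
        rw [map_sum]
        refine Finset.sum_congr rfl fun i _ => ?_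
        rw [hΨdef, TensorProduct.map_tmul,
          hfP _ (hT.bimodPl _ (hδm l) _ (hαm i)), hgM _ (hT.bimodMl _ (hδ'm l) _ (hβm i))]
    have e2 : Ψ (σe * Qs + Qs * Qs) = 0 := by
      rw [hσQs, hQsQs, map_add, map_sum, map_sum]
      have z1 : (∑ l, Ψ (∑ i, (δ l * β i) ⊗ₜ[ℂ] (δ' l * α i))) = 0 := by
        refine Finset.sum_eq_zero fun l _ => ?_
        rw [map_sum]
        refine Finset.sum_eq_zero fun i _ => ?_
        rw [hΨdef, TensorProduct.map_tmul, hfM _ (hT.bimodMl _ (hδm l) _ (hβm i)),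
          TensorProduct.zero_tmul]
      have z2 : (∑ i, Ψ (∑ j, (β i * β j) ⊗ₜ[ℂ] (α i * α j))) = 0 := by
        refine Finset.sum_eq_zero fun i _ => ?_
        rw [map_sum]
        refine Finset.sum_eq_zero fun j _ => ?_
        rw [hΨdef, TensorProduct.map_tmul, hfM _ (mul_mem (hβm i) (hβm j)),
          TensorProduct.zero_tmul]
      rw [z1, z2, add_zero]
    calc Qe * Qe + σe * Qe = Ψ (Qe * Qe + σe * Qe) := e1.symm
      _ = Ψ (σe * Qs + Qs * Qs) := by rw [Akey]
      _ = 0 := e2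
    -- three-fold embeddings of the canonical elements
  set Q12 : (M ⊗[ℂ] M) ⊗[ℂ] M := emb12 M Qe with hQ12def
  set Q13 : (M ⊗[ℂ] M) ⊗[ℂ] M := emb13 M Qe with hQ13def
  set Q23 : (M ⊗[ℂ] M) ⊗[ℂ] M := emb23 M Qe with hQ23def
  have hσe' : σe = ∑ l, δ' l ⊗ₜ[ℂ] δ l := by
    conv_lhs => rw [← σswap]
    rw [hσedef, swapT_sum]
    exact Finset.sum_congr rfl fun l _ => swapT_tmul _ _
  have hQ12 : Q12 = ∑ i, (α i ⊗ₜ[ℂ] β i) ⊗ₜ[ℂ] (1:M) := by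
    rw [hQ12def, hQedef, map_sum]
    exact Finset.sum_congr rfl fun i _ => rfl
  have hQ13 : Q13 = ∑ i, (α i ⊗ₜ[ℂ] (1:M)) ⊗ₜ[ℂ] β i := by
    rw [hQ13def, hQedef, map_sum]
    exact Finset.sum_congr rfl fun i _ => rfl
  have hQ23 : Q23 = ∑ i, ((1:M) ⊗ₜ[ℂ] α i) ⊗ₜ[ℂ] β i := by
    rw [hQ23def, hQedef, map_sum]
    exact Finset.sum_congr rfl fun i _ => rfl
  have hσ23 : emb23 M σe = ∑ l, ((1:M) ⊗ₜ[ℂ] δ' l) ⊗ₜ[ℂ] δ l := by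
    rw [hσe', map_sum]
    exact Finset.sum_congr rfl fun l _ => rfl
  have hσ12 : emb12 M σe = ∑ l, (δ l ⊗ₜ[ℂ] δ' l) ⊗ₜ[ℂ] (1:M) := by
    rw [hσedef, map_sum]
    exact Finset.sum_congr rfl fun l _ => rfl
  -- identity F : Q₁₂ Q₂₃ = Q₂₃ Q₁₃ + Q₁₃ Q₁₂ + σ₂₃ Q₁₃
  have hT3 : Q23 * Q13 = ∑ i, ∑ j, ∑ k,
      B (α k) (β i * β j) • ((α j ⊗ₜ[ℂ] α i) ⊗ₜ[ℂ] β k) := by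
    rw [hQ23, hQ13, Finset.sum_mul_sum]
    refine Finset.sum_congr rfl fun i _ => Finset.sum_congr rfl fun j _ => ?_
    rw [Algebra.TensorProduct.tmul_mul_tmul, Algebra.TensorProduct.tmul_mul_tmul,
      one_mul, mul_one]
    conv_lhs => rw [eNm (β i * β j) (mul_mem (hβm i) (hβm j))]
    simp only [TensorProduct.tmul_sum, TensorProduct.tmul_smul, TensorProduct.smul_tmul']
  have hT1 : Q13 * Q12 = ∑ i, ∑ j, ∑ k,
      B (α i * α j) (β k) • ((α k ⊗ₜ[ℂ] β j) ⊗ₜ[ℂ] β i) := by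
    rw [hQ13, hQ12, Finset.sum_mul_sum]
    refine Finset.sum_congr rfl fun i _ => Finset.sum_congr rfl fun j _ => ?_
    rw [Algebra.TensorProduct.tmul_mul_tmul, Algebra.TensorProduct.tmul_mul_tmul,
      one_mul, mul_one]
    conv_lhs => rw [eNp (α i * α j) (mul_mem (hαm i) (hαm j))]
    simp only [TensorProduct.sum_tmul, TensorProduct.smul_tmul', TensorProduct.tmul_smul]
  have hT2 : emb23 M σe * Q13 = ∑ l, ∑ j, ∑ k,
      B (α k) (δ l * β j) • ((α j ⊗ₜ[ℂ] δ' l) ⊗ₜ[ℂ] β k) := by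
    rw [hσ23, hQ13, Finset.sum_mul_sum]
    refine Finset.sum_congr rfl fun l _ => Finset.sum_congr rfl fun j _ => ?_
    rw [Algebra.TensorProduct.tmul_mul_tmul, Algebra.TensorProduct.tmul_mul_tmul,
      one_mul, mul_one]
    conv_lhs => rw [eNm (δ l * β j) (hT.bimodMl _ (hδm l) _ (hβm j))]
    simp only [TensorProduct.tmul_sum, TensorProduct.tmul_smul, TensorProduct.smul_tmul']
  have hF : Q12 * Q23 = Q23 * Q13 + Q13 * Q12 + emb23 M σe * Q13 := by
    have l0 : Q12 * Q23 = ∑ i, ∑ j, (α i ⊗ₜ[ℂ] (β i * α j)) ⊗ₜ[ℂ] β j := by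
      rw [hQ12, hQ23, Finset.sum_mul_sum]
      refine Finset.sum_congr rfl fun i _ => Finset.sum_congr rfl fun j _ => ?_
      rw [Algebra.TensorProduct.tmul_mul_tmul, Algebra.TensorProduct.tmul_mul_tmul,
        one_mul, mul_one]
    have expand : ∀ i j, (α i ⊗ₜ[ℂ] (β i * α j)) ⊗ₜ[ℂ] β j
        = (∑ k, B (α k) (β i * α j) • ((α i ⊗ₜ[ℂ] β k) ⊗ₜ[ℂ] β j))
          + ((∑ l, B (δ l) (β i * α j) • ((α i ⊗ₜ[ℂ] δ' l) ⊗ₜ[ℂ] β j))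
            + ∑ k, B (β i * α j) (β k) • ((α i ⊗ₜ[ℂ] α k) ⊗ₜ[ℂ] β j)) := by
      intro i j
      conv_lhs => rw [dag (β i * α j)]
      simp only [TensorProduct.tmul_add, TensorProduct.add_tmul, TensorProduct.tmul_sum,
        TensorProduct.sum_tmul, TensorProduct.tmul_smul, TensorProduct.smul_tmul']
    have hX1 : (∑ i, ∑ j, ∑ k, B (α k) (β i * α j) • ((α i ⊗ₜ[ℂ] β k) ⊗ₜ[ℂ] β j))
        = Q13 * Q12 := by
      rw [hT1]
      refine (rot1 _).trans ?_
      refine Finset.sum_congr rfl fun a _ => Finset.sum_congr rfl fun b _ =>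
        Finset.sum_congr rfl fun c _ => ?_
      rw [← hcyc]
    have hX2 : (∑ i, ∑ j, ∑ l, B (δ l) (β i * α j) • ((α i ⊗ₜ[ℂ] δ' l) ⊗ₜ[ℂ] β j))
        = emb23 M σe * Q13 := by
      rw [hT2]
      refine (rot2 _).trans ?_
      refine Finset.sum_congr rfl fun a _ => Finset.sum_congr rfl fun b _ =>
        Finset.sum_congr rfl fun c _ => ?_
      rw [hsymm, hcyc]
    have hX3 : (∑ i, ∑ j, ∑ k, B (β i * α j) (β k) • ((α i ⊗ₜ[ℂ] α k) ⊗ₜ[ℂ] β j))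
        = Q23 * Q13 := by
      rw [hT3]
      refine (rot2 _).trans ?_
      refine Finset.sum_congr rfl fun a _ => Finset.sum_congr rfl fun b _ =>
        Finset.sum_congr rfl fun c _ => ?_
      rw [hcyc]
    calc Q12 * Q23 = ∑ i, ∑ j, (α i ⊗ₜ[ℂ] (β i * α j)) ⊗ₜ[ℂ] β j := l0
      _ = ∑ i, ∑ j, ((∑ k, B (α k) (β i * α j) • ((α i ⊗ₜ[ℂ] β k) ⊗ₜ[ℂ] β j))
            + ((∑ l, B (δ l) (β i * α j) • ((α i ⊗ₜ[ℂ] δ' l) ⊗ₜ[ℂ] β j))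
              + ∑ k, B (β i * α j) (β k) • ((α i ⊗ₜ[ℂ] α k) ⊗ₜ[ℂ] β j))) :=
          Finset.sum_congr rfl fun i _ => Finset.sum_congr rfl fun j _ => expand i j
      _ = (∑ i, ∑ j, ∑ k, B (α k) (β i * α j) • ((α i ⊗ₜ[ℂ] β k) ⊗ₜ[ℂ] β j))
            + ((∑ i, ∑ j, ∑ l, B (δ l) (β i * α j) • ((α i ⊗ₜ[ℂ] δ' l) ⊗ₜ[ℂ] β j))
              + ∑ i, ∑ j, ∑ k, B (β i * α j) (β k) • ((α i ⊗ₜ[ℂ] α k) ⊗ₜ[ℂ] β j)) := by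
          simp only [Finset.sum_add_distrib]
      _ = Q13 * Q12 + (emb23 M σe * Q13 + Q23 * Q13) := by rw [hX1, hX2, hX3]
      _ = Q23 * Q13 + Q13 * Q12 + emb23 M σe * Q13 := by abel
    -- identity F' : Q₂₃ Q₁₂ = Q₁₃ Q₂₃ + Q₁₂ Q₁₃ + σ₁₂ Q₁₃
  have hT3' : Q13 * Q23 = ∑ i, ∑ j, ∑ k,
      B (α k) (β i * β j) • ((α i ⊗ₜ[ℂ] α j) ⊗ₜ[ℂ] β k) := by
    rw [hQ13, hQ23, Finset.sum_mul_sum]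
    refine Finset.sum_congr rfl fun i _ => Finset.sum_congr rfl fun j _ => ?_
    rw [Algebra.TensorProduct.tmul_mul_tmul, Algebra.TensorProduct.tmul_mul_tmul,
      one_mul, mul_one]
    conv_lhs => rw [eNm (β i * β j) (mul_mem (hβm i) (hβm j))]
    simp only [TensorProduct.tmul_sum, TensorProduct.tmul_smul, TensorProduct.smul_tmul']
  have hT1' : Q12 * Q13 = ∑ i, ∑ j, ∑ k,
      B (α i * α j) (β k) • ((α k ⊗ₜ[ℂ] β i) ⊗ₜ[ℂ] β j) := by
    rw [hQ12, hQ13, Finset.sum_mul_sum]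
    refine Finset.sum_congr rfl fun i _ => Finset.sum_congr rfl fun j _ => ?_
    rw [Algebra.TensorProduct.tmul_mul_tmul, Algebra.TensorProduct.tmul_mul_tmul,
      one_mul, mul_one]
    conv_lhs => rw [eNp (α i * α j) (mul_mem (hαm i) (hαm j))]
    simp only [TensorProduct.sum_tmul, TensorProduct.smul_tmul', TensorProduct.tmul_smul]
  have hT2' : emb12 M σe * Q13 = ∑ l, ∑ j, ∑ k,
      B (δ l * α j) (β k) • ((α k ⊗ₜ[ℂ] δ' l) ⊗ₜ[ℂ] β j) := by
    rw [hσ12, hQ13, Finset.sum_mul_sum]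
    refine Finset.sum_congr rfl fun l _ => Finset.sum_congr rfl fun j _ => ?_
    rw [Algebra.TensorProduct.tmul_mul_tmul, Algebra.TensorProduct.tmul_mul_tmul,
      one_mul, mul_one]
    conv_lhs => rw [eNp (δ l * α j) (hT.bimodPl _ (hδm l) _ (hαm j))]
    simp only [TensorProduct.sum_tmul, TensorProduct.smul_tmul', TensorProduct.tmul_smul]
  have hF' : Q23 * Q12 = Q13 * Q23 + Q12 * Q13 + emb12 M σe * Q13 := by
    have l0 : Q23 * Q12 = ∑ i, ∑ j, (α j ⊗ₜ[ℂ] (α i * β j)) ⊗ₜ[ℂ] β i := by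
      rw [hQ23, hQ12, Finset.sum_mul_sum]
      refine Finset.sum_congr rfl fun i _ => Finset.sum_congr rfl fun j _ => ?_
      rw [Algebra.TensorProduct.tmul_mul_tmul, Algebra.TensorProduct.tmul_mul_tmul,
        one_mul, mul_one]
    have expand : ∀ i j, (α j ⊗ₜ[ℂ] (α i * β j)) ⊗ₜ[ℂ] β i
        = (∑ k, B (α k) (α i * β j) • ((α j ⊗ₜ[ℂ] β k) ⊗ₜ[ℂ] β i))
          + ((∑ l, B (δ l) (α i * β j) • ((α j ⊗ₜ[ℂ] δ' l) ⊗ₜ[ℂ] β i))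
            + ∑ k, B (α i * β j) (β k) • ((α j ⊗ₜ[ℂ] α k) ⊗ₜ[ℂ] β i)) := by
      intro i j
      conv_lhs => rw [dag (α i * β j)]
      simp only [TensorProduct.tmul_add, TensorProduct.add_tmul, TensorProduct.tmul_sum,
        TensorProduct.sum_tmul, TensorProduct.tmul_smul, TensorProduct.smul_tmul']
    have hY1 : (∑ i, ∑ j, ∑ k, B (α k) (α i * β j) • ((α j ⊗ₜ[ℂ] β k) ⊗ₜ[ℂ] β i))
        = Q12 * Q13 := by
      rw [hT1']
      refine (rot2 _).trans ?_
      refine Finset.sum_congr rfl fun a _ => Finset.sum_congr rfl fun b _ =>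
        Finset.sum_congr rfl fun c _ => ?_
      rw [← hassoc]
    have hY2 : (∑ i, ∑ j, ∑ l, B (δ l) (α i * β j) • ((α j ⊗ₜ[ℂ] δ' l) ⊗ₜ[ℂ] β i))
        = emb12 M σe * Q13 := by
      rw [hT2']
      refine (rot2 _).trans ?_
      refine Finset.sum_congr rfl fun a _ => Finset.sum_congr rfl fun b _ =>
        Finset.sum_congr rfl fun c _ => ?_
      rw [← hassoc]
    have hY3 : (∑ i, ∑ j, ∑ k, B (α i * β j) (β k) • ((α j ⊗ₜ[ℂ] α k) ⊗ₜ[ℂ] β i))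
        = Q13 * Q23 := by
      rw [hT3']
      refine (rot1 _).trans ?_
      refine Finset.sum_congr rfl fun a _ => Finset.sum_congr rfl fun b _ =>
        Finset.sum_congr rfl fun c _ => ?_
      rw [hassoc]
    calc Q23 * Q12 = ∑ i, ∑ j, (α j ⊗ₜ[ℂ] (α i * β j)) ⊗ₜ[ℂ] β i := l0
      _ = ∑ i, ∑ j, ((∑ k, B (α k) (α i * β j) • ((α j ⊗ₜ[ℂ] β k) ⊗ₜ[ℂ] β i))
            + ((∑ l, B (δ l) (α i * β j) • ((α j ⊗ₜ[ℂ] δ' l) ⊗ₜ[ℂ] β i))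
              + ∑ k, B (α i * β j) (β k) • ((α j ⊗ₜ[ℂ] α k) ⊗ₜ[ℂ] β i))) :=
          Finset.sum_congr rfl fun i _ => Finset.sum_congr rfl fun j _ => expand i j
      _ = (∑ i, ∑ j, ∑ k, B (α k) (α i * β j) • ((α j ⊗ₜ[ℂ] β k) ⊗ₜ[ℂ] β i))
            + ((∑ i, ∑ j, ∑ l, B (δ l) (α i * β j) • ((α j ⊗ₜ[ℂ] δ' l) ⊗ₜ[ℂ] β i))
              + ∑ i, ∑ j, ∑ k, B (α i * β j) (β k) • ((α j ⊗ₜ[ℂ] α k) ⊗ₜ[ℂ] β i)) := by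
          simp only [Finset.sum_add_distrib]
      _ = Q12 * Q13 + (emb12 M σe * Q13 + Q13 * Q23) := by rw [hY1, hY2, hY3]
      _ = Q13 * Q23 + Q12 * Q13 + emb12 M σe * Q13 := by abel
    -- embedded moving identities
  have e13a : ∀ d ∈ D, ((d ⊗ₜ[ℂ] (1:M)) ⊗ₜ[ℂ] (1:M)) * Q13 = Q13 * (((1:M) ⊗ₜ[ℂ] (1:M)) ⊗ₜ[ℂ] d) := by
    intro d hd
    have h := congrArg (emb13 M) (E1 d hd)
    rw [map_mul, map_mul] at h
    rw [hQ13def]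
    exact h
  have e13b : ∀ d ∈ D, Q13 * ((d ⊗ₜ[ℂ] (1:M)) ⊗ₜ[ℂ] (1:M)) = (((1:M) ⊗ₜ[ℂ] (1:M)) ⊗ₜ[ℂ] d) * Q13 := by
    intro d hd
    have h := congrArg (emb13 M) (E2 d hd)
    rw [map_mul, map_mul] at h
    rw [hQ13def]
    exact h
  have e23a : ∀ d ∈ D, (((1:M) ⊗ₜ[ℂ] d) ⊗ₜ[ℂ] (1:M)) * Q23 = Q23 * (((1:M) ⊗ₜ[ℂ] (1:M)) ⊗ₜ[ℂ] d) := by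
    intro d hd
    have h := congrArg (emb23 M) (E1 d hd)
    rw [map_mul, map_mul] at h
    rw [hQ23def]
    exact h
  have e23b : ∀ d ∈ D, Q23 * (((1:M) ⊗ₜ[ℂ] d) ⊗ₜ[ℂ] (1:M)) = (((1:M) ⊗ₜ[ℂ] (1:M)) ⊗ₜ[ℂ] d) * Q23 := by
    intro d hd
    have h := congrArg (emb23 M) (E2 d hd)
    rw [map_mul, map_mul] at h
    rw [hQ23def]
    exact h
  have e12a : ∀ d ∈ D, ((d ⊗ₜ[ℂ] (1:M)) ⊗ₜ[ℂ] (1:M)) * Q12 = Q12 * (((1:M) ⊗ₜ[ℂ] d) ⊗ₜ[ℂ] (1:M)) := by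
    intro d hd
    have h := congrArg (emb12 M) (E1 d hd)
    rw [map_mul, map_mul] at h
    rw [hQ12def]
    exact h
  have e12b : ∀ d ∈ D, Q12 * ((d ⊗ₜ[ℂ] (1:M)) ⊗ₜ[ℂ] (1:M)) = (((1:M) ⊗ₜ[ℂ] d) ⊗ₜ[ℂ] (1:M)) * Q12 := by
    intro d hd
    have h := congrArg (emb12 M) (E2 d hd)
    rw [map_mul, map_mul] at h
    rw [hQ12def]
    exact h
  have c13Q : ∀ m : M, Q13 * (((1:M) ⊗ₜ[ℂ] m) ⊗ₜ[ℂ] (1:M)) = (((1:M) ⊗ₜ[ℂ] m) ⊗ₜ[ℂ] (1:M)) * Q13 := by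
    intro m
    rw [hQ13def]
    exact comm13 m Qe
  have c23Q : ∀ m : M, Q23 * ((m ⊗ₜ[ℂ] (1:M)) ⊗ₜ[ℂ] (1:M)) = ((m ⊗ₜ[ℂ] (1:M)) ⊗ₜ[ℂ] (1:M)) * Q23 := by
    intro m
    rw [hQ23def]
    exact comm23 m Qe
  have c12Q : ∀ m : M, Q12 * (((1:M) ⊗ₜ[ℂ] (1:M)) ⊗ₜ[ℂ] m) = (((1:M) ⊗ₜ[ℂ] (1:M)) ⊗ₜ[ℂ] m) * Q12 := by
    intro m
    rw [hQ12def]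
    exact comm12 m Qe
  have M1 : ∀ T, inTensor M (NonUnitalSubalgebra.toSubmodule D) T →
      emb12 M T * Q13 = Q13 * emb23 M (swapT M T) := by
    rintro T ⟨t, rfl⟩
    induction t using TensorProduct.induction_on with
    | zero => simp only [map_zero, swapT_zero, zero_mul, mul_zero]
    | tmul x y =>
        rw [TensorProduct.map_tmul]
        simp only [Submodule.subtype_apply]
        rw [swapT_tmul]
        show (((x:M) ⊗ₜ[ℂ] (y:M)) ⊗ₜ[ℂ] (1:M)) * Q13 = Q13 * (((1:M) ⊗ₜ[ℂ] (y:M)) ⊗ₜ[ℂ] (x:M))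
        have s1 : (((x:M) ⊗ₜ[ℂ] (y:M)) ⊗ₜ[ℂ] (1:M)) = (((1:M) ⊗ₜ[ℂ] (y:M)) ⊗ₜ[ℂ] (1:M)) * (((x:M) ⊗ₜ[ℂ] (1:M)) ⊗ₜ[ℂ] (1:M)) := by
          rw [Algebra.TensorProduct.tmul_mul_tmul, Algebra.TensorProduct.tmul_mul_tmul]
          simp only [one_mul, mul_one]
        rw [s1, mul_assoc, e13a _ x.2, ← mul_assoc, ← c13Q, mul_assoc]
        congr 1
        rw [Algebra.TensorProduct.tmul_mul_tmul, Algebra.TensorProduct.tmul_mul_tmul]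
        simp only [one_mul, mul_one]
    | add u v hu hv =>
        simp only [map_add, swapT_add, add_mul, mul_add] at hu hv ⊢
        rw [hu, hv]
  have M2 : ∀ T, inTensor M (NonUnitalSubalgebra.toSubmodule D) T →
      emb23 M T * Q13 = Q13 * emb12 M (swapT M T) := by
    rintro T ⟨t, rfl⟩
    induction t using TensorProduct.induction_on with
    | zero => simp only [map_zero, swapT_zero, zero_mul, mul_zero]
    | tmul x y =>
        rw [TensorProduct.map_tmul]
        simp only [Submodule.subtype_apply]
        rw [swapT_tmul]
        show (((1:M) ⊗ₜ[ℂ] (x:M)) ⊗ₜ[ℂ] (y:M)) * Q13 = Q13 * (((y:M) ⊗ₜ[ℂ] (x:M)) ⊗ₜ[ℂ] (1:M))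
        have s1 : (((1:M) ⊗ₜ[ℂ] (x:M)) ⊗ₜ[ℂ] (y:M)) = (((1:M) ⊗ₜ[ℂ] (x:M)) ⊗ₜ[ℂ] (1:M)) * (((1:M) ⊗ₜ[ℂ] (1:M)) ⊗ₜ[ℂ] (y:M)) := by
          rw [Algebra.TensorProduct.tmul_mul_tmul, Algebra.TensorProduct.tmul_mul_tmul]
          simp only [one_mul, mul_one]
        have s2 : (((1:M) ⊗ₜ[ℂ] (1:M)) ⊗ₜ[ℂ] (y:M)) * Q13 = Q13 * (((y:M) ⊗ₜ[ℂ] (1:M)) ⊗ₜ[ℂ] (1:M)) := (e13b _ y.2).symm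
        rw [s1, mul_assoc, s2, ← mul_assoc, ← c13Q, mul_assoc]
        congr 1
        rw [Algebra.TensorProduct.tmul_mul_tmul, Algebra.TensorProduct.tmul_mul_tmul]
        simp only [one_mul, mul_one]
    | add u v hu hv =>
        simp only [map_add, swapT_add, add_mul, mul_add] at hu hv ⊢
        rw [hu, hv]
  have M3 : ∀ T, inTensor M (NonUnitalSubalgebra.toSubmodule D) T →
      Q13 * emb12 M T = emb23 M (swapT M T) * Q13 := by
    rintro T ⟨t, rfl⟩
    induction t using TensorProduct.induction_on with
    | zero => simp only [map_zero, swapT_zero, zero_mul, mul_zero]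
    | tmul x y =>
        rw [TensorProduct.map_tmul]
        simp only [Submodule.subtype_apply]
        rw [swapT_tmul]
        show Q13 * (((x:M) ⊗ₜ[ℂ] (y:M)) ⊗ₜ[ℂ] (1:M)) = (((1:M) ⊗ₜ[ℂ] (y:M)) ⊗ₜ[ℂ] (x:M)) * Q13
        have s1 : (((x:M) ⊗ₜ[ℂ] (y:M)) ⊗ₜ[ℂ] (1:M)) = (((x:M) ⊗ₜ[ℂ] (1:M)) ⊗ₜ[ℂ] (1:M)) * (((1:M) ⊗ₜ[ℂ] (y:M)) ⊗ₜ[ℂ] (1:M)) := by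
          rw [Algebra.TensorProduct.tmul_mul_tmul, Algebra.TensorProduct.tmul_mul_tmul]
          simp only [one_mul, mul_one]
        rw [s1, ← mul_assoc, e13b _ x.2, mul_assoc, c13Q, ← mul_assoc]
        congr 1
        rw [Algebra.TensorProduct.tmul_mul_tmul, Algebra.TensorProduct.tmul_mul_tmul]
        simp only [one_mul, mul_one]
    | add u v hu hv =>
        simp only [map_add, swapT_add, add_mul, mul_add] at hu hv ⊢
        rw [hu, hv]
  have M4 : ∀ T, inTensor M (NonUnitalSubalgebra.toSubmodule D) T →
      Q13 * emb23 M T = emb12 M (swapT M T) * Q13 := by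
    rintro T ⟨t, rfl⟩
    induction t using TensorProduct.induction_on with
    | zero => simp only [map_zero, swapT_zero, zero_mul, mul_zero]
    | tmul x y =>
        rw [TensorProduct.map_tmul]
        simp only [Submodule.subtype_apply]
        rw [swapT_tmul]
        show Q13 * (((1:M) ⊗ₜ[ℂ] (x:M)) ⊗ₜ[ℂ] (y:M)) = (((y:M) ⊗ₜ[ℂ] (x:M)) ⊗ₜ[ℂ] (1:M)) * Q13
        have s1 : (((1:M) ⊗ₜ[ℂ] (x:M)) ⊗ₜ[ℂ] (y:M)) = (((1:M) ⊗ₜ[ℂ] (1:M)) ⊗ₜ[ℂ] (y:M)) * (((1:M) ⊗ₜ[ℂ] (x:M)) ⊗ₜ[ℂ] (1:M)) := by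
          rw [Algebra.TensorProduct.tmul_mul_tmul, Algebra.TensorProduct.tmul_mul_tmul]
          simp only [one_mul, mul_one]
        have s2 : Q13 * (((1:M) ⊗ₜ[ℂ] (1:M)) ⊗ₜ[ℂ] (y:M)) = (((y:M) ⊗ₜ[ℂ] (1:M)) ⊗ₜ[ℂ] (1:M)) * Q13 :=
          (e13a _ y.2).symm
        rw [s1, ← mul_assoc, s2, mul_assoc, c13Q, ← mul_assoc]
        congr 1
        rw [Algebra.TensorProduct.tmul_mul_tmul, Algebra.TensorProduct.tmul_mul_tmul]
        simp only [one_mul, mul_one]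
    | add u v hu hv =>
        simp only [map_add, swapT_add, add_mul, mul_add] at hu hv ⊢
        rw [hu, hv]
  have M5 : ∀ T, inTensor M (NonUnitalSubalgebra.toSubmodule D) T →
      emb13 M T * Q23 = Q23 * emb12 M T := by
    rintro T ⟨t, rfl⟩
    induction t using TensorProduct.induction_on with
    | zero => simp only [map_zero, swapT_zero, zero_mul, mul_zero]
    | tmul x y =>
        rw [TensorProduct.map_tmul]
        simp only [Submodule.subtype_apply]
        show (((x:M) ⊗ₜ[ℂ] (1:M)) ⊗ₜ[ℂ] (y:M)) * Q23 = Q23 * (((x:M) ⊗ₜ[ℂ] (y:M)) ⊗ₜ[ℂ] (1:M))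
        have s1 : (((x:M) ⊗ₜ[ℂ] (1:M)) ⊗ₜ[ℂ] (y:M)) = (((x:M) ⊗ₜ[ℂ] (1:M)) ⊗ₜ[ℂ] (1:M)) * (((1:M) ⊗ₜ[ℂ] (1:M)) ⊗ₜ[ℂ] (y:M)) := by
          rw [Algebra.TensorProduct.tmul_mul_tmul, Algebra.TensorProduct.tmul_mul_tmul]
          simp only [one_mul, mul_one]
        have s2 : (((1:M) ⊗ₜ[ℂ] (1:M)) ⊗ₜ[ℂ] (y:M)) * Q23 = Q23 * (((1:M) ⊗ₜ[ℂ] (y:M)) ⊗ₜ[ℂ] (1:M)) := (e23b _ y.2).symm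
        rw [s1, mul_assoc, s2, ← mul_assoc, ← c23Q, mul_assoc]
        congr 1
        rw [Algebra.TensorProduct.tmul_mul_tmul, Algebra.TensorProduct.tmul_mul_tmul]
        simp only [one_mul, mul_one]
    | add u v hu hv =>
        simp only [map_add, swapT_add, add_mul, mul_add] at hu hv ⊢
        rw [hu, hv]
  have M6 : ∀ T, inTensor M (NonUnitalSubalgebra.toSubmodule D) T →
      emb12 M T * Q23 = Q23 * emb13 M T := by
    rintro T ⟨t, rfl⟩
    induction t using TensorProduct.induction_on with
    | zero => simp only [map_zero, swapT_zero, zero_mul, mul_zero]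
    | tmul x y =>
        rw [TensorProduct.map_tmul]
        simp only [Submodule.subtype_apply]
        show (((x:M) ⊗ₜ[ℂ] (y:M)) ⊗ₜ[ℂ] (1:M)) * Q23 = Q23 * (((x:M) ⊗ₜ[ℂ] (1:M)) ⊗ₜ[ℂ] (y:M))
        have s1 : (((x:M) ⊗ₜ[ℂ] (y:M)) ⊗ₜ[ℂ] (1:M)) = (((x:M) ⊗ₜ[ℂ] (1:M)) ⊗ₜ[ℂ] (1:M)) * (((1:M) ⊗ₜ[ℂ] (y:M)) ⊗ₜ[ℂ] (1:M)) := by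
          rw [Algebra.TensorProduct.tmul_mul_tmul, Algebra.TensorProduct.tmul_mul_tmul]
          simp only [one_mul, mul_one]
        rw [s1, mul_assoc, e23a _ y.2, ← mul_assoc, ← c23Q, mul_assoc]
        congr 1
        rw [Algebra.TensorProduct.tmul_mul_tmul, Algebra.TensorProduct.tmul_mul_tmul]
        simp only [one_mul, mul_one]
    | add u v hu hv =>
        simp only [map_add, swapT_add, add_mul, mul_add] at hu hv ⊢
        rw [hu, hv]
  have M7 : ∀ T, inTensor M (NonUnitalSubalgebra.toSubmodule D) T →
      Q12 * emb13 M T = emb23 M T * Q12 := by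
    rintro T ⟨t, rfl⟩
    induction t using TensorProduct.induction_on with
    | zero => simp only [map_zero, swapT_zero, zero_mul, mul_zero]
    | tmul x y =>
        rw [TensorProduct.map_tmul]
        simp only [Submodule.subtype_apply]
        show Q12 * (((x:M) ⊗ₜ[ℂ] (1:M)) ⊗ₜ[ℂ] (y:M)) = (((1:M) ⊗ₜ[ℂ] (x:M)) ⊗ₜ[ℂ] (y:M)) * Q12
        have s1 : (((x:M) ⊗ₜ[ℂ] (1:M)) ⊗ₜ[ℂ] (y:M)) = (((x:M) ⊗ₜ[ℂ] (1:M)) ⊗ₜ[ℂ] (1:M)) * (((1:M) ⊗ₜ[ℂ] (1:M)) ⊗ₜ[ℂ] (y:M)) := by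
          rw [Algebra.TensorProduct.tmul_mul_tmul, Algebra.TensorProduct.tmul_mul_tmul]
          simp only [one_mul, mul_one]
        rw [s1, ← mul_assoc, e12b _ x.2, mul_assoc, c12Q, ← mul_assoc]
        congr 1
        rw [Algebra.TensorProduct.tmul_mul_tmul, Algebra.TensorProduct.tmul_mul_tmul]
        simp only [one_mul, mul_one]
    | add u v hu hv =>
        simp only [map_add, swapT_add, add_mul, mul_add] at hu hv ⊢
        rw [hu, hv]
  have M8 : ∀ T, inTensor M (NonUnitalSubalgebra.toSubmodule D) T →
      Q12 * emb23 M T = emb13 M T * Q12 := by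
    rintro T ⟨t, rfl⟩
    induction t using TensorProduct.induction_on with
    | zero => simp only [map_zero, swapT_zero, zero_mul, mul_zero]
    | tmul x y =>
        rw [TensorProduct.map_tmul]
        simp only [Submodule.subtype_apply]
        show Q12 * (((1:M) ⊗ₜ[ℂ] (x:M)) ⊗ₜ[ℂ] (y:M)) = (((x:M) ⊗ₜ[ℂ] (1:M)) ⊗ₜ[ℂ] (y:M)) * Q12
        have s1 : (((1:M) ⊗ₜ[ℂ] (x:M)) ⊗ₜ[ℂ] (y:M)) = (((1:M) ⊗ₜ[ℂ] (x:M)) ⊗ₜ[ℂ] (1:M)) * (((1:M) ⊗ₜ[ℂ] (1:M)) ⊗ₜ[ℂ] (y:M)) := by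
          rw [Algebra.TensorProduct.tmul_mul_tmul, Algebra.TensorProduct.tmul_mul_tmul]
          simp only [one_mul, mul_one]
        have s2 : Q12 * (((1:M) ⊗ₜ[ℂ] (x:M)) ⊗ₜ[ℂ] (1:M)) = (((x:M) ⊗ₜ[ℂ] (1:M)) ⊗ₜ[ℂ] (1:M)) * Q12 :=
          (e12a _ x.2).symm
        rw [s1, ← mul_assoc, s2, mul_assoc, c12Q, ← mul_assoc]
        congr 1
        rw [Algebra.TensorProduct.tmul_mul_tmul, Algebra.TensorProduct.tmul_mul_tmul]
        simp only [one_mul, mul_one]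
    | add u v hu hv =>
        simp only [map_add, swapT_add, add_mul, mul_add] at hu hv ⊢
        rw [hu, hv]
  
  have e12mul : ∀ X Y : M ⊗[ℂ] M, emb12 M X * emb12 M Y = emb12 M (X * Y) :=
    fun X Y => (map_mul (emb12 M) X Y).symm
  have e13mul : ∀ X Y : M ⊗[ℂ] M, emb13 M X * emb13 M Y = emb13 M (X * Y) :=
    fun X Y => (map_mul (emb13 M) X Y).symm
  have e23mul : ∀ X Y : M ⊗[ℂ] M, emb23 M X * emb23 M Y = emb23 M (X * Y) :=
    fun X Y => (map_mul (emb23 M) X Y).symm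
  -- swap-product identities in M ⊗ M
  have k1' : swapT M S * Qe = Qe * S := (QT S hS).symm
  have k2' : Qe * swapT M S = S * Qe := by
    have h := QT (swapT M S) (memswap S hS)
    rwa [swapT_swapT] at h
  have k3' : σe * swapT M S = S * σe := by
    have h := σT (swapT M S) (memswap S hS)
    rwa [swapT_swapT] at h
  have swapSσ : swapT M (S * σe) = σe * S := by
    rw [swapT_mul, σswap]
    exact (σT S hS).symm
  have hH : swapT M S * S = σe * S + lam ^ 2 • (1 : M ⊗[ℂ] M) := by
    rw [sub_eq_iff_eq_add] at hHecke
    rw [hHecke]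
    exact add_comm _ _
  have q12q12 : Q12 * Q12 = emb12 M (Qe * Qe) := by rw [hQ12def, e12mul]
  have q12σ12 : Q12 * emb12 M σe = emb12 M (Qe * σe) := by rw [hQ12def, e12mul]
  have σ12q12 : emb12 M σe * Q12 = emb12 M (σe * Qe) := by rw [hQ12def, e12mul]
  -- the ten mixed-term computations
  have l1 : emb12 M S * Q13 * emb23 M S = Q13 * emb23 M (σe * S) + lam ^ 2 • Q13 := by
    rw [M1 S hS, mul_assoc, e23mul, hH, map_add, map_smul, map_one, mul_add,
      mul_smul_comm, mul_one]
  have r1 : emb23 M S * Q13 * emb12 M S = Q13 * emb12 M (σe * S) + lam ^ 2 • Q13 := by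
    rw [M2 S hS, mul_assoc, e12mul, hH, map_add, map_smul, map_one, mul_add,
      mul_smul_comm, mul_one]
  have l2 : emb12 M S * Q13 * Q23 = Q13 * emb23 M (swapT M S * Qe) := by
    rw [M1 S hS, mul_assoc, hQ23def, e23mul]
  have r2 : emb23 M S * Q13 * Q12 = Q13 * emb12 M (Qe * S) := by
    rw [M2 S hS, mul_assoc, hQ12def, e12mul, k1']
  have l3 : Q12 * Q13 * emb23 M S = emb12 M (S * Qe) * Q13 := by
    rw [mul_assoc, M4 S hS, ← mul_assoc, hQ12def, e12mul, k2']
  have r3 : Q23 * Q13 * emb12 M S = emb23 M (S * Qe) * Q13 := by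
    rw [mul_assoc, M3 S hS, ← mul_assoc, hQ23def, e23mul, k2']
  have l4 : Q12 * emb13 M S * Q23
      = emb23 M (S * Qe) * Q13 + Q13 * emb12 M (Qe * S) + Q13 * emb12 M (σe * S) := by
    calc Q12 * emb13 M S * Q23 = Q12 * (emb13 M S * Q23) := by rw [mul_assoc]
      _ = Q12 * (Q23 * emb12 M S) := by rw [M5 S hS]
      _ = (Q12 * Q23) * emb12 M S := by rw [mul_assoc]
      _ = (Q23 * Q13 + Q13 * Q12 + emb23 M σe * Q13) * emb12 M S := by rw [hF]
      _ = Q23 * (Q13 * emb12 M S) + Q13 * (Q12 * emb12 M S)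
            + emb23 M σe * (Q13 * emb12 M S) := by
          rw [add_mul, add_mul, mul_assoc, mul_assoc, mul_assoc]
      _ = Q23 * (emb23 M (swapT M S) * Q13) + Q13 * emb12 M (Qe * S)
            + emb23 M σe * (emb23 M (swapT M S) * Q13) := by
          rw [M3 S hS, hQ12def, e12mul]
      _ = emb23 M (Qe * swapT M S) * Q13 + Q13 * emb12 M (Qe * S)
            + emb23 M (σe * swapT M S) * Q13 := by
          rw [← mul_assoc, ← mul_assoc, hQ23def, e23mul, e23mul]
      _ = emb23 M (S * Qe) * Q13 + Q13 * emb12 M (Qe * S)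
            + emb23 M (S * σe) * Q13 := by rw [k2', k3']
      _ = emb23 M (S * Qe) * Q13 + Q13 * emb12 M (Qe * S)
            + Q13 * emb12 M (σe * S) := by
          rw [M2 (S * σe) (memmul S σe hS memσ), swapSσ]
  have r4 : Q23 * emb13 M S * Q12
      = Q13 * emb23 M (swapT M S * Qe) + emb12 M (S * Qe) * Q13
        + Q13 * emb23 M (σe * S) := by
    calc Q23 * emb13 M S * Q12 = (emb12 M S * Q23) * Q12 := by rw [← M6 S hS]
      _ = emb12 M S * (Q23 * Q12) := by rw [mul_assoc]
      _ = emb12 M S * (Q13 * Q23 + Q12 * Q13 + emb12 M σe * Q13) := by rw [hF']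
      _ = (emb12 M S * Q13) * Q23 + (emb12 M S * Q12) * Q13
            + (emb12 M S * emb12 M σe) * Q13 := by
          rw [mul_add, mul_add, ← mul_assoc, ← mul_assoc, ← mul_assoc]
      _ = (Q13 * emb23 M (swapT M S)) * Q23 + emb12 M (S * Qe) * Q13
            + emb12 M (S * σe) * Q13 := by
          rw [M1 S hS, e12mul, e12mul]
      _ = Q13 * emb23 M (swapT M S * Qe) + emb12 M (S * Qe) * Q13
            + emb12 M (S * σe) * Q13 := by
          rw [mul_assoc, hQ23def, e23mul]
      _ = Q13 * emb23 M (swapT M S * Qe) + emb12 M (S * Qe) * Q13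
            + Q13 * emb23 M (σe * S) := by
          rw [M1 (S * σe) (memmul S σe hS memσ), swapSσ]
  have l5 : Q12 * Q13 * Q23 = Q23 * Q13 * Q12 := by
    have h1 : Q13 * Q23 = Q23 * Q12 - Q12 * Q13 - emb12 M σe * Q13 := by
      rw [hF']
      abel
    have hz1 : Q13 * emb12 M (Qe * Qe) + Q13 * emb12 M (σe * Qe) = 0 := by
      rw [← mul_add, ← map_add, Azero, map_zero, mul_zero]
    have hz2 : emb12 M (Qe * Qe) * Q13 + emb12 M (Qe * σe) * Q13 = 0 := by
      rw [← add_mul, ← map_add, hqσ, Azero, map_zero, zero_mul]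
    calc Q12 * Q13 * Q23 = Q12 * (Q13 * Q23) := by rw [mul_assoc]
      _ = Q12 * (Q23 * Q12) - Q12 * (Q12 * Q13) - Q12 * (emb12 M σe * Q13) := by
          rw [h1, mul_sub, mul_sub]
      _ = (Q12 * Q23) * Q12 - emb12 M (Qe * Qe) * Q13 - emb12 M (Qe * σe) * Q13 := by
          rw [← mul_assoc, ← mul_assoc, ← mul_assoc, q12q12, q12σ12]
      _ = (Q23 * Q13 + Q13 * Q12 + emb23 M σe * Q13) * Q12 - emb12 M (Qe * Qe) * Q13
            - emb12 M (Qe * σe) * Q13 := by rw [hF]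
      _ = Q23 * Q13 * Q12 + Q13 * emb12 M (Qe * Qe) + Q13 * emb12 M (σe * Qe)
            - emb12 M (Qe * Qe) * Q13 - emb12 M (Qe * σe) * Q13 := by
          rw [add_mul, add_mul, M2 σe memσ, σswap, mul_assoc Q13 Q12 Q12, q12q12,
            mul_assoc Q13 (emb12 M σe) Q12, σ12q12]
      _ = Q23 * Q13 * Q12 + (Q13 * emb12 M (Qe * Qe) + Q13 * emb12 M (σe * Qe))
            - (emb12 M (Qe * Qe) * Q13 + emb12 M (Qe * σe) * Q13) := by abel
      _ = Q23 * Q13 * Q12 := by rw [hz1, hz2, add_zero, sub_zero]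
  -- the two simple mixed identities
  have pa : emb12 M S * emb13 M S * Q23 = Q23 * emb13 M S * emb12 M S := by
    rw [mul_assoc, M5 S hS, ← mul_assoc, M6 S hS, mul_assoc]
  have pb : Q12 * emb13 M S * emb23 M S = emb23 M S * emb13 M S * Q12 := by
    rw [M7 S hS, mul_assoc, M8 S hS, ← mul_assoc]
  -- the five-term identity
  have hc : emb12 M S * Q13 * emb23 M S + emb12 M S * Q13 * Q23 + Q12 * Q13 * emb23 M S
        + Q12 * emb13 M S * Q23 + Q12 * Q13 * Q23
      = emb23 M S * Q13 * emb12 M S + emb23 M S * Q13 * Q12 + Q23 * Q13 * emb12 M S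
        + Q23 * emb13 M S * Q12 + Q23 * Q13 * Q12 := by
    rw [l1, l2, l3, l4, l5, r1, r2, r3, r4]
    abel
  -- final assembly
  have hS3 : emb12 M S * emb13 M S * emb23 M S = emb23 M S * emb13 M S * emb12 M S := hSYBE
  show emb12 M (S + Qe) * emb13 M (S + Qe) * emb23 M (S + Qe)
      = emb23 M (S + Qe) * emb13 M (S + Qe) * emb12 M (S + Qe)
  rw [map_add, map_add, map_add, ← hQ12def, ← hQ13def, ← hQ23def]
  have expandL : (emb12 M S + Q12) * (emb13 M S + Q13) * (emb23 M S + Q23)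
      = emb12 M S * emb13 M S * emb23 M S + emb12 M S * emb13 M S * Q23
        + Q12 * emb13 M S * emb23 M S
        + (emb12 M S * Q13 * emb23 M S + emb12 M S * Q13 * Q23 + Q12 * Q13 * emb23 M S
          + Q12 * emb13 M S * Q23 + Q12 * Q13 * Q23) := by noncomm_ring
  have expandR : (emb23 M S + Q23) * (emb13 M S + Q13) * (emb12 M S + Q12)
      = emb23 M S * emb13 M S * emb12 M S + Q23 * emb13 M S * emb12 M S
        + emb23 M S * emb13 M S * Q12
        + (emb23 M S * Q13 * emb12 M S + emb23 M S * Q13 * Q12 + Q23 * Q13 * emb12 M S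
          + Q23 * emb13 M S * Q12 + Q23 * Q13 * Q12) := by noncomm_ring
  rw [expandL, expandR, hS3, pa, pb, hc]
end
end

section
/- Let (M, N₊, N₋, D) be an associative triple over ℂ with canonical element Q ∈ N₊ ⊗ N₋. Then Q interacts with elements of the diagonal D like the permutation: for all δ₁, δ₂ ∈ D one has (δ₁ ⊗ δ₂) * Q = Q * (δ₂ ⊗ δ₁) in M ⊗ M. -/
open scoped TensorProduct

noncomputable section

variable (M : Type) [Ring M] [Algebra ℂ M]

/-- The canonical element `Q` of an associative triple interacts with elements of
the diagonal `D` like the permutation: `(δ₁ ⊗ δ₂) Q = Q (δ₂ ⊗ δ₁)`. -/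
theorem stmt8
    [FiniteDimensional ℂ M]
    (B : M →ₗ[ℂ] M →ₗ[ℂ] ℂ)
    (hnd : ∀ a : M, (∀ b : M, B a b = 0) → a = 0)
    (hsymm : ∀ a b : M, B a b = B b a)
    (hcyc : ∀ a b c : M, B (a * b) c = B b (c * a))
    (Np Nm D : NonUnitalSubalgebra ℂ M)
    (hT : AssocTriple M B Np Nm D)
    (ι : Type) [Fintype ι] [DecidableEq ι] (α β : ι → M)
    (hQ : DualPair M B (NonUnitalSubalgebra.toSubmodule Np)
      (NonUnitalSubalgebra.toSubmodule Nm) α β) :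
    ∀ d₁ ∈ D, ∀ d₂ ∈ D,
      (d₁ ⊗ₜ[ℂ] d₂) * (∑ i, α i ⊗ₜ[ℂ] β i)
        = (∑ i, α i ⊗ₜ[ℂ] β i) * (d₂ ⊗ₜ[ℂ] d₁) := by
  intro d₁ hd₁ d₂ hd₂
  -- expansion of elements of Np in the basis α
  have expP : ∀ x ∈ NonUnitalSubalgebra.toSubmodule Np,
      (∑ i, B x (β i) • α i) = x := by
    intro x hx
    rw [← hQ.spanP] at hx
    induction hx using Submodule.span_induction with
    | mem x hx =>
      obtain ⟨j, rfl⟩ := hx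
      simp [hQ.dual]
    | zero => simp
    | add x y _ _ hx hy =>
      simp only [map_add, LinearMap.add_apply, add_smul, Finset.sum_add_distrib, hx, hy]
    | smul c x _ hx =>
      simp only [map_smul, LinearMap.smul_apply, smul_assoc, ← Finset.smul_sum, hx]
  -- expansion of elements of Nm in the basis β
  have expM : ∀ y ∈ NonUnitalSubalgebra.toSubmodule Nm,
      (∑ i, B (α i) y • β i) = y := by
    intro y hy
    rw [← hQ.spanM] at hy
    induction hy using Submodule.span_induction with
    | mem y hy =>
      obtain ⟨j, rfl⟩ := hy
      simp [hQ.dual]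
    | zero => simp
    | add x y _ _ hx hy =>
      simp only [map_add, add_smul, Finset.sum_add_distrib, hx, hy]
    | smul c x _ hx =>
      simp only [map_smul, smul_assoc, ← Finset.smul_sum, hx]
  have key1 : ∀ a b : M, B a (d₂ * b) = B (a * d₂) b := by
    intro a b
    rw [hsymm a (d₂ * b), hcyc d₂ b a, hsymm b (a * d₂)]
  have key2 : ∀ j k, B (d₁ * (α j * d₂)) (β k) = B (α j) (d₂ * β k * d₁) := by
    intro j k
    rw [hcyc d₁ (α j * d₂) (β k), hsymm (α j) (d₂ * β k * d₁), mul_assoc d₂ (β k) d₁,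
      hcyc d₂ (β k * d₁) (α j), hsymm (β k * d₁) (α j * d₂)]
  have hLHS : (d₁ ⊗ₜ[ℂ] d₂) * (∑ i, α i ⊗ₜ[ℂ] β i)
      = ∑ k, ∑ j, B (α k) (d₂ * β j * d₁) • (α j ⊗ₜ[ℂ] β k) := by
    calc (d₁ ⊗ₜ[ℂ] d₂) * (∑ i, α i ⊗ₜ[ℂ] β i)
        = ∑ i, (d₁ * α i) ⊗ₜ[ℂ] (d₂ * β i) := by
          rw [Finset.mul_sum]
          simp [Algebra.TensorProduct.tmul_mul_tmul]
      _ = ∑ i, ∑ k, B (α k * d₂) (β i) • ((d₁ * α i) ⊗ₜ[ℂ] β k) := by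
          refine Finset.sum_congr rfl fun i _ => ?_
          conv_lhs => rw [← expM (d₂ * β i) (hT.bimodMl d₂ hd₂ (β i) (hQ.memM i))]
          rw [TensorProduct.tmul_sum]
          refine Finset.sum_congr rfl fun k _ => ?_
          rw [TensorProduct.tmul_smul, key1]
      _ = ∑ k, ∑ i, B (α k * d₂) (β i) • ((d₁ * α i) ⊗ₜ[ℂ] β k) := Finset.sum_comm
      _ = ∑ k, (d₁ * (α k * d₂)) ⊗ₜ[ℂ] β k := by
          refine Finset.sum_congr rfl fun k _ => ?_
          have h : ∑ i, B (α k * d₂) (β i) • ((d₁ * α i) ⊗ₜ[ℂ] β k)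
              = (d₁ * ∑ i, B (α k * d₂) (β i) • α i) ⊗ₜ[ℂ] β k := by
            rw [Finset.mul_sum, TensorProduct.sum_tmul]
            refine Finset.sum_congr rfl fun i _ => ?_
            rw [mul_smul_comm, TensorProduct.smul_tmul']
          rw [h, expP _ (hT.bimodPr d₂ hd₂ (α k) (hQ.memP k))]
      _ = ∑ k, ∑ j, B (d₁ * (α k * d₂)) (β j) • (α j ⊗ₜ[ℂ] β k) := by
          refine Finset.sum_congr rfl fun k _ => ?_
          conv_lhs => rw [← expP (d₁ * (α k * d₂))
            (hT.bimodPl d₁ hd₁ _ (hT.bimodPr d₂ hd₂ (α k) (hQ.memP k)))]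
          rw [TensorProduct.sum_tmul]
          refine Finset.sum_congr rfl fun j _ => ?_
          rw [TensorProduct.smul_tmul']
      _ = ∑ k, ∑ j, B (α k) (d₂ * β j * d₁) • (α j ⊗ₜ[ℂ] β k) := by
          refine Finset.sum_congr rfl fun k _ => Finset.sum_congr rfl fun j _ => ?_
          rw [key2]
  have hRHS : (∑ i, α i ⊗ₜ[ℂ] β i) * (d₂ ⊗ₜ[ℂ] d₁)
      = ∑ k, ∑ j, B (α j) (d₂ * β k * d₁) • (α k ⊗ₜ[ℂ] β j) := by
    calc (∑ i, α i ⊗ₜ[ℂ] β i) * (d₂ ⊗ₜ[ℂ] d₁)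
        = ∑ i, (α i * d₂) ⊗ₜ[ℂ] (β i * d₁) := by
          rw [Finset.sum_mul]
          simp [Algebra.TensorProduct.tmul_mul_tmul]
      _ = ∑ i, ∑ k, B (α i) (d₂ * β k) • (α k ⊗ₜ[ℂ] (β i * d₁)) := by
          refine Finset.sum_congr rfl fun i _ => ?_
          conv_lhs => rw [← expP (α i * d₂) (hT.bimodPr d₂ hd₂ (α i) (hQ.memP i))]
          rw [TensorProduct.sum_tmul]
          refine Finset.sum_congr rfl fun k _ => ?_
          rw [TensorProduct.smul_tmul', key1]
      _ = ∑ k, ∑ i, B (α i) (d₂ * β k) • (α k ⊗ₜ[ℂ] (β i * d₁)) := Finset.sum_comm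
      _ = ∑ k, α k ⊗ₜ[ℂ] (d₂ * β k * d₁) := by
          refine Finset.sum_congr rfl fun k _ => ?_
          have h : ∑ i, B (α i) (d₂ * β k) • (α k ⊗ₜ[ℂ] (β i * d₁))
              = α k ⊗ₜ[ℂ] ((∑ i, B (α i) (d₂ * β k) • β i) * d₁) := by
            rw [Finset.sum_mul, TensorProduct.tmul_sum]
            refine Finset.sum_congr rfl fun i _ => ?_
            rw [smul_mul_assoc, TensorProduct.tmul_smul]
          rw [h, expM (d₂ * β k) (hT.bimodMl d₂ hd₂ (β k) (hQ.memM k))]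
      _ = ∑ k, ∑ j, B (α j) (d₂ * β k * d₁) • (α k ⊗ₜ[ℂ] β j) := by
          refine Finset.sum_congr rfl fun k _ => ?_
          conv_lhs => rw [← expM (d₂ * β k * d₁)
            (hT.bimodMr d₁ hd₁ _ (hT.bimodMl d₂ hd₂ (β k) (hQ.memM k)))]
          rw [TensorProduct.tmul_sum]
          refine Finset.sum_congr rfl fun j _ => ?_
          rw [TensorProduct.tmul_smul]
  rw [hLHS, hRHS, Finset.sum_comm]
end
end
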